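/- arXiv:2503.00183 — 4 statements merged into one kernel-verified Lean document; each statement's English description precedes it below -/
import Mathlib

section
/- Let Γ be a finite group acting quasisemisimply on a root datum Ψ̃ = (X̃, Φ̃, X̃^∨, Φ̃^∨). Then for all roots α̃, β̃ ∈ Φ̃ one has i*(α̃) = i*(β̃) in the coinvariant space V_Γ if and only if β̃ = γ·α̃ for some γ ∈ Γ. -/
open scoped TensorProduct

/-- A root datum `Ψ̃ = (X̃, Φ̃, X̃^∨, Φ̃^∨)`: finite free `ℤ`-modules `X` and `Xv` in perfect
duality, finite sets of roots and coroots, and a bijective correspondence `α ↦ α^∨` satisfying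
`⟨α, α^∨⟩ = 2` and stability of the (co)roots under the (co)reflections. -/
structure RootDatumP (X Xv : Type*) [AddCommGroup X] [AddCommGroup Xv] where
  free_X : Module.Free ℤ X
  finite_X : Module.Finite ℤ X
  free_Xv : Module.Free ℤ Xv
  finite_Xv : Module.Finite ℤ Xv
  pair : X →ₗ[ℤ] Xv →ₗ[ℤ] ℤ
  perfect_left : Function.Bijective fun x : X => pair x
  perfect_right : Function.Bijective fun y : Xv => pair.flip y
  roots : Finset X
  coroots : Finset Xv
  coroot : X → Xv
  zero_notMem_roots : (0 : X) ∉ roots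
  zero_notMem_coroots : (0 : Xv) ∉ coroots
  coroot_bijOn : Set.BijOn coroot ↑roots ↑coroots
  pair_coroot_self : ∀ α ∈ roots, pair α (coroot α) = 2
  reflection_mem : ∀ α ∈ roots, ∀ β ∈ roots, β - pair β (coroot α) • α ∈ roots
  coreflection_mem : ∀ α ∈ roots, ∀ y ∈ coroots, y - pair α y • coroot α ∈ coroots

/-- An action of a group `Γ` on a root datum: a `ℤ`-linear action on `X` preserving the roots,
together with the (inverse contragredient) action on `Xv` preserving the coroots, compatible
with the pairing and with the coroot correspondence. -/
structure RootDatumActionP {X Xv : Type*} [AddCommGroup X] [AddCommGroup Xv]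
    (Ψ : RootDatumP X Xv) (Γ : Type*) [Group Γ] where
  ρ : Γ →* (X ≃ₗ[ℤ] X)
  ρv : Γ →* (Xv ≃ₗ[ℤ] Xv)
  pair_invariant : ∀ (γ : Γ) (x : X) (y : Xv), Ψ.pair (ρ γ x) (ρv γ y) = Ψ.pair x y
  roots_stable : ∀ (γ : Γ), ∀ α ∈ Ψ.roots, ρ γ α ∈ Ψ.roots
  coroots_stable : ∀ (γ : Γ), ∀ y ∈ Ψ.coroots, ρv γ y ∈ Ψ.coroots
  coroot_equivariant : ∀ (γ : Γ), ∀ α ∈ Ψ.roots, Ψ.coroot (ρ γ α) = ρv γ (Ψ.coroot α)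

/-- The action is quasisemisimple if there is a `Γ`-stable system of positive roots,
equivalently a `Γ`-invariant linear functional that is nonzero on all roots. -/
def RootDatumActionP.IsQuasisemisimple {X Xv : Type*} [AddCommGroup X] [AddCommGroup Xv]
    {Ψ : RootDatumP X Xv} {Γ : Type*} [Group Γ] (A : RootDatumActionP Ψ Γ) : Prop :=
  ∃ f : X →ₗ[ℤ] ℝ, (∀ α ∈ Ψ.roots, f α ≠ 0) ∧ ∀ (γ : Γ) (x : X), f (A.ρ γ x) = f x

/-- The subspace `span {γ • v - v}` of `V = ℚ ⊗ X` whose quotient is the coinvariant space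
`V_Γ`. -/
def RootDatumActionP.coinvKer {X Xv : Type*} [AddCommGroup X] [AddCommGroup Xv]
    {Ψ : RootDatumP X Xv} {Γ : Type*} [Group Γ] (A : RootDatumActionP Ψ Γ) :
    Submodule ℚ (ℚ ⊗[ℤ] X) :=
  Submodule.span ℚ {w : ℚ ⊗[ℤ] X | ∃ (γ : Γ) (v : ℚ ⊗[ℤ] X),
    w = LinearMap.lTensor ℚ (A.ρ γ).toLinearMap v - v}

/-- The map `i* : X → V_Γ`, the composite of `X → V = ℚ ⊗ X` and the quotient map
`V → V_Γ`. -/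
noncomputable def RootDatumActionP.istar {X Xv : Type*} [AddCommGroup X] [AddCommGroup Xv]
    {Ψ : RootDatumP X Xv} {Γ : Type*} [Group Γ] (A : RootDatumActionP Ψ Γ) :
    X → (ℚ ⊗[ℤ] X) ⧸ A.coinvKer :=
  fun x => Submodule.Quotient.mk ((1 : ℚ) ⊗ₜ[ℤ] x)

namespace RootDatumP

variable {X Xv : Type*} [AddCommGroup X] [AddCommGroup Xv] (Ψ : RootDatumP X Xv)

include Ψ in
/-- `X` is torsion-free, being free. -/
lemma eq_zero_of_zsmul_eq_zero {k : ℤ} {v : X} (hk : k ≠ 0) (h : k • v = 0) : v = 0 := by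
  letI := Ψ.free_X
  letI := Ψ.finite_X
  let b := Module.Free.chooseBasis ℤ X
  have hr : k • b.repr v = 0 := by rw [← map_smul, h, map_zero]
  have hz : b.repr v = 0 := by
    ext i
    have hi := DFunLike.congr_fun hr i
    simp only [Finsupp.smul_apply, smul_eq_mul, Finsupp.coe_zero, Pi.zero_apply] at hi
    exact (mul_eq_zero.mp hi).resolve_left hk
  have := congrArg b.repr.symm hz
  simpa using this

lemma coroot_mem {ε : X} (hε : ε ∈ Ψ.roots) : Ψ.coroot ε ∈ Ψ.coroots :=
  Finset.mem_coe.mp (Ψ.coroot_bijOn.mapsTo (Finset.mem_coe.mpr hε))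

/-- The canonical positive semidefinite bilinear form on `X`. -/
def B (x y : X) : ℤ := ∑ c ∈ Ψ.coroots, Ψ.pair x c * Ψ.pair y c

lemma B_comm (x y : X) : Ψ.B x y = Ψ.B y x :=
  Finset.sum_congr rfl fun c _ => mul_comm _ _

lemma B_self_nonneg (x : X) : 0 ≤ Ψ.B x x :=
  Finset.sum_nonneg fun c _ => mul_self_nonneg _

lemma B_sum_left {ι : Type*} (s : Finset ι) (g : ι → X) (y : X) :
    Ψ.B (∑ i ∈ s, g i) y = ∑ i ∈ s, Ψ.B (g i) y := by
  unfold B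
  rw [Finset.sum_comm]
  refine Finset.sum_congr rfl fun c _ => ?_
  rw [map_sum, LinearMap.coe_sum, Finset.sum_apply, Finset.sum_mul]

lemma B_sub_self (δ β : X) :
    Ψ.B (δ - β) (δ - β) = Ψ.B δ δ - 2 * Ψ.B δ β + Ψ.B β β := by
  have h : ∀ c ∈ Ψ.coroots, Ψ.pair (δ - β) c * Ψ.pair (δ - β) c
      = (Ψ.pair δ c * Ψ.pair δ c) - 2 * (Ψ.pair δ c * Ψ.pair β c)
        + Ψ.pair β c * Ψ.pair β c := by
    intro c _
    rw [map_sub, LinearMap.sub_apply]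
    ring
  unfold B
  rw [Finset.sum_congr rfl h, Finset.sum_add_distrib, Finset.sum_sub_distrib, ← Finset.mul_sum]

lemma pair_eq_zero_of_B_self_eq_zero {x : X} (h : Ψ.B x x = 0) :
    ∀ c ∈ Ψ.coroots, Ψ.pair x c = 0 := by
  intro c hc
  have h0 := (Finset.sum_eq_zero_iff_of_nonneg
    (fun c _ => mul_self_nonneg (Ψ.pair x c))).mp h c hc
  exact mul_self_eq_zero.mp h0

lemma B_key {ε : X} (hε : ε ∈ Ψ.roots) (x : X) :
    2 * Ψ.B x ε = Ψ.B ε ε * Ψ.pair x (Ψ.coroot ε) := by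
  have hc0 : Ψ.pair ε (Ψ.coroot ε) = 2 := Ψ.pair_coroot_self ε hε
  have hτpair : ∀ c : Xv, Ψ.pair ε (c - Ψ.pair ε c • Ψ.coroot ε) = - Ψ.pair ε c := by
    intro c; rw [map_sub, map_smul, hc0, smul_eq_mul]; ring
  have hττ : ∀ c : Xv,
      (c - Ψ.pair ε c • Ψ.coroot ε) - Ψ.pair ε (c - Ψ.pair ε c • Ψ.coroot ε) • Ψ.coroot ε = c := by
    intro c
    rw [hτpair, neg_smul, sub_neg_eq_add, sub_add_cancel]
  have hre : (∑ c ∈ Ψ.coroots, Ψ.pair ε c • c)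
      = ∑ c ∈ Ψ.coroots, Ψ.pair ε (c - Ψ.pair ε c • Ψ.coroot ε) •
          (c - Ψ.pair ε c • Ψ.coroot ε) := by
    refine Finset.sum_nbij' (fun c => c - Ψ.pair ε c • Ψ.coroot ε)
      (fun c => c - Ψ.pair ε c • Ψ.coroot ε)
      (fun c hc => Ψ.coreflection_mem ε hε c hc)
      (fun c hc => Ψ.coreflection_mem ε hε c hc)
      (fun c _ => hττ c) (fun c _ => hττ c) (fun c _ => ?_)
    rw [hττ c]
  have hexp : (∑ c ∈ Ψ.coroots, Ψ.pair ε (c - Ψ.pair ε c • Ψ.coroot ε) •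
      (c - Ψ.pair ε c • Ψ.coroot ε))
      = - (∑ c ∈ Ψ.coroots, Ψ.pair ε c • c) + Ψ.B ε ε • Ψ.coroot ε := by
    have : ∀ c ∈ Ψ.coroots, Ψ.pair ε (c - Ψ.pair ε c • Ψ.coroot ε) •
        (c - Ψ.pair ε c • Ψ.coroot ε)
        = - (Ψ.pair ε c • c) + (Ψ.pair ε c * Ψ.pair ε c) • Ψ.coroot ε := by
      intro c _
      rw [hτpair, neg_smul, smul_sub, smul_smul, neg_sub]
      abel
    rw [Finset.sum_congr rfl this, Finset.sum_add_distrib, ← Finset.sum_neg_distrib,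
      ← Finset.sum_smul]
    rfl
  have h2P : (∑ c ∈ Ψ.coroots, Ψ.pair ε c • c) + (∑ c ∈ Ψ.coroots, Ψ.pair ε c • c)
      = Ψ.B ε ε • Ψ.coroot ε := by
    nth_rewrite 1 [hre, hexp]
    abel
  have h3 := congrArg (Ψ.pair x) h2P
  rw [map_add, map_smul] at h3
  have h4 : Ψ.pair x (∑ c ∈ Ψ.coroots, Ψ.pair ε c • c) = Ψ.B x ε := by
    rw [map_sum]
    refine Finset.sum_congr rfl fun c _ => ?_
    rw [map_smul, smul_eq_mul, mul_comm]
  rw [h4, smul_eq_mul] at h3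
  linarith

lemma B_self_pos {ε : X} (hε : ε ∈ Ψ.roots) : 0 < Ψ.B ε ε := by
  have hc : Ψ.coroot ε ∈ Ψ.coroots := Ψ.coroot_mem hε
  have h4 : Ψ.pair ε (Ψ.coroot ε) * Ψ.pair ε (Ψ.coroot ε) = 4 := by
    rw [Ψ.pair_coroot_self ε hε]; norm_num
  have hle := Finset.single_le_sum (f := fun c => Ψ.pair ε c * Ψ.pair ε c)
    (fun c _ => mul_self_nonneg _) hc
  have h5 : (4 : ℤ) ≤ Ψ.B ε ε := by
    unfold B
    rw [← h4]
    simpa using hle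
  linarith

/-- The infinite-chain argument: two roots pairing identically with all coroots are equal. -/
lemma chain_eq {δ β : X} (hδ : δ ∈ Ψ.roots) (hβ : β ∈ Ψ.roots)
    (hperp : ∀ c ∈ Ψ.coroots, Ψ.pair (δ - β) c = 0) : δ = β := by
  by_contra hne
  have hv : δ - β ≠ 0 := sub_ne_zero.mpr hne
  have hcδ : Ψ.coroot δ ∈ Ψ.coroots := Ψ.coroot_mem hδ
  have hcβ : Ψ.coroot β ∈ Ψ.coroots := Ψ.coroot_mem hβ
  have hdiff : ∀ c ∈ Ψ.coroots, Ψ.pair δ c - Ψ.pair β c = 0 := by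
    intro c hc
    have h0 := hperp c hc
    rwa [map_sub, LinearMap.sub_apply] at h0
  have hδβ2 : Ψ.pair δ (Ψ.coroot β) = 2 := by
    have h1 := hdiff _ hcβ
    have h2 := Ψ.pair_coroot_self β hβ
    linarith
  set F : ℕ → X := fun n => δ - (2 * (n : ℤ)) • (δ - β) with hF
  have hpair : ∀ (n : ℕ) (c : Xv), c ∈ Ψ.coroots → Ψ.pair (F n) c = Ψ.pair δ c := by
    intro n c hc
    simp only [hF, map_sub, map_smul, LinearMap.sub_apply, LinearMap.smul_apply, smul_eq_mul]
    rw [hdiff c hc]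
    ring
  have hmem : ∀ n : ℕ, F n ∈ Ψ.roots := by
    intro n
    induction n with
    | zero => simpa [hF] using hδ
    | succ n ih =>
      have hpFδ : Ψ.pair (F n) (Ψ.coroot δ) = 2 := by
        rw [hpair n _ hcδ, Ψ.pair_coroot_self δ hδ]
      have hy := Ψ.reflection_mem δ hδ (F n) ih
      rw [hpFδ] at hy
      have hpyβ : Ψ.pair (F n - (2 : ℤ) • δ) (Ψ.coroot β) = -2 := by
        rw [map_sub, LinearMap.sub_apply, map_smul, LinearMap.smul_apply,
          hpair n _ hcβ, hδβ2]
        norm_num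
      have hz := Ψ.reflection_mem β hβ _ hy
      rw [hpyβ] at hz
      have heq : F n - (2:ℤ) • δ - (-2 : ℤ) • β = F (n + 1) := by
        simp only [hF]
        push_cast
        module
      rwa [heq] at hz
  have hinj : Function.Injective F := by
    intro n m h
    by_contra hnm
    have h2 : ((2 * (n:ℤ)) - 2 * (m:ℤ)) • (δ - β) = 0 := by
      have h3 : δ - (2 * (n:ℤ)) • (δ - β) = δ - (2 * (m:ℤ)) • (δ - β) := h
      rw [sub_smul]
      have h4 := sub_eq_zero.mpr h3
      rw [sub_sub_sub_cancel_left] at h4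
      rw [sub_eq_zero] at h4
      rw [← h4, sub_self]
    have hk : (2 * (n:ℤ)) - 2 * (m:ℤ) ≠ 0 := by
      intro h0
      apply hnm
      have : (n : ℤ) = m := by linarith
      exact_mod_cast this
    exact hv (Ψ.eq_zero_of_zsmul_eq_zero hk h2)
  obtain ⟨n, m, hnm, he⟩ := Finite.exists_ne_map_eq_of_infinite
    (fun n : ℕ => (⟨F n, hmem n⟩ : {x // x ∈ Ψ.roots}))
  exact hnm (hinj (congrArg Subtype.val he))

/-- Cauchy–Schwarz for `B`. -/
lemma B_cauchy_schwarz (x y : X) : Ψ.B x y * Ψ.B x y ≤ Ψ.B x x * Ψ.B y y := by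
  have h := Finset.sum_mul_sq_le_sq_mul_sq Ψ.coroots (fun c => Ψ.pair x c) (fun c => Ψ.pair y c)
  have e1 : Ψ.B x x = ∑ c ∈ Ψ.coroots, (Ψ.pair x c) ^ 2 :=
    Finset.sum_congr rfl fun c _ => (sq _).symm
  have e2 : Ψ.B y y = ∑ c ∈ Ψ.coroots, (Ψ.pair y c) ^ 2 :=
    Finset.sum_congr rfl fun c _ => (sq _).symm
  have e3 : Ψ.B x y * Ψ.B x y = (∑ c ∈ Ψ.coroots, Ψ.pair x c * Ψ.pair y c) ^ 2 := by
    rw [sq]; rfl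
  rw [e1, e2, e3]
  exact h

/-- The core rank-2 argument: roots with the same value of the invariant functional
and positive `B`-pairing are equal. -/
lemma core {f : X →ₗ[ℤ] ℝ} (hf0 : ∀ r ∈ Ψ.roots, f r ≠ 0) {δ β : X}
    (hδ : δ ∈ Ψ.roots) (hβ : β ∈ Ψ.roots) (hfeq : f δ = f β) (hpos : 0 < Ψ.B δ β) :
    δ = β := by
  have hBβ := Ψ.B_self_pos hβ
  have hBδ := Ψ.B_self_pos hδ
  have hkβ := Ψ.B_key hβ δ
  have hkδ := Ψ.B_key hδ β
  rw [Ψ.B_comm β δ] at hkδ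
  set p := Ψ.pair δ (Ψ.coroot β) with hp
  set q := Ψ.pair β (Ψ.coroot δ) with hq
  have hppos : 0 < p := by nlinarith
  have hqpos : 0 < q := by nlinarith
  by_cases hp1 : p = 1
  · exfalso
    have hmem := Ψ.reflection_mem β hβ δ hδ
    rw [← hp, hp1, one_smul] at hmem
    have hfz := hf0 _ hmem
    rw [map_sub, hfeq, sub_self] at hfz
    exact hfz rfl
  by_cases hq1 : q = 1
  · exfalso
    have hmem := Ψ.reflection_mem δ hδ β hβ
    rw [← hq, hq1, one_smul] at hmem
    have hfz := hf0 _ hmem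
    rw [map_sub, hfeq, sub_self] at hfz
    exact hfz rfl
  have hp2 : 2 ≤ p := by omega
  have hq2 : 2 ≤ q := by omega
  have hCS := Ψ.B_cauchy_schwarz δ β
  have hD : 0 < Ψ.B δ δ * Ψ.B β β := mul_pos hBδ hBβ
  have h4 : (Ψ.B δ δ * Ψ.B β β) * (p * q) = 4 * (Ψ.B δ β * Ψ.B δ β) := by nlinarith
  have hpq4 : p * q ≤ 4 := by nlinarith
  have hpe : p = 2 := by nlinarith
  have hqe : q = 2 := by nlinarith
  have hBδβ_β : Ψ.B δ β = Ψ.B β β := by rw [hpe] at hkβ; linarith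
  have hBδβ_δ : Ψ.B δ β = Ψ.B δ δ := by rw [hqe] at hkδ; linarith
  have hzero : Ψ.B (δ - β) (δ - β) = 0 := by
    rw [Ψ.B_sub_self]; linarith
  exact Ψ.chain_eq hδ hβ (Ψ.pair_eq_zero_of_B_self_eq_zero hzero)

include Ψ in
/-- Injectivity of `x ↦ 1 ⊗ x : X → ℚ ⊗ X`. -/
lemma one_tmul_injective :
    Function.Injective (fun x : X => ((1 : ℚ) ⊗ₜ[ℤ] x : ℚ ⊗[ℤ] X)) := by
  letI := Ψ.free_X
  have h1 : Function.Injective (Algebra.linearMap ℤ ℚ) := fun a b h => by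
    simpa using h
  have h2 := Module.Flat.rTensor_preserves_injective_linearMap (M := X)
    (Algebra.linearMap ℤ ℚ) h1
  intro a b hab
  have h3 : (LinearMap.rTensor X (Algebra.linearMap ℤ ℚ)) ((1 : ℤ) ⊗ₜ[ℤ] a)
      = (LinearMap.rTensor X (Algebra.linearMap ℤ ℚ)) ((1 : ℤ) ⊗ₜ[ℤ] b) := by
    rw [LinearMap.rTensor_tmul, LinearMap.rTensor_tmul]
    simpa using hab
  have h5 := congrArg (TensorProduct.lid ℤ X) (h2 h3)
  simpa using h5

/-- Nondegeneracy on the root span: an element of the root lattice pairing to zero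
with all coroots is zero. -/
lemma nz (N : X)
    (hmem : ((1 : ℚ) ⊗ₜ[ℤ] N : ℚ ⊗[ℤ] X) ∈
      Submodule.span ℚ ((fun r : X => ((1 : ℚ) ⊗ₜ[ℤ] r : ℚ ⊗[ℤ] X)) '' ↑Ψ.roots))
    (hperp : ∀ c ∈ Ψ.coroots, Ψ.pair N c = 0) : N = 0 := by
  classical
  set e : X → ℚ ⊗[ℤ] X := fun r => (1 : ℚ) ⊗ₜ[ℤ] r with he
  set Φs : Set (ℚ ⊗[ℤ] X) := e '' ↑Ψ.roots with hΦs
  set V₁ : Submodule ℚ (ℚ ⊗[ℤ] X) := Submodule.span ℚ Φs with hV₁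
  set φ : X → (ℚ ⊗[ℤ] X →ₗ[ℚ] ℚ) := fun r =>
    LinearMap.liftBaseChange ℚ ((Algebra.linearMap ℤ ℚ) ∘ₗ (Ψ.pair.flip (Ψ.coroot r))) with hφdef
  have hφ : ∀ (r x : X), φ r (e x) = (Ψ.pair x (Ψ.coroot r) : ℚ) := by
    intro r x
    simp [hφdef, he, LinearMap.liftBaseChange_tmul]
  set σ : X → (ℚ ⊗[ℤ] X →ₗ[ℚ] ℚ ⊗[ℤ] X) := fun r =>
    LinearMap.id - (φ r).smulRight (e r) with hσdef
  have hσe : ∀ (r x : X), σ r (e x) = e (x - Ψ.pair x (Ψ.coroot r) • r) := by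
    intro r x
    simp only [hσdef, LinearMap.sub_apply, LinearMap.id_apply, LinearMap.smulRight_apply, hφ]
    rw [he]
    simp only []
    rw [TensorProduct.tmul_sub, TensorProduct.tmul_smul, Int.cast_smul_eq_zsmul ℚ]
  have hσσ : ∀ r, r ∈ Ψ.roots → ∀ v, σ r (σ r v) = v := by
    intro r hr v
    have h2 : φ r (e r) = 2 := by
      rw [hφ, Ψ.pair_coroot_self r hr]; norm_num
    have happ : ∀ w, σ r w = w - φ r w • e r := fun w => rfl
    rw [happ, happ, map_sub, map_smul, h2, smul_eq_mul]
    rw [show (φ r) v - (φ r) v * 2 = -((φ r) v) by ring, neg_smul, sub_neg_eq_add,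
      sub_add_cancel]
  have hσΦ : ∀ r, r ∈ Ψ.roots → ∀ v ∈ Φs, σ r v ∈ Φs := by
    rintro r hr v ⟨x, hx, rfl⟩
    rw [hσe]
    exact ⟨_, Ψ.reflection_mem r hr x hx, rfl⟩
  have hres : ∀ r, r ∈ Ψ.roots → ∀ v ∈ V₁, σ r v ∈ V₁ := by
    intro r hr v hv
    have hmap : Submodule.map (σ r) V₁ ≤ V₁ := by
      rw [hV₁, Submodule.map_span, Submodule.span_le]
      rintro _ ⟨w, hw, rfl⟩
      exact Submodule.subset_span (hσΦ r hr w hw)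
    exact hmap ⟨v, hv, rfl⟩
  set σE : {r : X // r ∈ Ψ.roots} → (V₁ ≃ₗ[ℚ] V₁) := fun r =>
    LinearEquiv.ofLinear ((σ r.1).restrict (hres r.1 r.2)) ((σ r.1).restrict (hres r.1 r.2))
      (by
        ext v
        exact congrArg Subtype.val (Subtype.ext (hσσ r.1 r.2 v.1) :
          (⟨σ r.1 (σ r.1 v.1), _⟩ : V₁) = v))
      (by
        ext v
        exact congrArg Subtype.val (Subtype.ext (hσσ r.1 r.2 v.1) :
          (⟨σ r.1 (σ r.1 v.1), _⟩ : V₁) = v)) with hσE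
  have hσEapp : ∀ (r : {r : X // r ∈ Ψ.roots}) (v : V₁), (σE r v : ℚ ⊗[ℤ] X) = σ r.1 v.1 := by
    intro r v
    rfl
  set Φ₁ : Set V₁ := {v : V₁ | (v : ℚ ⊗[ℤ] X) ∈ Φs} with hΦ₁
  have hΦ₁fin : Φ₁.Finite := by
    have hfin : Φs.Finite := (Ψ.roots.finite_toSet).image e
    exact hfin.preimage (Subtype.val_injective.injOn)
  have hspanΦ₁ : Submodule.span ℚ Φ₁ = ⊤ := by
    rw [eq_top_iff]
    rintro ⟨v, hv⟩ -
    refine Submodule.span_induction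
      (p := fun w hw => (⟨w, hw⟩ : V₁) ∈ Submodule.span ℚ Φ₁) ?_ ?_ ?_ ?_ hv
    · intro x hx
      exact Submodule.subset_span hx
    · exact Submodule.zero_mem _
    · intro x y hx hy hpx hpy
      exact Submodule.add_mem _ hpx hpy
    · intro a x hx hpx
      exact Submodule.smul_mem _ a hpx
  set H : Subgroup (V₁ ≃ₗ[ℚ] V₁) :=
    { carrier := {w | ∀ v : V₁, v ∈ Φ₁ ↔ w v ∈ Φ₁}
      one_mem' := fun _ => Iff.rfl
      mul_mem' := fun {a b} ha hb v => (hb v).trans (ha (b v))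
      inv_mem' := fun {a} ha v => by
        have h1 := ha (a⁻¹ v)
        have h2 : a (a⁻¹ v) = v := a.apply_symm_apply v
        rw [h2] at h1
        exact h1.symm } with hH
  have hmemH : ∀ w : V₁ ≃ₗ[ℚ] V₁, w ∈ H ↔ ∀ v : V₁, v ∈ Φ₁ ↔ w v ∈ Φ₁ := fun w => Iff.rfl
  have hσEH : ∀ r, σE r ∈ H := by
    intro r
    rw [hmemH]
    intro v
    constructor
    · intro hv
      show (σE r v : ℚ ⊗[ℤ] X) ∈ Φs
      rw [hσEapp]
      exact hσΦ r.1 r.2 v.1 hv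
    · intro hv
      have hback : σE r (σE r v) = v := by
        apply Subtype.ext
        rw [hσEapp, hσEapp]
        exact hσσ r.1 r.2 v.1
      have : (σE r (σE r v) : ℚ ⊗[ℤ] X) ∈ Φs := by
        rw [hσEapp]
        exact hσΦ r.1 r.2 _ hv
      rwa [hback] at this
  have hHfin : Finite H := by
    haveI : Finite ↥Φ₁ := hΦ₁fin.to_subtype
    refine Finite.of_injective
      (fun w : H => (fun v : ↥Φ₁ => (⟨(w : V₁ ≃ₗ[ℚ] V₁) v.1, ((w.2 v.1).mp v.2)⟩ : ↥Φ₁))) ?_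
    intro w₁ w₂ hw
    have heq : ((w₁ : V₁ ≃ₗ[ℚ] V₁) : V₁ →ₗ[ℚ] V₁) = ((w₂ : V₁ ≃ₗ[ℚ] V₁) : V₁ →ₗ[ℚ] V₁) := by
      refine LinearMap.ext_on hspanΦ₁ ?_
      intro v hv
      have := congrFun hw ⟨v, hv⟩
      exact congrArg Subtype.val this
    exact Subtype.ext (LinearEquiv.toLinearMap_injective heq)
  haveI : FiniteDimensional ℚ V₁ := FiniteDimensional.span_of_finite ℚ
    ((Ψ.roots.finite_toSet).image e)
  haveI := Fintype.ofFinite H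
  set b := Module.finBasis ℚ ↥V₁ with hb
  set g0 : V₁ → V₁ → ℚ := fun x y => ∑ i, b.repr x i * b.repr y i with hg0
  set g : V₁ → V₁ → ℚ := fun x y =>
    ∑ w : H, g0 ((w : V₁ ≃ₗ[ℚ] V₁) x) ((w : V₁ ≃ₗ[ℚ] V₁) y) with hg
  have hg_inv : ∀ (u : H) (x y : V₁),
      g ((u : V₁ ≃ₗ[ℚ] V₁) x) ((u : V₁ ≃ₗ[ℚ] V₁) y) = g x y := by
    intro u x y
    rw [hg]
    refine (Fintype.sum_equiv (Equiv.mulRight u⁻¹) _ _ ?_).symm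
    intro w
    have hx' : ((↑(w * u⁻¹) : V₁ ≃ₗ[ℚ] V₁)) ((u : V₁ ≃ₗ[ℚ] V₁) x) = (↑w : V₁ ≃ₗ[ℚ] V₁) x := by
      show (↑w : V₁ ≃ₗ[ℚ] V₁) ((u : V₁ ≃ₗ[ℚ] V₁).symm ((u : V₁ ≃ₗ[ℚ] V₁) x)) = _
      rw [(u : V₁ ≃ₗ[ℚ] V₁).symm_apply_apply x]
    have hy' : ((↑(w * u⁻¹) : V₁ ≃ₗ[ℚ] V₁)) ((u : V₁ ≃ₗ[ℚ] V₁) y) = (↑w : V₁ ≃ₗ[ℚ] V₁) y := by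
      show (↑w : V₁ ≃ₗ[ℚ] V₁) ((u : V₁ ≃ₗ[ℚ] V₁).symm ((u : V₁ ≃ₗ[ℚ] V₁) y)) = _
      rw [(u : V₁ ≃ₗ[ℚ] V₁).symm_apply_apply y]
    simp only [Equiv.coe_mulRight]
    rw [hx', hy']
  -- linearity of g in the second argument
  have hg0_add : ∀ x a c : V₁, g0 x (a + c) = g0 x a + g0 x c := by
    intro x a c
    rw [hg0]
    simp only [map_add, Finsupp.add_apply, mul_add]
    rw [Finset.sum_add_distrib]
  have hg0_smul : ∀ (t : ℚ) (x a : V₁), g0 x (t • a) = t * g0 x a := by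
    intro t x a
    rw [hg0]
    simp only [map_smul, Finsupp.smul_apply, smul_eq_mul, Finset.mul_sum]
    exact Finset.sum_congr rfl fun i _ => by ring
  have hg0_neg : ∀ x a : V₁, g0 x (-a) = - g0 x a := by
    intro x a
    rw [hg0]
    simp only [map_neg, Finsupp.neg_apply, mul_neg]
    rw [Finset.sum_neg_distrib]
  have hg_add : ∀ x a c : V₁, g x (a + c) = g x a + g x c := by
    intro x a c
    rw [hg]
    simp only [map_add, hg0_add]
    rw [Finset.sum_add_distrib]
  have hg_smul : ∀ (t : ℚ) (x a : V₁), g x (t • a) = t * g x a := by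
    intro t x a
    rw [hg]
    simp only [map_smul, hg0_smul, Finset.mul_sum]
  have hg_zero : ∀ x : V₁, g x 0 = 0 := by
    intro x
    have := hg_smul 0 x 0
    rw [zero_smul, zero_mul] at this
    exact this
  have hg_neg : ∀ x a : V₁, g x (-a) = - g x a := by
    intro x a
    rw [hg]
    simp only [map_neg, hg0_neg]
    rw [Finset.sum_neg_distrib]
  -- the fixed vector
  set xh : V₁ := ⟨(1 : ℚ) ⊗ₜ[ℤ] N, hmem⟩ with hxh
  have hfix : ∀ r : {r : X // r ∈ Ψ.roots}, σE r xh = xh := by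
    intro r
    apply Subtype.ext
    rw [hσEapp]
    show σ r.1 (e N) = e N
    rw [hσe, hperp _ (Ψ.coroot_mem r.2), zero_smul, sub_zero]
  have hgΦ : ∀ v ∈ Φ₁, g xh v = 0 := by
    rintro v hv
    obtain ⟨x, hx, hxv⟩ := hv
    have hrneg : σE ⟨x, hx⟩ v = -v := by
      apply Subtype.ext
      rw [hσEapp]
      show σ x v.1 = -(v.1 : ℚ ⊗[ℤ] X)
      rw [← hxv]
      show σ x (e x) = - e x
      rw [hσe, Ψ.pair_coroot_self x hx]
      rw [he]
      simp only []
      rw [show x - (2:ℤ) • x = -x by abel]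
      exact TensorProduct.tmul_neg 1 x
    have h1 : g xh v = g (σE ⟨x, hx⟩ xh) (σE ⟨x, hx⟩ v) := (hg_inv ⟨_, hσEH ⟨x, hx⟩⟩ xh v).symm
    rw [hfix, hrneg, hg_neg] at h1
    linarith
  have hgall : ∀ v : V₁, g xh v = 0 := by
    intro v
    have hv : v ∈ Submodule.span ℚ Φ₁ := hspanΦ₁ ▸ Submodule.mem_top
    refine Submodule.span_induction (p := fun w _ => g xh w = 0) ?_ ?_ ?_ ?_ hv
    · exact fun x hx => hgΦ x hx
    · exact hg_zero xh
    · intro x y _ _ hpx hpy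
      rw [hg_add, hpx, hpy, add_zero]
    · intro a x _ hpx
      rw [hg_smul, hpx, mul_zero]
  have hg0_self : g0 xh xh = 0 := by
    have hsum := hgall xh
    rw [hg] at hsum
    have hterm := (Finset.sum_eq_zero_iff_of_nonneg
      (fun w _ => Finset.sum_nonneg fun i _ => mul_self_nonneg _)).mp hsum (1 : H)
      (Finset.mem_univ _)
    simpa using hterm
  have hrepr : b.repr xh = 0 := by
    ext i
    have := (Finset.sum_eq_zero_iff_of_nonneg
      (fun i _ => mul_self_nonneg (b.repr xh i))).mp hg0_self i (Finset.mem_univ _)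
    simpa using mul_self_eq_zero.mp this
  have hxh0 : xh = 0 := by
    have := congrArg b.repr.symm hrepr
    simpa using this
  have hN0 : ((1 : ℚ) ⊗ₜ[ℤ] N : ℚ ⊗[ℤ] X) = (1 : ℚ) ⊗ₜ[ℤ] (0 : X) := by
    have := congrArg Subtype.val hxh0
    rw [TensorProduct.tmul_zero]; exact this
  exact Ψ.one_tmul_injective hN0

end RootDatumP

/-- Let `Γ` be a finite group acting quasisemisimply on a root datum `Ψ`.
Then for all roots `α, β` one has `i* α = i* β` in the coinvariant space `V_Γ` if and only if
`β = γ • α` for some `γ ∈ Γ`. -/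
theorem statement0 {X Xv : Type*} [AddCommGroup X] [AddCommGroup Xv]
    (Ψ : RootDatumP X Xv) {Γ : Type*} [Group Γ] [Finite Γ]
    (A : RootDatumActionP Ψ Γ) (hqss : A.IsQuasisemisimple)
    (α β : X) (hα : α ∈ Ψ.roots) (hβ : β ∈ Ψ.roots) :
    A.istar α = A.istar β ↔ ∃ γ : Γ, A.ρ γ α = β := by
  classical
  obtain ⟨f, hf0, hfinv⟩ := hqss
  haveI := Fintype.ofFinite Γ
  constructor
  · intro h
    rw [RootDatumActionP.istar, RootDatumActionP.istar, Submodule.Quotient.eq] at h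
    -- the averaging operator kills the coinvariant kernel
    set S : (ℚ ⊗[ℤ] X) →ₗ[ℚ] (ℚ ⊗[ℤ] X) :=
      ∑ γ : Γ, LinearMap.baseChange ℚ (A.ρ γ).toLinearMap with hSdef
    have hSker : A.coinvKer ≤ LinearMap.ker S := by
      rw [RootDatumActionP.coinvKer, Submodule.span_le]
      rintro w ⟨γ₀, v, rfl⟩
      simp only [SetLike.mem_coe, LinearMap.mem_ker, map_sub]
      have hreidx : S (LinearMap.lTensor ℚ (A.ρ γ₀).toLinearMap v) = S v := by
        rw [hSdef]
        simp only [LinearMap.coe_sum, Finset.sum_apply]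
        refine Fintype.sum_equiv (Equiv.mulRight γ₀) _ _ ?_
        intro γ
        rw [Equiv.coe_mulRight, ← LinearMap.baseChange_eq_ltensor,
          ← LinearMap.comp_apply, ← LinearMap.baseChange_comp]
        congr 2
        ext x
        simp only [LinearMap.comp_apply, LinearEquiv.coe_coe]
        rw [map_mul]
        rfl
      rw [hreidx, sub_self]
    have hS0 := hSker h
    rw [LinearMap.mem_ker, map_sub, sub_eq_zero] at hS0
    have hSα : ∀ x : X, S ((1:ℚ) ⊗ₜ[ℤ] x) = (1:ℚ) ⊗ₜ[ℤ] (∑ γ : Γ, A.ρ γ x) := by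
      intro x
      rw [hSdef]
      simp only [LinearMap.coe_sum, Finset.sum_apply, LinearMap.baseChange_tmul]
      rw [TensorProduct.tmul_sum]
      rfl
    rw [hSα, hSα] at hS0
    have hN : (∑ γ : Γ, A.ρ γ α) = ∑ γ : Γ, A.ρ γ β := Ψ.one_tmul_injective hS0
    set N : X := ∑ γ : Γ, A.ρ γ α with hNdef
    set m : ℕ := Fintype.card Γ with hm
    have hmpos : 0 < m := Fintype.card_pos
    -- values of f
    have hfN : f N = (m : ℝ) * f α := by
      rw [hNdef, map_sum]
      rw [Finset.sum_congr rfl fun γ _ => hfinv γ α]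
      rw [Finset.sum_const, Finset.card_univ, nsmul_eq_mul]
    have hfN' : f N = (m : ℝ) * f β := by
      rw [hN, map_sum]
      rw [Finset.sum_congr rfl fun γ _ => hfinv γ β]
      rw [Finset.sum_const, Finset.card_univ, nsmul_eq_mul]
    have hfαβ : f α = f β := by
      have hne : (m : ℝ) ≠ 0 := Nat.cast_ne_zero.mpr hmpos.ne'
      have := hfN.symm.trans hfN'
      exact mul_left_cancel₀ hne this
    -- N is not killed by B
    have hρN : ∀ γ : Γ, A.ρ γ N = N := by
      intro γ
      rw [hNdef, map_sum]
      refine Fintype.sum_equiv (Equiv.mulLeft γ) _ _ ?_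
      intro γ'
      rw [Equiv.coe_mulLeft, map_mul]
      rfl
    have hBNN : Ψ.B N N ≠ 0 := by
      intro h0
      have hperp := Ψ.pair_eq_zero_of_B_self_eq_zero h0
      have hNspan : ((1 : ℚ) ⊗ₜ[ℤ] N : ℚ ⊗[ℤ] X) ∈
          Submodule.span ℚ ((fun r : X => ((1 : ℚ) ⊗ₜ[ℤ] r : ℚ ⊗[ℤ] X)) '' ↑Ψ.roots) := by
        rw [hNdef, TensorProduct.tmul_sum]
        refine Submodule.sum_mem _ fun γ _ => Submodule.subset_span ?_
        exact ⟨A.ρ γ α, A.roots_stable γ α hα, rfl⟩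
      have hN0 := Ψ.nz N hNspan hperp
      have : f N = 0 := by rw [hN0, map_zero]
      rw [hfN] at this
      have hne : (m : ℝ) ≠ 0 := Nat.cast_ne_zero.mpr hmpos.ne'
      exact hf0 α hα (by
        rcases mul_eq_zero.mp this with h | h
        · exact absurd h hne
        · exact h)
    have hBNNpos : 0 < Ψ.B N N := lt_of_le_of_ne (Ψ.B_self_nonneg N) (Ne.symm hBNN)
    -- B-invariance under the action
    have hBinv : ∀ (γ : Γ) (x y : X), Ψ.B (A.ρ γ x) (A.ρ γ y) = Ψ.B x y := by
      intro γ x y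
      refine (Finset.sum_nbij' (fun c => A.ρv γ c) (fun c => A.ρv γ⁻¹ c)
        (fun c hc => A.coroots_stable γ c hc) (fun c hc => A.coroots_stable γ⁻¹ c hc)
        (fun c _ => ?_) (fun c _ => ?_) (fun c _ => ?_)).symm
      · show A.ρv γ⁻¹ (A.ρv γ c) = c
        rw [show A.ρv γ⁻¹ (A.ρv γ c) = (A.ρv γ⁻¹ * A.ρv γ) c from rfl, ← map_mul,
          inv_mul_cancel, map_one]
        rfl
      · show A.ρv γ (A.ρv γ⁻¹ c) = c
        rw [show A.ρv γ (A.ρv γ⁻¹ c) = (A.ρv γ * A.ρv γ⁻¹) c from rfl, ← map_mul,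
          mul_inv_cancel, map_one]
        rfl
      · rw [A.pair_invariant γ x c, A.pair_invariant γ y c]
    have hBNγ : ∀ γ : Γ, Ψ.B N (A.ρ γ β) = Ψ.B N β := by
      intro γ
      have hthis := hBinv γ N β
      rwa [hρN γ] at hthis
    have hBsum : Ψ.B N N = (m : ℤ) * Ψ.B N β := by
      nth_rewrite 2 [hN]
      rw [Ψ.B_comm, Ψ.B_sum_left,
        Finset.sum_congr rfl fun γ _ => (Ψ.B_comm (A.ρ γ β) N).trans (hBNγ γ),
        Finset.sum_const, Finset.card_univ, nsmul_eq_mul]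
    have hBNβ : 0 < Ψ.B N β := by
      by_contra hc
      push_neg at hc
      have : Ψ.B N N ≤ 0 := by
        rw [hBsum]
        have : (0:ℤ) ≤ m := Int.natCast_nonneg m
        nlinarith
      linarith
    have hBterms : Ψ.B N β = ∑ γ : Γ, Ψ.B (A.ρ γ α) β := by
      rw [hNdef, Ψ.B_sum_left]
    obtain ⟨γ₀, hγ₀⟩ : ∃ γ₀ : Γ, 0 < Ψ.B (A.ρ γ₀ α) β := by
      by_contra hc
      push_neg at hc
      have : Ψ.B N β ≤ 0 := by
        rw [hBterms]
        exact Finset.sum_nonpos fun γ _ => hc γ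
      linarith
    refine ⟨γ₀, ?_⟩
    refine Ψ.core hf0 (A.roots_stable γ₀ α hα) hβ ?_ hγ₀
    rw [hfinv γ₀ α]
    exact hfαβ
  · rintro ⟨γ, hγ⟩
    rw [RootDatumActionP.istar, RootDatumActionP.istar, Submodule.Quotient.eq]
    have hkey : ((1:ℚ) ⊗ₜ[ℤ] α - (1:ℚ) ⊗ₜ[ℤ] β : ℚ ⊗[ℤ] X)
        = -(LinearMap.lTensor ℚ (A.ρ γ).toLinearMap ((1:ℚ) ⊗ₜ[ℤ] α) - (1:ℚ) ⊗ₜ[ℤ] α) := by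
      rw [LinearMap.lTensor_tmul]
      simp only [LinearEquiv.coe_coe]
      rw [hγ]
      abel
    rw [hkey]
    exact neg_mem (Submodule.subset_span ⟨γ, (1:ℚ) ⊗ₜ[ℤ] α, rfl⟩)
end

section
/- Let Γ be a finite group acting quasisemisimply on a root datum Ψ̃ = (X̃, Φ̃, X̃^∨, Φ̃^∨), and put Φ := i*(Φ̃) ⊆ V_Γ. Then Φ is a (possibly non-reduced) root system: 0 ∉ Φ, and for every a ∈ Φ there exists a ℚ-linear functional a^∨ on V_Γ such that ⟨a, a^∨⟩ = 2, ⟨b, a^∨⟩ ∈ ℤ for every b ∈ Φ, and the reflection x ↦ x − ⟨x, a^∨⟩·a maps Φ bijectively onto Φ. -/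
open scoped TensorProduct

namespace StatementAux

variable {X Xv : Type*} [AddCommGroup X] [AddCommGroup Xv]

/-- The canonical positive-semidefinite `W`- and `Γ`-invariant bilinear form
`B x y = ∑_{d ∈ coroots} ⟨x,d⟩⟨y,d⟩`. -/
def BB (Ψ : RootDatumP X Xv) (x y : X) : ℤ := ∑ d ∈ Ψ.coroots, Ψ.pair x d * Ψ.pair y d

variable (Ψ : RootDatumP X Xv)

lemma BB_symm (x y : X) : BB Ψ x y = BB Ψ y x := by
  unfold BB; exact Finset.sum_congr rfl fun d _ => mul_comm _ _

lemma BB_add_left (x x' y : X) : BB Ψ (x + x') y = BB Ψ x y + BB Ψ x' y := by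
  unfold BB; rw [← Finset.sum_add_distrib]
  exact Finset.sum_congr rfl fun d _ => by rw [map_add, LinearMap.add_apply, add_mul]

lemma BB_zero_left (y : X) : BB Ψ 0 y = 0 := by
  unfold BB
  refine Finset.sum_eq_zero fun d _ => by rw [map_zero, LinearMap.zero_apply, zero_mul]

lemma BB_smul_left (k : ℤ) (x y : X) : BB Ψ (k • x) y = k * BB Ψ x y := by
  unfold BB; rw [Finset.mul_sum]
  exact Finset.sum_congr rfl fun d _ => by
    rw [map_smul, LinearMap.smul_apply, smul_eq_mul, mul_assoc]

lemma BB_sub_left (x x' y : X) : BB Ψ (x - x') y = BB Ψ x y - BB Ψ x' y := by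
  have h : x - x' + x' = x := by abel
  have := BB_add_left Ψ (x - x') x' y
  rw [h] at this; omega

lemma BB_add_right (x y y' : X) : BB Ψ x (y + y') = BB Ψ x y + BB Ψ x y' := by
  rw [BB_symm, BB_add_left, BB_symm Ψ y x, BB_symm Ψ y' x]

lemma BB_sub_right (x y y' : X) : BB Ψ x (y - y') = BB Ψ x y - BB Ψ x y' := by
  rw [BB_symm, BB_sub_left, BB_symm Ψ y x, BB_symm Ψ y' x]

lemma BB_smul_right (k : ℤ) (x y : X) : BB Ψ x (k • y) = k * BB Ψ x y := by
  rw [BB_symm, BB_smul_left, BB_symm Ψ y x]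

lemma BB_self_nonneg (x : X) : 0 ≤ BB Ψ x x :=
  Finset.sum_nonneg fun d _ => mul_self_nonneg _

lemma BB_sum_left {ι : Type*} (s : Finset ι) (g : ι → X) (y : X) :
    BB Ψ (∑ i ∈ s, g i) y = ∑ i ∈ s, BB Ψ (g i) y := by
  classical
  induction s using Finset.induction_on with
  | empty => simpa using BB_zero_left Ψ y
  | insert _ _ hx ih =>
      rw [Finset.sum_insert hx, Finset.sum_insert hx, BB_add_left, ih]

/-- `W`-invariance of `B`. -/
lemma BB_reflection (β : X) (hβ : β ∈ Ψ.roots) (x y : X) :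
    BB Ψ (x - Ψ.pair x (Ψ.coroot β) • β) (y - Ψ.pair y (Ψ.coroot β) • β) = BB Ψ x y := by
  classical
  have h2 : Ψ.pair β (Ψ.coroot β) = 2 := Ψ.pair_coroot_self β hβ
  have key : ∀ z : X, ∀ d : Xv, Ψ.pair (z - Ψ.pair z (Ψ.coroot β) • β) d
      = Ψ.pair z (d - Ψ.pair β d • Ψ.coroot β) := by
    intro z d
    simp only [map_sub, map_smul, LinearMap.sub_apply, LinearMap.smul_apply, smul_eq_mul]
    ring
  have inv : ∀ d : Xv, (d - Ψ.pair β d • Ψ.coroot β)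
      - Ψ.pair β (d - Ψ.pair β d • Ψ.coroot β) • Ψ.coroot β = d := by
    intro d
    have : Ψ.pair β (d - Ψ.pair β d • Ψ.coroot β) = - Ψ.pair β d := by
      simp only [map_sub, map_smul, smul_eq_mul, h2]; ring
    rw [this]; module
  unfold BB
  refine Finset.sum_nbij' (i := fun d => d - Ψ.pair β d • Ψ.coroot β)
    (j := fun d => d - Ψ.pair β d • Ψ.coroot β) ?_ ?_ ?_ ?_ ?_
  · intro d hd; exact Ψ.coreflection_mem β hβ d hd
  · intro d hd; exact Ψ.coreflection_mem β hβ d hd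
  · intro d _; exact inv d
  · intro d _; exact inv d
  · intro d _; rw [key x, key y]

/-- Key relation: `2 B(x,β) = ⟨x, β^∨⟩ B(β,β)` for a root `β`. -/
lemma two_mul_BB (β : X) (hβ : β ∈ Ψ.roots) (x : X) :
    2 * BB Ψ x β = Ψ.pair x (Ψ.coroot β) * BB Ψ β β := by
  have h2 : Ψ.pair β (Ψ.coroot β) = 2 := Ψ.pair_coroot_self β hβ
  have h := BB_reflection Ψ β hβ x β
  rw [h2, show β - (2:ℤ) • β = (-1 : ℤ) • β by module] at h
  rw [BB_smul_right, BB_sub_left, BB_smul_left] at h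
  have hsymm := BB_symm Ψ x β
  nlinarith [h]

lemma BB_root_pos (β : X) (hβ : β ∈ Ψ.roots) : 0 < BB Ψ β β := by
  have hc : Ψ.coroot β ∈ Ψ.coroots := Ψ.coroot_bijOn.mapsTo hβ
  have h2 : Ψ.pair β (Ψ.coroot β) = 2 := Ψ.pair_coroot_self β hβ
  have h4 : (4:ℤ) ≤ BB Ψ β β := by
    have h := Finset.single_le_sum (f := fun d => Ψ.pair β d * Ψ.pair β d)
      (fun d _ => mul_self_nonneg _) hc
    simpa [BB, h2] using h
  omega

/-- Cauchy–Schwarz for the positive semidefinite form `B`. -/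
lemma BB_cauchy_schwarz (x y : X) (hy : 0 < BB Ψ y y) :
    BB Ψ x y ^ 2 ≤ BB Ψ x x * BB Ψ y y := by
  have h := BB_self_nonneg Ψ (BB Ψ y y • x - BB Ψ x y • y)
  simp only [BB_sub_left, BB_sub_right, BB_smul_left, BB_smul_right] at h
  have hs := BB_symm Ψ x y
  rw [← hs] at h
  nlinarith [h, hy]


section GTrick

lemma exists_functional (Ψ : RootDatumP X Xv) {δ : X} (hδ : δ ≠ 0) :
    ∃ φ : X →ₗ[ℤ] ℤ, φ δ ≠ 0 := by
  have : Module.Free ℤ X := Ψ.free_X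
  let b := Module.Free.chooseBasis ℤ X
  have hr : b.repr δ ≠ 0 := fun h => hδ (by simpa using congrArg b.repr.symm h)
  obtain ⟨i, hi⟩ : ∃ i, b.repr δ i ≠ 0 := by
    by_contra hall
    push_neg at hall
    exact hr (Finsupp.ext fun i => hall i)
  exact ⟨b.coord i, hi⟩

lemma inf_family (Ψ : RootDatumP X Xv) (u δ : X) (hδ : δ ≠ 0)
    (hmem : ∀ n : ℕ, u + (2 * (n:ℤ)) • δ ∈ Ψ.roots) : False := by
  obtain ⟨φ, hφ⟩ := exists_functional Ψ hδ
  have hinj : Function.Injective (fun n : ℕ => u + (2 * (n:ℤ)) • δ) := by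
    intro m n hmn
    have := congrArg φ hmn
    simp only [map_add, map_smul, smul_eq_mul] at this
    have h2 : (2 * (m:ℤ)) * φ δ = (2 * (n:ℤ)) * φ δ := by omega
    have := mul_right_cancel₀ hφ h2
    omega
  have hinf : (Set.range fun n : ℕ => u + (2 * (n:ℤ)) • δ).Infinite :=
    Set.infinite_range_of_injective hinj
  refine hinf (Set.Finite.subset Ψ.roots.finite_toSet ?_)
  rintro x ⟨n, rfl⟩
  exact hmem n

lemma pair_neg_two (Ψ : RootDatumP X Xv) (u w : X) (hu : u ∈ Ψ.roots) (hw : w ∈ Ψ.roots)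
    (h1 : Ψ.pair u (Ψ.coroot w) = -2) (h2 : Ψ.pair w (Ψ.coroot u) = -2) : u + w = 0 := by
  by_contra hδ
  set δ := u + w with hδdef
  have hcu : Ψ.pair u (Ψ.coroot u) = 2 := Ψ.pair_coroot_self u hu
  have hcw : Ψ.pair w (Ψ.coroot w) = 2 := Ψ.pair_coroot_self w hw
  have hδu : Ψ.pair δ (Ψ.coroot u) = 0 := by simp [hδdef, map_add, hcu, h2]
  have hδw : Ψ.pair δ (Ψ.coroot w) = 0 := by simp [hδdef, map_add, hcw, h1]
  refine inf_family Ψ u δ hδ ?_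
  intro n
  induction n with
  | zero => simpa using hu
  | succ n ih =>
      set x := u + (2 * (n:ℤ)) • δ with hx
      have hpxw : Ψ.pair x (Ψ.coroot w) = -2 := by
        simp [hx, map_add, map_smul, h1, hδw]
      have hy : x - Ψ.pair x (Ψ.coroot w) • w ∈ Ψ.roots := Ψ.reflection_mem w hw x ih
      rw [hpxw] at hy
      have hpyu : Ψ.pair (x - (-2:ℤ) • w) (Ψ.coroot u) = -2 := by
        have hpxu : Ψ.pair x (Ψ.coroot u) = 2 := by
          simp [hx, map_add, map_smul, hcu, hδu]
        simp [map_sub, map_smul, hpxu, h2]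
      have hz := Ψ.reflection_mem u hu _ hy
      rw [hpyu] at hz
      have : x - (-2:ℤ) • w - (-2:ℤ) • u = u + (2 * ((n:ℤ)+1)) • δ := by
        simp only [hx, hδdef]; module
      rw [this] at hz
      convert hz using 3
      norm_num

lemma pair_pos_two (Ψ : RootDatumP X Xv) (u w : X) (hu : u ∈ Ψ.roots) (hw : w ∈ Ψ.roots)
    (h1 : Ψ.pair u (Ψ.coroot w) = 2) (h2 : Ψ.pair w (Ψ.coroot u) = 2) : u = w := by
  by_contra hne
  have hδ : u - w ≠ 0 := sub_ne_zero_of_ne hne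
  set δ := u - w with hδdef
  have hcu : Ψ.pair u (Ψ.coroot u) = 2 := Ψ.pair_coroot_self u hu
  have hcw : Ψ.pair w (Ψ.coroot w) = 2 := Ψ.pair_coroot_self w hw
  have hδu : Ψ.pair δ (Ψ.coroot u) = 0 := by simp [hδdef, map_sub, hcu, h2]
  have hδw : Ψ.pair δ (Ψ.coroot w) = 0 := by simp [hδdef, map_sub, hcw, h1]
  refine inf_family Ψ u δ hδ ?_
  intro n
  induction n with
  | zero => simpa using hu
  | succ n ih =>
      set x := u + (2 * (n:ℤ)) • δ with hx
      have hpxw : Ψ.pair x (Ψ.coroot w) = 2 := by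
        simp [hx, map_add, map_smul, h1, hδw]
      have hy : x - Ψ.pair x (Ψ.coroot w) • w ∈ Ψ.roots := Ψ.reflection_mem w hw x ih
      rw [hpxw] at hy
      have hpyu : Ψ.pair (x - (2:ℤ) • w) (Ψ.coroot u) = -2 := by
        have hpxu : Ψ.pair x (Ψ.coroot u) = 2 := by
          simp [hx, map_add, map_smul, hcu, hδu]
        simp [map_sub, map_smul, hpxu, h2]
      have hz := Ψ.reflection_mem u hu _ hy
      rw [hpyu] at hz
      have : x - (2:ℤ) • w - (-2:ℤ) • u = u + (2 * ((n:ℤ)+1)) • δ := by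
        simp only [hx, hδdef]; module
      rw [this] at hz
      convert hz using 3
      norm_num

end GTrick


section Orbit

open scoped Classical

variable {Γ : Type*} [Group Γ] (A : RootDatumActionP Ψ Γ)

lemma rho_inv_apply (γ : Γ) (x : X) : A.ρ γ (A.ρ γ⁻¹ x) = x := by
  have : A.ρ γ * A.ρ γ⁻¹ = 1 := by rw [← map_mul, mul_inv_cancel, map_one]
  calc A.ρ γ (A.ρ γ⁻¹ x) = (A.ρ γ * A.ρ γ⁻¹) x := rfl
  _ = x := by rw [this]; rfl

lemma rho_inv_apply' (γ : Γ) (x : X) : A.ρ γ⁻¹ (A.ρ γ x) = x := by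
  have := rho_inv_apply Ψ A γ⁻¹ x
  rwa [inv_inv] at this

lemma rhov_inv_apply (γ : Γ) (y : Xv) : A.ρv γ (A.ρv γ⁻¹ y) = y := by
  have : A.ρv γ * A.ρv γ⁻¹ = 1 := by rw [← map_mul, mul_inv_cancel, map_one]
  calc A.ρv γ (A.ρv γ⁻¹ y) = (A.ρv γ * A.ρv γ⁻¹) y := rfl
  _ = y := by rw [this]; rfl

lemma rhov_inv_apply' (γ : Γ) (y : Xv) : A.ρv γ⁻¹ (A.ρv γ y) = y := by
  have := rhov_inv_apply Ψ A γ⁻¹ y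
  rwa [inv_inv] at this

/-- `Γ`-invariance of the form `B`. -/
lemma BB_rho (γ : Γ) (x y : X) : BB Ψ (A.ρ γ x) (A.ρ γ y) = BB Ψ x y := by
  unfold BB
  refine Finset.sum_nbij' (i := fun d => A.ρv γ⁻¹ d) (j := fun d => A.ρv γ d) ?_ ?_ ?_ ?_ ?_
  · intro d hd; exact A.coroots_stable γ⁻¹ d hd
  · intro d hd; exact A.coroots_stable γ d hd
  · intro d _; exact rhov_inv_apply Ψ A γ d
  · intro d _; exact rhov_inv_apply' Ψ A γ d
  · intro d _
    have h1 : Ψ.pair (A.ρ γ x) d = Ψ.pair x (A.ρv γ⁻¹ d) := by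
      conv_lhs => rw [← rhov_inv_apply Ψ A γ d]
      exact A.pair_invariant γ x (A.ρv γ⁻¹ d)
    have h2 : Ψ.pair (A.ρ γ y) d = Ψ.pair y (A.ρv γ⁻¹ d) := by
      conv_lhs => rw [← rhov_inv_apply Ψ A γ d]
      exact A.pair_invariant γ y (A.ρv γ⁻¹ d)
    rw [h1, h2]

/-- The orbit of `α` under `Γ`, as a finset of roots. -/
noncomputable def orb (α : X) : Finset X := Ψ.roots.filter (fun β => ∃ γ : Γ, A.ρ γ α = β)

variable {α : X} (hα : α ∈ Ψ.roots)

lemma mem_orb {β : X} : β ∈ orb Ψ A α ↔ β ∈ Ψ.roots ∧ ∃ γ : Γ, A.ρ γ α = β :=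
  Finset.mem_filter

include hα in
lemma self_mem_orb : α ∈ orb Ψ A α :=
  (mem_orb Ψ A).2 ⟨hα, 1, by rw [map_one]; rfl⟩

lemma orb_sub_roots {β : X} (hβ : β ∈ orb Ψ A α) : β ∈ Ψ.roots := ((mem_orb Ψ A).1 hβ).1

lemma rho_mem_orb (γ : Γ) {β : X} (hβ : β ∈ orb Ψ A α) : A.ρ γ β ∈ orb Ψ A α := by
  obtain ⟨hβr, γ', hγ'⟩ := (mem_orb Ψ A).1 hβ
  refine (mem_orb Ψ A).2 ⟨A.roots_stable γ β hβr, γ * γ', ?_⟩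
  rw [map_mul]
  show A.ρ γ (A.ρ γ' α) = _
  rw [hγ']

/-- The sum of the coroots over the orbit. -/
noncomputable def orbN (α : X) : Xv := ∑ β ∈ orb Ψ A α, Ψ.coroot β

include hα in
lemma rhov_orbN (γ : Γ) : A.ρv γ (orbN Ψ A α) = orbN Ψ A α := by
  unfold orbN
  rw [map_sum]
  refine Finset.sum_nbij' (i := fun β => A.ρ γ β) (j := fun β => A.ρ γ⁻¹ β) ?_ ?_ ?_ ?_ ?_
  · intro β hβ; exact rho_mem_orb Ψ A γ hβ
  · intro β hβ; exact rho_mem_orb Ψ A γ⁻¹ hβ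
  · intro β _; exact rho_inv_apply' Ψ A γ β
  · intro β _; exact rho_inv_apply Ψ A γ β
  · intro β hβ
    exact (A.coroot_equivariant γ β (orb_sub_roots Ψ A hβ)).symm

include hα in
lemma pair_rho_orbN (γ : Γ) (x : X) : Ψ.pair (A.ρ γ x) (orbN Ψ A α) = Ψ.pair x (orbN Ψ A α) := by
  conv_lhs => rw [← rhov_orbN Ψ A hα γ]
  exact A.pair_invariant γ x (orbN Ψ A α)

include hα in
lemma pair_orbN_const {β : X} (hβ : β ∈ orb Ψ A α) :
    Ψ.pair β (orbN Ψ A α) = Ψ.pair α (orbN Ψ A α) := by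
  obtain ⟨_, γ, rfl⟩ := (mem_orb Ψ A).1 hβ
  exact pair_rho_orbN Ψ A hα γ α

lemma BB_orb_const {β : X} (hβ : β ∈ orb Ψ A α) : BB Ψ β β = BB Ψ α α := by
  obtain ⟨_, γ, rfl⟩ := (mem_orb Ψ A).1 hβ
  exact BB_rho Ψ A γ α α

section WithF

variable (f : X →ₗ[ℤ] ℝ) (hf1 : ∀ β ∈ Ψ.roots, f β ≠ 0) (hf2 : ∀ (γ : Γ) (x : X), f (A.ρ γ x) = f x)

include hf2 in
lemma f_orb_const {β : X} (hβ : β ∈ orb Ψ A α) : f β = f α := by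
  obtain ⟨_, γ, rfl⟩ := (mem_orb Ψ A).1 hβ
  exact hf2 γ α

include hα hf1 hf2 in
/-- The pairing between two distinct roots in the same orbit is `0` or `-1`, and it is
symmetric. -/
lemma orb_cross_pairing {β β' : X} (hβ : β ∈ orb Ψ A α) (hβ' : β' ∈ orb Ψ A α) (hne : β ≠ β') :
    (Ψ.pair β (Ψ.coroot β') = 0 ∨ Ψ.pair β (Ψ.coroot β') = -1) ∧
      Ψ.pair β' (Ψ.coroot β) = Ψ.pair β (Ψ.coroot β') := by
  have hβr := orb_sub_roots Ψ A hβ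
  have hβ'r := orb_sub_roots Ψ A hβ'
  set L := BB Ψ α α with hL
  have hLpos : 0 < L := by rw [hL, ← BB_orb_const Ψ A hβ]; exact BB_root_pos Ψ β hβr
  have hlen : BB Ψ β β = L := BB_orb_const Ψ A hβ
  have hlen' : BB Ψ β' β' = L := BB_orb_const Ψ A hβ'
  set p := Ψ.pair β (Ψ.coroot β') with hp
  set p' := Ψ.pair β' (Ψ.coroot β) with hp'
  have e1 : 2 * BB Ψ β β' = p * L := by rw [two_mul_BB Ψ β' hβ'r β, hlen']
  have e2 : 2 * BB Ψ β' β = p' * L := by rw [two_mul_BB Ψ β hβr β', hlen]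
  have hsym : p' = p := by
    have := BB_symm Ψ β β'
    have : p * L = p' * L := by omega
    exact (mul_right_cancel₀ (ne_of_gt hLpos) this.symm)
  have hCS : BB Ψ β β' ^ 2 ≤ L * L := by
    have := BB_cauchy_schwarz Ψ β β' (by rw [hlen']; exact hLpos)
    rwa [hlen, hlen'] at this
  have hsq : (2 * BB Ψ β β') ^ 2 = (p * L) ^ 2 := by rw [e1]
  have hpbound : p ^ 2 ≤ 4 := by nlinarith [hsq, hCS, mul_pos hLpos hLpos]
  have hub : p ≤ 2 := by nlinarith [hpbound, sq_nonneg (p - 2)]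
  have hlb : -2 ≤ p := by nlinarith [hpbound, sq_nonneg (p + 2)]
  have hrange : p = -2 ∨ p = -1 ∨ p = 0 ∨ p = 1 ∨ p = 2 := by omega
  have hfβ : f β = f α := f_orb_const Ψ A f hf2 hβ
  have hfβ' : f β' = f α := f_orb_const Ψ A f hf2 hβ'
  have hfα : f α ≠ 0 := by rw [← hfβ]; exact hf1 β hβr
  rcases hrange with h | h | h | h | h
  · exfalso
    have := pair_neg_two Ψ β β' hβr hβ'r (by rw [← hp, h]) (by rw [← hp', hsym, h])
    have h0 : f (β + β') = 0 := by rw [this, map_zero]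
    rw [map_add, hfβ, hfβ'] at h0
    have : f α = 0 := by linarith
    exact hfα this
  · exact ⟨Or.inr h, by rw [hsym]⟩
  · exact ⟨Or.inl h, by rw [hsym]⟩
  · exfalso
    have hroot : β - Ψ.pair β (Ψ.coroot β') • β' ∈ Ψ.roots := Ψ.reflection_mem β' hβ'r β hβr
    rw [← hp, h, one_smul] at hroot
    have h0 : f (β - β') = f β - f β' := by rw [map_sub]
    rw [hfβ, hfβ', sub_self] at h0
    exact hf1 _ hroot h0
  · exfalso
    have := pair_pos_two Ψ β β' hβr hβ'r (by rw [← hp, h]) (by rw [← hp', hsym, h])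
    exact hne this

end WithF

end Orbit


section CFacts

open scoped Classical

variable {Γ : Type*} [Group Γ] (A : RootDatumActionP Ψ Γ)
variable {α : X} (hα : α ∈ Ψ.roots)
variable (f : X →ₗ[ℤ] ℝ) (hf1 : ∀ β ∈ Ψ.roots, f β ≠ 0) (hf2 : ∀ (γ : Γ) (x : X), f (A.ρ γ x) = f x)

lemma pair_orbN_expand (x : X) :
    Ψ.pair x (orbN Ψ A α) = ∑ β ∈ orb Ψ A α, Ψ.pair x (Ψ.coroot β) := by
  unfold orbN
  exact map_sum (Ψ.pair x) _ _

include hα in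
lemma orbC_nonneg : 0 ≤ Ψ.pair α (orbN Ψ A α) := by
  set O := orb Ψ A α with hO
  set c := Ψ.pair α (orbN Ψ A α) with hc
  set L := BB Ψ α α with hL
  have hLpos : 0 < L := BB_root_pos Ψ α hα
  set σ := ∑ β ∈ O, β with hσ
  have key : 2 * BB Ψ σ σ = (O.card : ℤ) * c * L := by
    have e1 : BB Ψ σ σ = ∑ β ∈ O, BB Ψ σ β := by
      rw [BB_symm, hσ, BB_sum_left]
      exact Finset.sum_congr rfl fun β _ => BB_symm Ψ β σ
    have e2 : ∀ β ∈ O, 2 * BB Ψ σ β = Ψ.pair σ (Ψ.coroot β) * L := by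
      intro β hβ
      rw [two_mul_BB Ψ β (orb_sub_roots Ψ A hβ) σ, BB_orb_const Ψ A hβ]
    have e3 : ∑ β ∈ O, Ψ.pair σ (Ψ.coroot β) = (O.card : ℤ) * c := by
      have : ∀ β ∈ O, Ψ.pair σ (Ψ.coroot β) = ∑ β' ∈ O, Ψ.pair β' (Ψ.coroot β) := by
        intro β _
        rw [hσ, map_sum, LinearMap.coe_sum, Finset.sum_apply]
      rw [Finset.sum_congr rfl this, Finset.sum_comm]
      have : ∀ β' ∈ O, ∑ β ∈ O, Ψ.pair β' (Ψ.coroot β) = c := by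
        intro β' hβ'
        rw [← pair_orbN_expand, hc, pair_orbN_const Ψ A hα hβ']
      rw [Finset.sum_congr rfl this, Finset.sum_const, nsmul_eq_mul]
    calc 2 * BB Ψ σ σ = ∑ β ∈ O, 2 * BB Ψ σ β := by rw [e1, Finset.mul_sum]
    _ = ∑ β ∈ O, Ψ.pair σ (Ψ.coroot β) * L := Finset.sum_congr rfl e2
    _ = (∑ β ∈ O, Ψ.pair σ (Ψ.coroot β)) * L := by rw [Finset.sum_mul]
    _ = (O.card : ℤ) * c * L := by rw [e3]
  have hBB := BB_self_nonneg Ψ σ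
  have hcard : 0 < (O.card : ℤ) := by
    have : α ∈ O := self_mem_orb Ψ A hα
    exact_mod_cast Finset.card_pos.2 ⟨α, this⟩
  nlinarith [key, hBB, hcard, hLpos, mul_pos hcard hLpos]

lemma sum_zero_neg_one {s : Finset X} (t : X → ℤ) (ht : ∀ β ∈ s, t β = 0 ∨ t β = -1) :
    ∑ β ∈ s, t β = -(((s.filter (fun β => t β = -1)).card : ℤ)) := by
  rw [← Finset.sum_filter_add_sum_filter_not s (fun β => t β = -1)]
  have h1 : ∑ β ∈ s.filter (fun β => t β = -1), t β
      = ∑ _β ∈ s.filter (fun β => t β = -1), (-1 : ℤ) :=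
    Finset.sum_congr rfl fun β hβ => (Finset.mem_filter.1 hβ).2
  have h2 : ∑ β ∈ s.filter (fun β => ¬ t β = -1), t β = 0 := by
    refine Finset.sum_eq_zero fun β hβ => ?_
    obtain ⟨hβs, hβn⟩ := Finset.mem_filter.1 hβ
    rcases ht β hβs with h | h
    · exact h
    · exact absurd h hβn
  rw [h1, h2, Finset.sum_const, add_zero, nsmul_eq_mul]
  ring

include hα hf1 hf2 in
lemma partner_card {β : X} (hβ : β ∈ orb Ψ A α) :
    (((orb Ψ A α).filter
        (fun β' => ¬ β' = β ∧ Ψ.pair β (Ψ.coroot β') = -1)).card : ℤ)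
      = 2 - Ψ.pair α (orbN Ψ A α) := by
  classical
  set O := orb Ψ A α with hO
  have hβr := orb_sub_roots Ψ A hβ
  have hsplit : Ψ.pair β (orbN Ψ A α)
      = Ψ.pair β (Ψ.coroot β) + ∑ β' ∈ O.erase β, Ψ.pair β (Ψ.coroot β') := by
    rw [pair_orbN_expand, ← Finset.add_sum_erase _ _ hβ]
  rw [Ψ.pair_coroot_self β hβr, pair_orbN_const Ψ A hα hβ] at hsplit
  have hvals : ∀ β' ∈ O.erase β, Ψ.pair β (Ψ.coroot β') = 0 ∨ Ψ.pair β (Ψ.coroot β') = -1 := by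
    intro β' hβ'
    obtain ⟨hne, hβ'O⟩ := Finset.mem_erase.1 hβ'
    exact (orb_cross_pairing Ψ A hα f hf1 hf2 hβ hβ'O (Ne.symm hne)).1
  rw [sum_zero_neg_one _ hvals] at hsplit
  have hfe : (O.erase β).filter (fun β' => Ψ.pair β (Ψ.coroot β') = -1)
      = O.filter (fun β' => ¬ β' = β ∧ Ψ.pair β (Ψ.coroot β') = -1) := by
    ext β'
    simp only [Finset.mem_filter, Finset.mem_erase]
    tauto
  rw [hfe] at hsplit
  omega

include hα hf1 hf2 in
lemma orbC_le_two : Ψ.pair α (orbN Ψ A α) ≤ 2 := by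
  have := partner_card Ψ A hα f hf1 hf2 (self_mem_orb Ψ A hα)
  have hge : (0:ℤ) ≤ (((orb Ψ A α).filter
      (fun β' => ¬ β' = α ∧ Ψ.pair α (Ψ.coroot β') = -1)).card : ℤ) := Int.natCast_nonneg _
  omega

end CFacts


section Cycle

open scoped Classical

variable {Γ : Type*} [Group Γ] (A : RootDatumActionP Ψ Γ)
variable {α : X} (hα : α ∈ Ψ.roots)
variable (f : X →ₗ[ℤ] ℝ) (hf1 : ∀ β ∈ Ψ.roots, f β ≠ 0) (hf2 : ∀ (γ : Γ) (x : X), f (A.ρ γ x) = f x)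

include hα hf1 hf2 in
/-- A chordless cycle of length `≥ 3` inside an orbit is impossible. -/
lemma cycle_contradiction (m : ℕ) (w : ℕ → X)
    (hmem : ∀ l, l ≤ m+2 → w l ∈ orb Ψ A α)
    (hadj : ∀ l, l ≤ m+1 → Ψ.pair (w l) (Ψ.coroot (w (l+1))) = -1)
    (hadj' : ∀ l, l ≤ m+1 → Ψ.pair (w (l+1)) (Ψ.coroot (w l)) = -1)
    (hwrap : Ψ.pair (w (m+2)) (Ψ.coroot (w 0)) = -1)
    (hwrap' : Ψ.pair (w 0) (Ψ.coroot (w (m+2))) = -1)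
    (hchord : ∀ l j, l ≤ m+2 → j ≤ m+2 → j ≠ l → j ≠ l+1 → l ≠ j+1 →
      ¬(l = 0 ∧ j = m+2) → ¬(j = 0 ∧ l = m+2) → Ψ.pair (w l) (Ψ.coroot (w j)) = 0) :
    False := by
  set O := orb Ψ A α with hO
  set L := BB Ψ α α with hL
  have hLpos : 0 < L := BB_root_pos Ψ α hα
  have hroots : ∀ l, l ≤ m+2 → w l ∈ Ψ.roots := fun l hl => orb_sub_roots Ψ A (hmem l hl)
  have hlen : ∀ l, l ≤ m+2 → BB Ψ (w l) (w l) = L := fun l hl => BB_orb_const Ψ A (hmem l hl)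
  set T : ℕ → X := fun t => ∑ l ∈ Finset.Icc 1 t, w l with hT
  -- pairing of partial sums with the next vertex
  have hnext : ∀ t, 1 ≤ t → t + 1 ≤ m + 2 →
      Ψ.pair (T t) (Ψ.coroot (w (t+1))) = -1 := by
    intro t ht1 ht2
    have : Ψ.pair (T t) (Ψ.coroot (w (t+1)))
        = ∑ l ∈ Finset.Icc 1 t, Ψ.pair (w l) (Ψ.coroot (w (t+1))) := by
      rw [hT]
      simp only [map_sum, LinearMap.coe_sum, Finset.sum_apply]
    rw [this]
    have hsplit : ∑ l ∈ Finset.Icc 1 t, Ψ.pair (w l) (Ψ.coroot (w (t+1)))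
        = (∑ l ∈ Finset.Icc 1 (t-1), Ψ.pair (w l) (Ψ.coroot (w (t+1))))
          + Ψ.pair (w t) (Ψ.coroot (w (t+1))) := by
      have : t = (t - 1) + 1 := by omega
      rw [this, Finset.sum_Icc_succ_top (by omega)]
      congr 2 <;> omega
    rw [hsplit, hadj t (by omega)]
    have hz : ∑ l ∈ Finset.Icc 1 (t-1), Ψ.pair (w l) (Ψ.coroot (w (t+1))) = 0 := by
      refine Finset.sum_eq_zero fun l hl => ?_
      obtain ⟨hl1, hl2⟩ := Finset.mem_Icc.1 hl
      exact hchord l (t+1) (by omega) (by omega) (by omega) (by omega) (by omega)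
        (by omega) (by omega)
    rw [hz]; ring
  -- main induction: partial sums are roots of the same length
  have main : ∀ t, 1 ≤ t → t ≤ m + 2 →
      T t ∈ Ψ.roots ∧ BB Ψ (T t) (T t) = L := by
    intro t
    induction t with
    | zero => omega
    | succ t ih =>
        intro _ hle
        by_cases ht : t = 0
        · subst ht
          have h1 : T 1 = w 1 := by rw [hT]; simp
          rw [h1]
          exact ⟨hroots 1 (by omega), hlen 1 (by omega)⟩
        · obtain ⟨hTroot, hTlen⟩ := ih (by omega) (by omega)
          have hstep : T (t+1) = T t + w (t+1) := by
            rw [hT]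
            exact Finset.sum_Icc_succ_top (by omega) _
          have hp := hnext t (by omega) (by omega)
          have hrefl := Ψ.reflection_mem (w (t+1)) (hroots (t+1) (by omega)) (T t) hTroot
          rw [hp] at hrefl
          have : T t - (-1 : ℤ) • w (t+1) = T (t+1) := by rw [hstep]; module
          rw [this] at hrefl
          refine ⟨hrefl, ?_⟩
          -- length computation
          have e1 : BB Ψ (T (t+1)) (T (t+1))
              = BB Ψ (T t) (T t) + 2 * BB Ψ (T t) (w (t+1)) + BB Ψ (w (t+1)) (w (t+1)) := by
            rw [hstep, BB_add_left, BB_add_right, BB_add_right]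
            have := BB_symm Ψ (T t) (w (t+1))
            omega
          have e2 : 2 * BB Ψ (T t) (w (t+1)) = -L := by
            rw [two_mul_BB Ψ (w (t+1)) (hroots (t+1) (by omega)) (T t),
              hlen (t+1) (by omega), hp]
            ring
          rw [e1, hTlen, hlen (t+1) (by omega)]
          omega
  obtain ⟨hTroot, hTlen⟩ := main (m+2) (by omega) le_rfl
  -- pairing of the full sum with w 0, in both directions
  have hfull : Ψ.pair (T (m+2)) (Ψ.coroot (w 0)) = -2 := by
    have : Ψ.pair (T (m+2)) (Ψ.coroot (w 0))
        = ∑ l ∈ Finset.Icc 1 (m+2), Ψ.pair (w l) (Ψ.coroot (w 0)) := by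
      rw [hT]
      simp only [map_sum, LinearMap.coe_sum, Finset.sum_apply]
    rw [this]
    have h1 : ∀ l ∈ Finset.Icc 2 (m+1), Ψ.pair (w l) (Ψ.coroot (w 0)) = 0 := by
      intro l hl
      obtain ⟨hl1, hl2⟩ := Finset.mem_Icc.1 hl
      exact hchord l 0 (by omega) (by omega) (by omega) (by omega) (by omega)
        (by omega) (by omega)
    have hsplit : Finset.Icc 1 (m+2) = insert 1 (insert (m+2) (Finset.Icc 2 (m+1))) := by
      ext l
      simp only [Finset.mem_Icc, Finset.mem_insert]
      omega
    rw [hsplit, Finset.sum_insert, Finset.sum_insert]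
    · rw [hadj' 0 (by omega), hwrap, Finset.sum_eq_zero h1]
      ring
    · simp only [Finset.mem_Icc]; omega
    · simp only [Finset.mem_insert, Finset.mem_Icc]; omega
  have hfull' : Ψ.pair (w 0) (Ψ.coroot (T (m+2))) = -2 := by
    have e1 : 2 * BB Ψ (w 0) (T (m+2)) = -2 * L := by
      have : BB Ψ (w 0) (T (m+2)) = ∑ l ∈ Finset.Icc 1 (m+2), BB Ψ (w 0) (w l) := by
        rw [hT, BB_symm, BB_sum_left]
        exact Finset.sum_congr rfl fun l _ => BB_symm Ψ (w l) (w 0)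
      rw [this, Finset.mul_sum]
      have hterm : ∀ l ∈ Finset.Icc 1 (m+2), 2 * BB Ψ (w 0) (w l)
          = Ψ.pair (w 0) (Ψ.coroot (w l)) * L := by
        intro l hl
        obtain ⟨hl1, hl2⟩ := Finset.mem_Icc.1 hl
        rw [two_mul_BB Ψ (w l) (hroots l hl2) (w 0), hlen l hl2]
      rw [Finset.sum_congr rfl hterm, ← Finset.sum_mul]
      have : ∑ l ∈ Finset.Icc 1 (m+2), Ψ.pair (w 0) (Ψ.coroot (w l)) = -2 := by
        have h1 : ∀ l ∈ Finset.Icc 2 (m+1), Ψ.pair (w 0) (Ψ.coroot (w l)) = 0 := by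
          intro l hl
          obtain ⟨hl1, hl2⟩ := Finset.mem_Icc.1 hl
          exact hchord 0 l (by omega) (by omega) (by omega) (by omega) (by omega)
            (by omega) (by omega)
        have hsplit : Finset.Icc 1 (m+2) = insert 1 (insert (m+2) (Finset.Icc 2 (m+1))) := by
          ext l
          simp only [Finset.mem_Icc, Finset.mem_insert]
          omega
        rw [hsplit, Finset.sum_insert, Finset.sum_insert]
        · rw [hadj 0 (by omega), hwrap', Finset.sum_eq_zero h1]
          ring
        · simp only [Finset.mem_Icc]; omega
        · simp only [Finset.mem_insert, Finset.mem_Icc]; omega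
      rw [this]
    have e2 := two_mul_BB Ψ (T (m+2)) hTroot (w 0)
    rw [hTlen] at e2
    have : Ψ.pair (w 0) (Ψ.coroot (T (m+2))) * L = -2 * L := by omega
    exact mul_right_cancel₀ (ne_of_gt hLpos) this
  -- now the `-2/-2` lemma forces `w 0 + T (m+2) = 0`, contradicting `f ≠ 0`
  have hzero := pair_neg_two Ψ (w 0) (T (m+2)) (hroots 0 (by omega)) hTroot hfull' hfull
  have hfval : f (w 0 + T (m+2)) = ((m : ℝ) + 3) * f α := by
    rw [map_add, hT]
    have : f (∑ l ∈ Finset.Icc 1 (m+2), w l) = ∑ l ∈ Finset.Icc 1 (m+2), f (w l) :=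
      map_sum f _ _
    rw [this]
    have hconst : ∀ l ∈ Finset.Icc 1 (m+2), f (w l) = f α := by
      intro l hl
      obtain ⟨_, hl2⟩ := Finset.mem_Icc.1 hl
      exact f_orb_const Ψ A f hf2 (hmem l hl2)
    rw [Finset.sum_congr rfl hconst, Finset.sum_const, f_orb_const Ψ A f hf2 (hmem 0 (by omega))]
    have hcard : (Finset.Icc 1 (m+2)).card = m + 2 := by
      rw [Nat.card_Icc]; omega
    rw [hcard, nsmul_eq_mul]
    push_cast
    ring
  rw [hzero, map_zero] at hfval
  have hfα : f α ≠ 0 := hf1 α hα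
  have : (m : ℝ) + 3 > 0 := by positivity
  have := mul_ne_zero (ne_of_gt this) hfα
  exact this hfval.symm

end Cycle


section Path

open scoped Classical

variable {Γ : Type*} [Group Γ] (A : RootDatumActionP Ψ Γ)
variable {α : X} (hα : α ∈ Ψ.roots)
variable (f : X →ₗ[ℤ] ℝ) (hf1 : ∀ β ∈ Ψ.roots, f β ≠ 0) (hf2 : ∀ (γ : Γ) (x : X), f (A.ρ γ x) = f x)

/-- A chordless path in the orbit. -/
def GoodPath (α : X) (M : ℕ) (v : ℕ → X) : Prop :=
  (∀ i, i < M → v i ∈ orb Ψ A α) ∧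
  (∀ i j, i < j → j < M → v i ≠ v j) ∧
  (∀ i, i + 1 < M → Ψ.pair (v i) (Ψ.coroot (v (i+1))) = -1) ∧
  (∀ i j, i + 2 ≤ j → j < M → Ψ.pair (v i) (Ψ.coroot (v j)) = 0)

lemma GoodPath.le_card {α : X} {M : ℕ} {v : ℕ → X} (h : GoodPath Ψ A α M v) :
    M ≤ (orb Ψ A α).card := by
  have := Finset.card_le_card_of_injOn v (fun i hi => h.1 i (Finset.mem_range.1 hi))
    (fun i hi j hj hij => by
      by_contra hne
      rcases Nat.lt_or_ge i j with hlt | hge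
      · exact h.2.1 i j hlt (Finset.mem_coe.1 hj |> Finset.mem_range.1) hij
      · have hlt : j < i := lt_of_le_of_ne hge (fun h' => hne h'.symm)
        exact h.2.1 j i hlt (Finset.mem_coe.1 hi |> Finset.mem_range.1) hij.symm)
  simpa using this

include hα hf1 hf2 in
lemma pair_symm_orb {β β' : X} (hβ : β ∈ orb Ψ A α) (hβ' : β' ∈ orb Ψ A α) (hne : β ≠ β') :
    Ψ.pair β' (Ψ.coroot β) = Ψ.pair β (Ψ.coroot β') :=
  (orb_cross_pairing Ψ A hα f hf1 hf2 hβ hβ' hne).2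

include hα hf1 hf2 in
lemma pair_orb_cases {β β' : X} (hβ : β ∈ orb Ψ A α) (hβ' : β' ∈ orb Ψ A α) (hne : β ≠ β') :
    Ψ.pair β (Ψ.coroot β') = 0 ∨ Ψ.pair β (Ψ.coroot β') = -1 :=
  (orb_cross_pairing Ψ A hα f hf1 hf2 hβ hβ' hne).1

include hα hf1 hf2 in
lemma orbC_pos : 1 ≤ Ψ.pair α (orbN Ψ A α) := by
  by_contra hc
  have hc0 : Ψ.pair α (orbN Ψ A α) = 0 := le_antisymm (by omega) (orbC_nonneg Ψ A hα)
  set O := orb Ψ A α with hO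
  -- every orbit element has exactly two "partners"
  have hdeg : ∀ β ∈ O, (O.filter
      (fun β' => ¬ β' = β ∧ Ψ.pair β (Ψ.coroot β') = -1)).card = 2 := by
    intro β hβ
    have h2 := partner_card Ψ A hα f hf1 hf2 hβ
    rw [hc0, sub_zero] at h2
    exact_mod_cast h2
  set P : ℕ → Prop := fun M => ∃ v : ℕ → X, GoodPath Ψ A α M v with hP
  have hP1 : P 1 := ⟨fun _ => α, fun i _ => self_mem_orb Ψ A hα,
    fun i j hij hj => by omega, fun i h => by omega, fun i j hij hj => by omega⟩
  have hcard1 : 1 ≤ O.card := Finset.card_pos.2 ⟨α, self_mem_orb Ψ A hα⟩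
  set M := Nat.findGreatest P O.card with hM
  have hPM : P M := Nat.findGreatest_spec hcard1 hP1
  have hM1 : 1 ≤ M := Nat.le_findGreatest hcard1 hP1
  obtain ⟨v, hv⟩ := hPM
  set e := v (M - 1) with he
  have heO : e ∈ O := hv.1 (M-1) (by omega)
  -- pick a partner of `e` different from `v (M-2)`
  have htwo : 1 < (O.filter
      (fun β' => ¬ β' = e ∧ Ψ.pair e (Ψ.coroot β') = -1)).card := by
    rw [hdeg e heO]; omega
  obtain ⟨u₁, hu₁, u₂, hu₂, hu12⟩ := Finset.one_lt_card.1 htwo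
  obtain ⟨u, hu, huM2⟩ : ∃ u, (u ∈ O.filter
      (fun β' => ¬ β' = e ∧ Ψ.pair e (Ψ.coroot β') = -1)) ∧ (M < 2 ∨ u ≠ v (M - 2)) := by
    by_cases h : u₁ = v (M - 2)
    · exact ⟨u₂, hu₂, Or.inr (fun h' => hu12 (h.trans h'.symm))⟩
    · exact ⟨u₁, hu₁, Or.inr h⟩
  obtain ⟨huO, hune, hupair⟩ : u ∈ O ∧ ¬ u = e ∧ Ψ.pair e (Ψ.coroot u) = -1 := by
    have := Finset.mem_filter.1 hu
    exact ⟨this.1, this.2.1, this.2.2⟩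
  -- `u` is fresh
  have hfresh : ∀ i, i < M → v i ≠ u := by
    intro i hi hvi
    rcases Nat.lt_or_ge i (M - 1) with hlt | hge
    · rcases Nat.lt_or_ge i (M - 2) with hlt2 | hge2
      · -- chordless contradiction
        have h0 : Ψ.pair (v i) (Ψ.coroot (v (M-1))) = 0 := hv.2.2.2 i (M-1) (by omega) (by omega)
        have hsym : Ψ.pair u (Ψ.coroot e) = Ψ.pair e (Ψ.coroot u) :=
          pair_symm_orb Ψ A hα f hf1 hf2 heO huO (fun h => hune h.symm)
        rw [← he, hvi, hsym, hupair] at h0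
        exact absurd h0 (by norm_num)
      · have hieq : i = M - 2 := by omega
        rcases huM2 with h | h
        · omega
        · exact h (hieq ▸ hvi).symm
    · have : i = M - 1 := by omega
      exact hune ((this ▸ hvi).symm)
  -- the extended path cannot be good, so there is a chord to `u`
  have hnotP : ¬ P (M + 1) := by
    intro hPM1
    have hcopy := hPM1
    obtain ⟨v', hv'⟩ := hcopy
    exact Nat.findGreatest_is_greatest (by omega : M < M + 1) hv'.le_card hPM1
  set v' : ℕ → X := fun i => if i = M then u else v i with hv'def
  have hchordfail : ¬ (∀ i, i + 2 ≤ M → Ψ.pair (v i) (Ψ.coroot u) = 0) := by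
    intro hall
    refine hnotP ⟨v', ?_, ?_, ?_, ?_⟩
    · intro i hi
      by_cases h : i = M
      · simpa [hv'def, h] using huO
      · have : i < M := by omega
        simpa [hv'def, h] using hv.1 i this
    · intro i j hij hj
      by_cases h : j = M
      · have hiM : i ≠ M := by omega
        have : i < M := by omega
        simp only [hv'def, if_neg hiM, if_pos h]
        exact hfresh i this
      · have hjM : j < M := by omega
        have hiM : i ≠ M := by omega
        simp only [hv'def, if_neg hiM, if_neg h]
        exact hv.2.1 i j hij hjM
    · intro i hi
      by_cases h : i + 1 = M
      · have hiM : i ≠ M := by omega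
        simp only [hv'def, if_neg hiM, if_pos h]
        have : i = M - 1 := by omega
        rw [this, ← he]
        exact hupair
      · have hiM : i ≠ M := by omega
        simp only [hv'def, if_neg hiM, if_neg h]
        exact hv.2.2.1 i (by omega)
    · intro i j hij hj
      by_cases h : j = M
      · have hiM : i ≠ M := by omega
        simp only [hv'def, if_neg hiM, if_pos h]
        exact hall i (by omega)
      · have hiM : i ≠ M := by omega
        simp only [hv'def, if_neg hiM, if_neg h]
        exact hv.2.2.2 i j hij (by omega)
  push_neg at hchordfail
  obtain ⟨i', hi', hni'⟩ := hchordfail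
  -- the largest index with a chord to `u`
  set Q : ℕ → Prop := fun i => Ψ.pair (v i) (Ψ.coroot u) ≠ 0 with hQ
  set i₀ := Nat.findGreatest Q (M - 2) with hi₀
  have hQi₀ : Q i₀ := Nat.findGreatest_spec (by omega : i' ≤ M - 2) hni'
  have hi₀le : i₀ ≤ M - 2 := Nat.findGreatest_le _
  have hi₀max : ∀ i, i₀ < i → i ≤ M - 2 → Ψ.pair (v i) (Ψ.coroot u) = 0 := by
    intro i h1 h2
    by_contra hne
    exact Nat.findGreatest_is_greatest h1 h2 hne
  have hchordval : Ψ.pair (v i₀) (Ψ.coroot u) = -1 := by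
    rcases pair_orb_cases Ψ A hα f hf1 hf2 (hv.1 i₀ (by omega)) huO
      (hfresh i₀ (by omega)) with h | h
    · exact absurd h hQi₀
    · exact h
  -- build the cycle
  set m := M - i₀ - 2 with hm
  have hMi₀ : i₀ + m + 2 = M := by omega
  set w : ℕ → X := fun l => if l ≤ m + 1 then v (i₀ + l) else u with hw
  have hwmem : ∀ l, l ≤ m + 2 → w l ∈ O := by
    intro l hl
    by_cases h : l ≤ m + 1
    · simpa [hw, h] using hv.1 (i₀ + l) (by omega)
    · simpa [hw, h] using huO
  have hwv : ∀ l, l ≤ m + 1 → w l = v (i₀ + l) := by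
    intro l hl; simp [hw, hl]
  have hwu : w (m + 2) = u := by simp [hw]
  have hwne : ∀ l j, l ≤ m + 2 → j ≤ m + 2 → l ≠ j → w l ≠ w j := by
    intro l j hl hj hne
    by_cases h1 : l ≤ m + 1 <;> by_cases h2 : j ≤ m + 1
    · rw [hwv l h1, hwv j h2]
      rcases Nat.lt_or_ge l j with hlt | hge
      · exact hv.2.1 (i₀+l) (i₀+j) (by omega) (by omega)
      · exact (hv.2.1 (i₀+j) (i₀+l) (by omega) (by omega)).symm
    · have : j = m + 2 := by omega
      rw [hwv l h1, this, hwu]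
      exact hfresh (i₀ + l) (by omega)
    · have : l = m + 2 := by omega
      rw [hwv j h2, this, hwu]
      exact fun h => hfresh (i₀ + j) (by omega) h.symm
    · omega
  have hsymw : ∀ l j, l ≤ m + 2 → j ≤ m + 2 → l ≠ j →
      Ψ.pair (w j) (Ψ.coroot (w l)) = Ψ.pair (w l) (Ψ.coroot (w j)) := by
    intro l j hl hj hne
    exact pair_symm_orb Ψ A hα f hf1 hf2 (hwmem l hl) (hwmem j hj) (hwne l j hl hj hne)
  have hadj : ∀ l, l ≤ m + 1 → Ψ.pair (w l) (Ψ.coroot (w (l+1))) = -1 := by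
    intro l hl
    by_cases h : l + 1 ≤ m + 1
    · rw [hwv l (by omega), hwv (l+1) h]
      have : i₀ + (l + 1) = (i₀ + l) + 1 := by omega
      rw [this]
      exact hv.2.2.1 (i₀ + l) (by omega)
    · have hlm : l = m + 1 := by omega
      rw [hlm, hwv (m+1) (by omega)]
      have : (m + 1) + 1 = m + 2 := by omega
      rw [this, hwu]
      have : i₀ + (m + 1) = M - 1 := by omega
      rw [this, ← he]
      exact hupair
  have hadj' : ∀ l, l ≤ m + 1 → Ψ.pair (w (l+1)) (Ψ.coroot (w l)) = -1 := by
    intro l hl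
    rw [hsymw l (l+1) (by omega) (by omega) (by omega)]
    exact hadj l hl
  have hwrap' : Ψ.pair (w 0) (Ψ.coroot (w (m+2))) = -1 := by
    rw [hwv 0 (by omega), hwu]
    simpa using hchordval
  have hwrap : Ψ.pair (w (m+2)) (Ψ.coroot (w 0)) = -1 := by
    rw [← hsymw 0 (m+2) (by omega) (by omega) (by omega)] at hwrap'
    exact hwrap'
  have hchord : ∀ l j, l ≤ m+2 → j ≤ m+2 → j ≠ l → j ≠ l+1 → l ≠ j+1 →
      ¬(l = 0 ∧ j = m+2) → ¬(j = 0 ∧ l = m+2) → Ψ.pair (w l) (Ψ.coroot (w j)) = 0 := by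
    have key : ∀ l j, l < j → j ≤ m+2 → j ≠ l+1 → ¬(l = 0 ∧ j = m+2) →
        Ψ.pair (w l) (Ψ.coroot (w j)) = 0 := by
      intro l j hlj hj hne1 hnw
      by_cases h2 : j ≤ m + 1
      · rw [hwv l (by omega), hwv j h2]
        exact hv.2.2.2 (i₀ + l) (i₀ + j) (by omega) (by omega)
      · have hjm : j = m + 2 := by omega
        rw [hjm, hwu, hwv l (by omega)]
        have hl1 : 1 ≤ l := by omega
        exact hi₀max (i₀ + l) (by omega) (by omega)
    intro l j hl hj hne hne1 hne2 hnw1 hnw2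
    rcases Nat.lt_or_ge l j with hlt | hge
    · exact key l j hlt hj hne1 hnw1
    · have hlt : j < l := by omega
      rw [hsymw j l hj hl (by omega)]
      exact key j l hlt hl (fun h => hne2 h) hnw2
  exact cycle_contradiction Ψ A hα f hf1 hf2 m w hwmem hadj hadj' hwrap hwrap' hchord

end Path


section Nu

open scoped Classical

variable {Γ : Type*} [Group Γ] (A : RootDatumActionP Ψ Γ)
variable {α : X} (hα : α ∈ Ψ.roots)
variable (f : X →ₗ[ℤ] ℝ) (hf1 : ∀ β ∈ Ψ.roots, f β ≠ 0) (hf2 : ∀ (γ : Γ) (x : X), f (A.ρ γ x) = f x)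

include hα hf1 hf2 in
/-- The main construction: a `Γ`-invariant coweight `ν` with `⟨α, ν⟩ = 2` implementing the
reflection in `i*(α)` on the level of roots. -/
lemma exists_nu :
    ∃ ν : Xv, (∀ γ : Γ, A.ρv γ ν = ν) ∧ Ψ.pair α ν = 2 ∧
      ∀ b ∈ Ψ.roots, ∃ w ∈ Ψ.roots, ∃ coeffs : X → ℤ,
        w = b - ∑ β ∈ orb Ψ A α, coeffs β • β ∧
        (∑ β ∈ orb Ψ A α, coeffs β) = Ψ.pair b ν := by
  set O := orb Ψ A α with hO
  set c := Ψ.pair α (orbN Ψ A α) with hc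
  have hc1 : 1 ≤ c := orbC_pos Ψ A hα f hf1 hf2
  have hc2 : c ≤ 2 := orbC_le_two Ψ A hα f hf1 hf2
  have hdeg : ∀ β ∈ O, (((O.filter
      (fun β' => ¬ β' = β ∧ Ψ.pair β (Ψ.coroot β') = -1)).card : ℤ)) = 2 - c := by
    intro β hβ
    have h2 := partner_card Ψ A hα f hf1 hf2 hβ
    rw [← hc] at h2
    exact h2
  rcases (by omega : c = 2 ∨ c = 1) with hcase | hcase
  · -- orthogonal case
    have horth : ∀ β ∈ O, ∀ β' ∈ O, β' ≠ β → Ψ.pair β (Ψ.coroot β') = 0 := by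
      intro β hβ β' hβ' hne
      have hempty := hdeg β hβ
      rw [hcase, sub_self] at hempty
      have hz : (O.filter (fun β' => ¬ β' = β ∧ Ψ.pair β (Ψ.coroot β') = -1)) = ∅ :=
        Finset.card_eq_zero.1 (by exact_mod_cast hempty)
      rcases pair_orb_cases Ψ A hα f hf1 hf2 hβ hβ' (Ne.symm hne) with h | h
      · exact h
      · exfalso
        have : β' ∈ O.filter (fun β'' => ¬ β'' = β ∧ Ψ.pair β (Ψ.coroot β'') = -1) :=
          Finset.mem_filter.2 ⟨hβ', hne, h⟩
        rw [hz] at this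
        exact absurd this (Finset.notMem_empty β')
    refine ⟨orbN Ψ A α, fun γ => rhov_orbN Ψ A hα γ, by rw [← hc, hcase], ?_⟩
    intro b hb
    have key : ∀ S : Finset X, S ⊆ O →
        b - ∑ β ∈ S, Ψ.pair b (Ψ.coroot β) • β ∈ Ψ.roots := by
      intro S
      induction S using Finset.induction_on with
      | empty => intro _; simpa using hb
      | @insert β₀ S hβ₀S ih =>
          intro hsub
          have hβ₀O : β₀ ∈ O := hsub (Finset.mem_insert_self β₀ S)
          have hSO : S ⊆ O := fun x hx => hsub (Finset.mem_insert_of_mem hx)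
          set y := b - ∑ β ∈ S, Ψ.pair b (Ψ.coroot β) • β with hy
          have hyroots : y ∈ Ψ.roots := ih hSO
          have hpy : Ψ.pair y (Ψ.coroot β₀) = Ψ.pair b (Ψ.coroot β₀) := by
            have expand : Ψ.pair y (Ψ.coroot β₀) = Ψ.pair b (Ψ.coroot β₀)
                - ∑ β ∈ S, Ψ.pair b (Ψ.coroot β) * Ψ.pair β (Ψ.coroot β₀) := by
              rw [hy]
              simp only [map_sub, map_sum, map_smul, LinearMap.sub_apply, LinearMap.coe_sum,
                Finset.sum_apply, LinearMap.smul_apply, smul_eq_mul]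
            rw [expand]
            have hz : ∑ β ∈ S, Ψ.pair b (Ψ.coroot β) * Ψ.pair β (Ψ.coroot β₀) = 0 :=
              Finset.sum_eq_zero fun β hβS => by
                rw [horth β (hSO hβS) β₀ hβ₀O (Ne.symm (fun h => hβ₀S (by rw [← h]; exact hβS))),
                  mul_zero]
            rw [hz, sub_zero]
          have hrefl := Ψ.reflection_mem β₀ (orb_sub_roots Ψ A hβ₀O) y hyroots
          rw [hpy] at hrefl
          have : y - Ψ.pair b (Ψ.coroot β₀) • β₀
              = b - ∑ β ∈ insert β₀ S, Ψ.pair b (Ψ.coroot β) • β := by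
            rw [hy, Finset.sum_insert hβ₀S]
            abel
          rwa [this] at hrefl
    refine ⟨b - ∑ β ∈ O, Ψ.pair b (Ψ.coroot β) • β, key O (Finset.Subset.refl O),
      fun β => Ψ.pair b (Ψ.coroot β), rfl, (pair_orbN_expand Ψ A b).symm⟩
  · -- matched case
    have hone : ∀ β ∈ O, ∃ β'', (O.filter
        (fun β' => ¬ β' = β ∧ Ψ.pair β (Ψ.coroot β') = -1)) = {β''} := by
      intro β hβ
      have h := hdeg β hβ
      rw [hcase] at h
      exact Finset.card_eq_one.1 (by omega)
    have hone' : ∀ β : X, ∃ β'', β ∈ O → (O.filter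
        (fun β' => ¬ β' = β ∧ Ψ.pair β (Ψ.coroot β') = -1)) = {β''} := by
      intro β
      by_cases hβ : β ∈ O
      · obtain ⟨β'', h⟩ := hone β hβ
        exact ⟨β'', fun _ => h⟩
      · exact ⟨β, fun h => absurd h hβ⟩
    choose pr hpr using hone'
    have hprmem : ∀ β ∈ O, pr β ∈ O ∧ pr β ≠ β ∧ Ψ.pair β (Ψ.coroot (pr β)) = -1 := by
      intro β hβ
      have : pr β ∈ (O.filter
          (fun β' => ¬ β' = β ∧ Ψ.pair β (Ψ.coroot β') = -1)) := by
        rw [hpr β hβ]; exact Finset.mem_singleton_self _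
      obtain ⟨h1, h2, h3⟩ := Finset.mem_filter.1 this
      exact ⟨h1, h2, h3⟩
    have hprzero : ∀ β ∈ O, ∀ β' ∈ O, β' ≠ β → β' ≠ pr β → Ψ.pair β (Ψ.coroot β') = 0 := by
      intro β hβ β' hβ' hne hne'
      rcases pair_orb_cases Ψ A hα f hf1 hf2 hβ hβ' (Ne.symm hne) with h | h
      · exact h
      · exfalso
        have : β' ∈ (O.filter
            (fun β'' => ¬ β'' = β ∧ Ψ.pair β (Ψ.coroot β'') = -1)) :=
          Finset.mem_filter.2 ⟨hβ', hne, h⟩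
        rw [hpr β hβ] at this
        exact hne' (Finset.mem_singleton.1 this)
    have hprpr : ∀ β ∈ O, pr (pr β) = β := by
      intro β hβ
      obtain ⟨hprO, hprne, hprpair⟩ := hprmem β hβ
      have hsym : Ψ.pair (pr β) (Ψ.coroot β) = -1 := by
        rw [pair_symm_orb Ψ A hα f hf1 hf2 hβ hprO (Ne.symm hprne)]
        exact hprpair
      have : β ∈ (O.filter
          (fun β' => ¬ β' = pr β ∧ Ψ.pair (pr β) (Ψ.coroot β') = -1)) :=
        Finset.mem_filter.2 ⟨hβ, Ne.symm hprne, hsym⟩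
      rw [hpr (pr β) hprO] at this
      exact (Finset.mem_singleton.1 this).symm
    refine ⟨orbN Ψ A α + orbN Ψ A α, fun γ => by rw [map_add, rhov_orbN Ψ A hα γ],
      by rw [map_add, ← hc, hcase]; norm_num, ?_⟩
    intro b hb
    set coeffs : X → ℤ := fun β => Ψ.pair b (Ψ.coroot β) + Ψ.pair b (Ψ.coroot (pr β))
      with hcoeffs
    have key : ∀ (k : ℕ) (S : Finset X), S.card = k → S ⊆ O → (∀ β ∈ S, pr β ∈ S) →
        b - ∑ β ∈ S, coeffs β • β ∈ Ψ.roots := by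
      intro k
      induction k using Nat.strong_induction_on with
      | _ k ih =>
          intro S hcard hsub hstab
          rcases Nat.eq_zero_or_pos k with hk0 | hkpos
          · have : S = ∅ := Finset.card_eq_zero.1 (hk0 ▸ hcard)
            rw [this]
            simpa using hb
          · obtain ⟨β₀, hβ₀S⟩ := Finset.card_pos.1 (hcard ▸ hkpos)
            have hβ₀O : β₀ ∈ O := hsub hβ₀S
            set q₀ := pr β₀ with hq₀
            obtain ⟨hq₀O, hq₀ne, hpairβ₀q₀⟩ := hprmem β₀ hβ₀O
            rw [← hq₀] at hq₀O hq₀ne hpairβ₀q₀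
            have hq₀S : q₀ ∈ S := hstab β₀ hβ₀S
            have hpairq₀β₀ : Ψ.pair q₀ (Ψ.coroot β₀) = -1 := by
              rw [pair_symm_orb Ψ A hα f hf1 hf2 hβ₀O hq₀O (Ne.symm hq₀ne)]
              exact hpairβ₀q₀
            set S' := (S.erase β₀).erase q₀ with hS'
            have hq₀S' : q₀ ∉ S' := Finset.notMem_erase q₀ _
            have hβ₀S' : β₀ ∉ S' := fun h =>
              absurd (Finset.mem_of_mem_erase h) (Finset.notMem_erase β₀ S)
            have hS'subS : S' ⊆ S := fun x hx =>
              Finset.mem_of_mem_erase (Finset.mem_of_mem_erase hx)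
            have hS'sub : S' ⊆ O := fun x hx => hsub (hS'subS hx)
            have hS'stab : ∀ β ∈ S', pr β ∈ S' := by
              intro β hβ
              have hβS : β ∈ S := hS'subS hβ
              have hβO : β ∈ O := hsub hβS
              have hβneβ₀ : β ≠ β₀ := Finset.ne_of_mem_erase (Finset.mem_of_mem_erase hβ)
              have hβneq₀ : β ≠ q₀ := Finset.ne_of_mem_erase hβ
              have h1 : pr β ≠ β₀ := by
                intro h
                have : pr (pr β) = pr β₀ := by rw [h]
                rw [hprpr β hβO] at this
                exact hβneq₀ (by rw [hq₀, ← this])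
              have h2 : pr β ≠ q₀ := by
                intro h
                have h' : pr (pr β) = pr q₀ := by rw [h]
                rw [hprpr β hβO, hq₀, hprpr β₀ hβ₀O] at h'
                exact hβneβ₀ h'
              exact Finset.mem_erase.2 ⟨h2, Finset.mem_erase.2 ⟨h1, hstab β hβS⟩⟩
            have hq₀mem : q₀ ∈ S.erase β₀ := Finset.mem_erase.2 ⟨hq₀ne, hq₀S⟩
            have hcard' : S'.card = k - 2 := by
              rw [hS', Finset.card_erase_of_mem hq₀mem, Finset.card_erase_of_mem hβ₀S, hcard]
              omega
            have hk2 : 2 ≤ k := by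
              have := Finset.one_lt_card.2 ⟨β₀, hβ₀S, q₀, hq₀S, Ne.symm hq₀ne⟩
              omega
            have hy := ih (k-2) (by omega) S' hcard' hS'sub hS'stab
            set y := b - ∑ β ∈ S', coeffs β • β with hydef
            have hpapply : ∀ z : Xv, Ψ.pair y z
                = Ψ.pair b z - ∑ β ∈ S', coeffs β * Ψ.pair β z := by
              intro z
              rw [hydef]
              simp only [map_sub, map_sum, map_smul, LinearMap.sub_apply, LinearMap.coe_sum,
                Finset.sum_apply, LinearMap.smul_apply, smul_eq_mul]
            have horthS' : ∀ β ∈ S', Ψ.pair β (Ψ.coroot β₀) = 0 ∧ Ψ.pair β (Ψ.coroot q₀) = 0 := by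
              intro β hβ
              have hβO := hS'sub hβ
              have hβneβ₀ : β ≠ β₀ := Finset.ne_of_mem_erase (Finset.mem_of_mem_erase hβ)
              have hβneq₀ : β ≠ q₀ := Finset.ne_of_mem_erase hβ
              constructor
              · refine hprzero β hβO β₀ hβ₀O (Ne.symm hβneβ₀) ?_
                intro h
                have h2 : pr β₀ = β := by rw [h, hprpr β hβO]
                exact hβneq₀ (by rw [hq₀]; exact h2.symm)
              · refine hprzero β hβO q₀ hq₀O (Ne.symm hβneq₀) ?_
                intro h
                have h2 : pr q₀ = β := by rw [h, hprpr β hβO]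
                rw [hq₀, hprpr β₀ hβ₀O] at h2
                exact hβneβ₀ h2.symm
            have hzero_sum : ∀ z : Xv, (∀ β ∈ S', Ψ.pair β z = 0) →
                Ψ.pair y z = Ψ.pair b z := by
              intro z hz
              rw [hpapply z]
              have : ∑ β ∈ S', coeffs β * Ψ.pair β z = 0 :=
                Finset.sum_eq_zero fun β hβ => by rw [hz β hβ, mul_zero]
              rw [this, sub_zero]
            have hpy0 : Ψ.pair y (Ψ.coroot β₀) = Ψ.pair b (Ψ.coroot β₀) :=
              hzero_sum _ (fun β hβ => (horthS' β hβ).1)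
            have hpyq : Ψ.pair y (Ψ.coroot q₀) = Ψ.pair b (Ψ.coroot q₀) :=
              hzero_sum _ (fun β hβ => (horthS' β hβ).2)
            set p := Ψ.pair b (Ψ.coroot β₀) with hpdef
            set q := Ψ.pair b (Ψ.coroot q₀) with hqdef
            have hβ₀r : β₀ ∈ Ψ.roots := orb_sub_roots Ψ A hβ₀O
            have hq₀r : q₀ ∈ Ψ.roots := orb_sub_roots Ψ A hq₀O
            have h1 := Ψ.reflection_mem β₀ hβ₀r y hy
            rw [hpy0] at h1
            have hpair1 : Ψ.pair (y - p • β₀) (Ψ.coroot q₀) = q + p := by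
              simp only [map_sub, LinearMap.sub_apply, map_smul, LinearMap.smul_apply,
                smul_eq_mul]
              rw [hpyq, hpairβ₀q₀]
              ring
            have h2 := Ψ.reflection_mem q₀ hq₀r _ h1
            rw [hpair1] at h2
            have hpair2 : Ψ.pair (y - p • β₀ - (q + p) • q₀) (Ψ.coroot β₀) = q := by
              simp only [map_sub, LinearMap.sub_apply, map_smul, LinearMap.smul_apply,
                smul_eq_mul]
              rw [hpy0, Ψ.pair_coroot_self β₀ hβ₀r, hpairq₀β₀]
              ring
            have h3 := Ψ.reflection_mem β₀ hβ₀r _ h2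
            rw [hpair2] at h3
            have hSsplit : S = insert β₀ (insert q₀ S') := by
              rw [hS', Finset.insert_erase hq₀mem, Finset.insert_erase hβ₀S]
            have hβ₀notin : β₀ ∉ insert q₀ S' := by
              simp only [Finset.mem_insert]
              push_neg
              exact ⟨fun h => hq₀ne h.symm, hβ₀S'⟩
            have hsum : ∑ β ∈ S, coeffs β • β
                = coeffs β₀ • β₀ + (coeffs q₀ • q₀ + ∑ β ∈ S', coeffs β • β) := by
              rw [hSsplit, Finset.sum_insert hβ₀notin, Finset.sum_insert hq₀S']
            have hcoeffβ₀ : coeffs β₀ = p + q := by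
              simp only [hcoeffs]
              rfl
            have hcoeffq₀ : coeffs q₀ = q + p := by
              simp only [hcoeffs]
              have hprq₀ : pr q₀ = β₀ := by rw [hq₀, hprpr β₀ hβ₀O]
              rw [hprq₀]
            have hfinal : y - p • β₀ - (q + p) • q₀ - q • β₀
                = b - ∑ β ∈ S, coeffs β • β := by
              rw [hsum, hcoeffβ₀, hcoeffq₀, hydef]
              module
            rwa [hfinal] at h3
    refine ⟨b - ∑ β ∈ O, coeffs β • β,
      key O.card O rfl (Finset.Subset.refl O) (fun β hβ => (hprmem β hβ).1),
      coeffs, rfl, ?_⟩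
    rw [map_add]
    have hsplit : ∑ β ∈ O, coeffs β
        = (∑ β ∈ O, Ψ.pair b (Ψ.coroot β)) + ∑ β ∈ O, Ψ.pair b (Ψ.coroot (pr β)) := by
      simp only [hcoeffs]
      exact Finset.sum_add_distrib
    have hre : ∑ β ∈ O, Ψ.pair b (Ψ.coroot (pr β)) = ∑ β ∈ O, Ψ.pair b (Ψ.coroot β) := by
      refine Finset.sum_nbij' (i := pr) (j := pr) ?_ ?_ ?_ ?_ ?_
      · intro β hβ; exact (hprmem β hβ).1
      · intro β hβ; exact (hprmem β hβ).1
      · intro β hβ; exact hprpr β hβ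
      · intro β hβ; exact hprpr β hβ
      · intro β hβ; rfl
    rw [hsplit, hre, ← pair_orbN_expand]

end Nu


section Quotient

variable {Γ : Type*} [Group Γ] (A : RootDatumActionP Ψ Γ)
variable {N : Type*} [AddCommGroup N] [Module ℚ N]

lemma liftBC_lTensor (φ : X →ₗ[ℤ] N) (hφ : ∀ (γ : Γ) (x : X), φ (A.ρ γ x) = φ x) (γ : Γ)
    (v : ℚ ⊗[ℤ] X) :
    LinearMap.liftBaseChange ℚ φ (LinearMap.lTensor ℚ (A.ρ γ).toLinearMap v)
      = LinearMap.liftBaseChange ℚ φ v := by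
  induction v using TensorProduct.induction_on with
  | zero => simp
  | tmul r x =>
      rw [LinearMap.lTensor_tmul, LinearMap.liftBaseChange_tmul,
        LinearMap.liftBaseChange_tmul]
      show r • φ (A.ρ γ x) = r • φ x
      rw [hφ γ x]
  | add v w ihv ihw => simp only [map_add, ihv, ihw]

lemma liftBC_ker (φ : X →ₗ[ℤ] N) (hφ : ∀ (γ : Γ) (x : X), φ (A.ρ γ x) = φ x) :
    A.coinvKer ≤ LinearMap.ker (LinearMap.liftBaseChange ℚ φ) := by
  rw [RootDatumActionP.coinvKer, Submodule.span_le]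
  rintro w ⟨γ, v, rfl⟩
  rw [SetLike.mem_coe, LinearMap.mem_ker, map_sub, liftBC_lTensor Ψ A φ hφ γ v, sub_self]

/-- The induced functional on the coinvariant space. -/
noncomputable def liftCoinvQ (φ : X →ₗ[ℤ] N) (hφ : ∀ (γ : Γ) (x : X), φ (A.ρ γ x) = φ x) :
    ((ℚ ⊗[ℤ] X) ⧸ A.coinvKer) →ₗ[ℚ] N :=
  Submodule.liftQ A.coinvKer (LinearMap.liftBaseChange ℚ φ) (liftBC_ker Ψ A φ hφ)

lemma liftCoinvQ_istar (φ : X →ₗ[ℤ] N) (hφ : ∀ (γ : Γ) (x : X), φ (A.ρ γ x) = φ x) (x : X) :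
    liftCoinvQ Ψ A φ hφ (A.istar x) = φ x := by
  unfold liftCoinvQ RootDatumActionP.istar
  rw [Submodule.liftQ_apply, LinearMap.liftBaseChange_tmul, one_smul]

lemma istar_add (x y : X) : A.istar (x + y) = A.istar x + A.istar y := by
  unfold RootDatumActionP.istar
  rw [TensorProduct.tmul_add, Submodule.Quotient.mk_add]

lemma istar_sub (x y : X) : A.istar (x - y) = A.istar x - A.istar y := by
  unfold RootDatumActionP.istar
  rw [TensorProduct.tmul_sub, Submodule.Quotient.mk_sub]

lemma istar_zsmul (k : ℤ) (x : X) : A.istar (k • x) = k • A.istar x := by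
  unfold RootDatumActionP.istar
  rw [TensorProduct.tmul_smul]
  rfl

lemma istar_sum {ι : Type*} (s : Finset ι) (g : ι → X) :
    A.istar (∑ i ∈ s, g i) = ∑ i ∈ s, A.istar (g i) := by
  classical
  induction s using Finset.induction_on with
  | empty =>
      simp only [Finset.sum_empty]
      unfold RootDatumActionP.istar
      rw [TensorProduct.tmul_zero, Submodule.Quotient.mk_zero]
  | @insert i s his ih =>
      rw [Finset.sum_insert his, Finset.sum_insert his, istar_add Ψ A, ih]

lemma istar_orb {α β : X} (hβ : β ∈ orb Ψ A α) : A.istar β = A.istar α := by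
  obtain ⟨_, γ, rfl⟩ := (mem_orb Ψ A).1 hβ
  have hmem : (1:ℚ) ⊗ₜ[ℤ] (A.ρ γ α) - (1:ℚ) ⊗ₜ[ℤ] α ∈ A.coinvKer := by
    refine Submodule.subset_span ⟨γ, (1:ℚ) ⊗ₜ[ℤ] α, ?_⟩
    rw [LinearMap.lTensor_tmul]
    rfl
  unfold RootDatumActionP.istar
  exact (Submodule.Quotient.eq _).2 hmem

end Quotient

end StatementAux

/-- Let `Γ` be a finite group acting quasisemisimply on a root datum `Ψ`, and
put `Φ := i* '' Φ̃ ⊆ V_Γ`.  Then `Φ` is a (possibly non-reduced) root system: `0 ∉ Φ`, and for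
every `a ∈ Φ` there is a `ℚ`-linear functional `a^∨` on `V_Γ` with `⟨a, a^∨⟩ = 2`, taking
integer values on `Φ`, whose associated reflection maps `Φ` bijectively onto `Φ`. -/
theorem statement1 {X Xv : Type*} [AddCommGroup X] [AddCommGroup Xv]
    (Ψ : RootDatumP X Xv) {Γ : Type*} [Group Γ] [Finite Γ]
    (A : RootDatumActionP Ψ Γ) (hqss : A.IsQuasisemisimple) :
    ((0 : (ℚ ⊗[ℤ] X) ⧸ A.coinvKer) ∉ A.istar '' (↑Ψ.roots : Set X)) ∧
    ∀ a ∈ A.istar '' (↑Ψ.roots : Set X),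
      ∃ acov : ((ℚ ⊗[ℤ] X) ⧸ A.coinvKer) →ₗ[ℚ] ℚ,
        acov a = 2 ∧
        (∀ b ∈ A.istar '' (↑Ψ.roots : Set X), ∃ n : ℤ, acov b = (n : ℚ)) ∧
        Set.BijOn (fun x => x - acov x • a)
          (A.istar '' (↑Ψ.roots : Set X)) (A.istar '' (↑Ψ.roots : Set X)) := by
  classical
  obtain ⟨f, hf1, hf2⟩ := hqss
  constructor
  · rintro ⟨b, hb, hb0⟩
    have hbr : b ∈ Ψ.roots := hb
    have hF := StatementAux.liftCoinvQ_istar Ψ A f hf2 b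
    rw [hb0, map_zero] at hF
    exact hf1 b hbr hF.symm
  · rintro a ⟨α, hαs, rfl⟩
    have hα : α ∈ Ψ.roots := hαs
    obtain ⟨ν, hνinv, hνα, hνrefl⟩ := StatementAux.exists_nu Ψ A hα f hf1 hf2
    set φν : X →ₗ[ℤ] ℚ := (Int.castAddHom ℚ).toIntLinearMap.comp (Ψ.pair.flip ν) with hφν
    have hφνapp : ∀ x, φν x = ((Ψ.pair x ν : ℤ) : ℚ) := fun x => rfl
    have hφνinv : ∀ (γ : Γ) (x : X), φν (A.ρ γ x) = φν x := by
      intro γ x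
      rw [hφνapp, hφνapp]
      norm_cast
      conv_lhs => rw [← hνinv γ]
      exact A.pair_invariant γ x ν
    set acov := StatementAux.liftCoinvQ Ψ A φν hφνinv with hacovdef
    have hai : ∀ x : X, acov (A.istar x) = ((Ψ.pair x ν : ℤ) : ℚ) := fun x =>
      StatementAux.liftCoinvQ_istar Ψ A φν hφνinv x
    have haa : acov (A.istar α) = 2 := by rw [hai, hνα]; norm_num
    refine ⟨acov, haa, ?_, ?_⟩
    · rintro b ⟨bt, hbt, rfl⟩
      exact ⟨Ψ.pair bt ν, hai bt⟩
    · have hmaps : Set.MapsTo (fun x => x - acov x • A.istar α)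
          (A.istar '' (↑Ψ.roots : Set X)) (A.istar '' (↑Ψ.roots : Set X)) := by
        rintro b ⟨bt, hbts, rfl⟩
        have hbt : bt ∈ Ψ.roots := hbts
        obtain ⟨w, hw, coeffs, hweq, hsum⟩ := hνrefl bt hbt
        refine ⟨w, hw, ?_⟩
        rw [hweq, StatementAux.istar_sub Ψ A, StatementAux.istar_sum Ψ A]
        have hterm : ∀ β ∈ StatementAux.orb Ψ A α, A.istar (coeffs β • β) = coeffs β • A.istar α := by
          intro β hβ
          rw [StatementAux.istar_zsmul Ψ A, StatementAux.istar_orb Ψ A hβ]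
        rw [Finset.sum_congr rfl hterm, ← Finset.sum_smul, hsum]
        show A.istar bt - (Ψ.pair bt ν) • A.istar α
          = A.istar bt - acov (A.istar bt) • A.istar α
        rw [hai bt, Int.cast_smul_eq_zsmul]
      have hinvol : ∀ x, (fun x => x - acov x • A.istar α)
          ((fun x => x - acov x • A.istar α) x) = x := by
        intro x
        show (x - acov x • A.istar α) - acov (x - acov x • A.istar α) • A.istar α = x
        have h2 : acov (x - acov x • A.istar α) = - acov x := by
          rw [map_sub, map_smul, haa, smul_eq_mul]
          ring
        rw [h2]
        module
      have hinvol' : Function.LeftInverse (fun x => x - acov x • A.istar α)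
          (fun x => x - acov x • A.istar α) := hinvol
      have hinj : Function.Injective (fun x => x - acov x • A.istar α) :=
        Function.LeftInverse.injective hinvol'
      exact ⟨hmaps, fun x _ y _ hxy => hinj hxy,
        fun b hb => ⟨(fun x => x - acov x • A.istar α) b, hmaps hb, hinvol b⟩⟩
end

section
/- Let Γ be a finite group acting quasisemisimply on a root datum Ψ̃ = (X̃, Φ̃, X̃^∨, Φ̃^∨). Suppose α̃, β̃₀ ∈ Φ̃ are such that i*(α̃) + i*(β̃₀) lies in i*(Φ̃). Then there exists β̃ ∈ Φ̃ with i*(β̃) = i*(β̃₀) and α̃ + β̃ ∈ Φ̃. -/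
open scoped TensorProduct

namespace RDAux

variable {X Xv : Type*} [AddCommGroup X] [AddCommGroup Xv] (Ψ : RootDatumP X Xv)

/-- The canonical semidefinite bilinear form built from the coroots. -/
def B (x y : X) : ℤ := ∑ c ∈ Ψ.coroots, Ψ.pair x c * Ψ.pair y c

lemma B_symm (x y : X) : B Ψ x y = B Ψ y x := by
  unfold B; congr 1; ext c; ring

lemma B_self_nonneg (x : X) : 0 ≤ B Ψ x x :=
  Finset.sum_nonneg fun c _ => mul_self_nonneg _

lemma pair_eq_zero_of_B_self_eq_zero {x : X} (h : B Ψ x x = 0) :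
    ∀ c ∈ Ψ.coroots, Ψ.pair x c = 0 := by
  intro c hc
  have := (Finset.sum_eq_zero_iff_of_nonneg (fun c _ => mul_self_nonneg (Ψ.pair x c))).1 h c hc
  exact mul_self_eq_zero.1 this

lemma coroot_mem {α : X} (hα : α ∈ Ψ.roots) : Ψ.coroot α ∈ Ψ.coroots :=
  Ψ.coroot_bijOn.mapsTo hα

lemma B_root_pos {α : X} (hα : α ∈ Ψ.roots) : 0 < B Ψ α α := by
  have h4 : (4 : ℤ) ≤ B Ψ α α := by
    unfold B
    calc (4 : ℤ) = Ψ.pair α (Ψ.coroot α) * Ψ.pair α (Ψ.coroot α) := by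
          rw [Ψ.pair_coroot_self α hα]; norm_num
      _ ≤ ∑ c ∈ Ψ.coroots, Ψ.pair α c * Ψ.pair α c :=
          Finset.single_le_sum (f := fun c => Ψ.pair α c * Ψ.pair α c) (fun c _ => mul_self_nonneg _) (coroot_mem Ψ hα)
  linarith

lemma neg_mem_roots {α : X} (hα : α ∈ Ψ.roots) : -α ∈ Ψ.roots := by
  have := Ψ.reflection_mem α hα α hα
  rw [Ψ.pair_coroot_self α hα] at this
  convert this using 1
  rw [two_smul]
  abel

lemma B_add_left (x y z : X) : B Ψ (x + y) z = B Ψ x z + B Ψ y z := by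
  unfold B
  rw [← Finset.sum_add_distrib]
  congr 1; ext c
  rw [map_add, LinearMap.add_apply, add_mul]

lemma B_neg_left (x z : X) : B Ψ (-x) z = -B Ψ x z := by
  unfold B
  rw [← Finset.sum_neg_distrib]
  congr 1; ext c
  rw [map_neg, LinearMap.neg_apply, neg_mul]

lemma B_sub_left (x y z : X) : B Ψ (x - y) z = B Ψ x z - B Ψ y z := by
  rw [sub_eq_add_neg, B_add_left, B_neg_left, sub_eq_add_neg]

lemma B_smul_left (n : ℤ) (x z : X) : B Ψ (n • x) z = n * B Ψ x z := by
  unfold B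
  rw [Finset.mul_sum]
  congr 1; ext c
  rw [map_smul, LinearMap.smul_apply, smul_eq_mul]; ring

/-- Invariance of `B` under the reflection in a root. -/
lemma B_reflect {α : X} (hα : α ∈ Ψ.roots) (x y : X) :
    B Ψ (x - Ψ.pair x (Ψ.coroot α) • α) (y - Ψ.pair y (Ψ.coroot α) • α) = B Ψ x y := by
  have hσmem : ∀ c ∈ Ψ.coroots, c - Ψ.pair α c • Ψ.coroot α ∈ Ψ.coroots :=
    Ψ.coreflection_mem α hα
  have hpairσ : ∀ c : Xv, Ψ.pair α (c - Ψ.pair α c • Ψ.coroot α) = -Ψ.pair α c := by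
    intro c
    rw [map_sub, map_smul, Ψ.pair_coroot_self α hα]
    simp only [smul_eq_mul]
    ring
  have hσσ : ∀ c ∈ Ψ.coroots,
      (c - Ψ.pair α c • Ψ.coroot α) - Ψ.pair α (c - Ψ.pair α c • Ψ.coroot α) • Ψ.coroot α
        = c := by
    intro c _
    rw [hpairσ c, neg_smul]
    abel
  have key : ∀ (z : X) (c : Xv), Ψ.pair (z - Ψ.pair z (Ψ.coroot α) • α) c
      = Ψ.pair z (c - Ψ.pair α c • Ψ.coroot α) := by
    intro z c
    rw [map_sub, map_smul, LinearMap.sub_apply, LinearMap.smul_apply, map_sub, map_smul]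
    simp only [smul_eq_mul]
    ring
  unfold B
  exact Finset.sum_nbij' (fun c => c - Ψ.pair α c • Ψ.coroot α)
    (fun c => c - Ψ.pair α c • Ψ.coroot α) hσmem hσmem hσσ hσσ
    (fun c _ => by rw [key x c, key y c])

/-- `2 B(x, α) = ⟨x, α∨⟩ B(α, α)`. -/
lemma two_mul_B {α : X} (hα : α ∈ Ψ.roots) (x : X) :
    2 * B Ψ x α = Ψ.pair x (Ψ.coroot α) * B Ψ α α := by
  have h := B_reflect Ψ hα x α
  have hsα : α - Ψ.pair α (Ψ.coroot α) • α = -α := by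
    rw [Ψ.pair_coroot_self α hα, two_smul]; abel
  rw [hsα] at h
  have e1 : B Ψ (x - Ψ.pair x (Ψ.coroot α) • α) (-α)
      = -(B Ψ x α - Ψ.pair x (Ψ.coroot α) * B Ψ α α) := by
    rw [B_symm, B_neg_left, B_symm, B_sub_left, B_smul_left]
  rw [e1] at h
  linarith

/-- If the conditions of the degenerate rank-one situation hold, there are infinitely many
roots: contradiction. -/
lemma no_degenerate {α β : X} (hα : α ∈ Ψ.roots) (hβ : β ∈ Ψ.roots)
    (hn : Ψ.pair β (Ψ.coroot α) = 2) (hm : Ψ.pair α (Ψ.coroot β) = 2)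
    (hw : ∀ c ∈ Ψ.coroots, Ψ.pair (α - β) c = 0) (hne : α ≠ β) : False := by
  haveI := Ψ.free_X
  set w : X := α - β with hwdef
  have hw0 : w ≠ 0 := sub_ne_zero.2 hne
  have hwα : Ψ.pair w (Ψ.coroot α) = 0 := hw _ (coroot_mem Ψ hα)
  have hwβ : Ψ.pair w (Ψ.coroot β) = 0 := hw _ (coroot_mem Ψ hβ)
  set g : ℕ → X := fun k => α - ((2 * k : ℤ)) • w with hgdef
  have hgmem : ∀ k, g k ∈ Ψ.roots := by
    intro k
    induction k with
    | zero => simpa [hgdef] using hα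
    | succ k ihk =>
      have hp1 : Ψ.pair (g k) (Ψ.coroot α) = 2 := by
        simp only [hgdef, map_sub, map_smul, LinearMap.sub_apply, LinearMap.smul_apply,
          smul_eq_mul, hwα, Ψ.pair_coroot_self α hα]
        ring
      have h1 := Ψ.reflection_mem α hα (g k) ihk
      rw [hp1] at h1
      have hp2 : Ψ.pair (g k - (2 : ℤ) • α) (Ψ.coroot β) = -2 := by
        simp only [hgdef, map_sub, map_smul, LinearMap.sub_apply, LinearMap.smul_apply,
          smul_eq_mul, hwβ, hm]
        ring
      have h2 := Ψ.reflection_mem β hβ _ h1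
      rw [hp2] at h2
      have : g k - (2 : ℤ) • α - (-2 : ℤ) • β = g (k + 1) := by
        simp only [hgdef, hwdef]
        push_cast
        module
      rwa [this] at h2
  have hginj : Function.Injective g := by
    intro k l hkl
    simp only [hgdef, sub_right_inj] at hkl
    have : ((2 * k : ℤ) - (2 * l : ℤ)) • w = 0 := by rw [sub_smul, hkl, sub_self]
    rcases smul_eq_zero.1 this with h | h
    · omega
    · exact absurd h hw0
  exact (Set.infinite_of_injective_forall_mem hginj
      (fun k => (hgmem k : g k ∈ Ψ.roots))) Ψ.roots.finite_toSet

/-- Key root-system fact: if `⟨β, α∨⟩ > 0` and `β ≠ α` then `β - α` is a root. -/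
lemma root_sub_root {α β : X} (hα : α ∈ Ψ.roots) (hβ : β ∈ Ψ.roots)
    (hpos : 0 < Ψ.pair β (Ψ.coroot α)) (hne : β ≠ α) : β - α ∈ Ψ.roots := by
  have hA := B_root_pos Ψ hα
  have hC := B_root_pos Ψ hβ
  have h2n : 2 * B Ψ β α = Ψ.pair β (Ψ.coroot α) * B Ψ α α := two_mul_B Ψ hα β
  have h2m : 2 * B Ψ α β = Ψ.pair α (Ψ.coroot β) * B Ψ β β := two_mul_B Ψ hβ α
  have hq : B Ψ α β = B Ψ β α := B_symm Ψ α β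
  have hmpos : 0 < Ψ.pair α (Ψ.coroot β) := by nlinarith
  by_cases hn1 : Ψ.pair β (Ψ.coroot α) = 1
  · have h := Ψ.reflection_mem α hα β hβ
    rw [hn1, one_smul] at h
    exact h
  by_cases hm1 : Ψ.pair α (Ψ.coroot β) = 1
  · have h := Ψ.reflection_mem β hβ α hα
    rw [hm1, one_smul] at h
    have := neg_mem_roots Ψ h
    rwa [neg_sub] at this
  have hn2 : 2 ≤ Ψ.pair β (Ψ.coroot α) := by omega
  have hm2 : 2 ≤ Ψ.pair α (Ψ.coroot β) := by omega
  -- Cauchy–Schwarz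
  have hBv : 0 ≤ B Ψ (B Ψ β β • α - B Ψ α β • β) (B Ψ β β • α - B Ψ α β • β) :=
    B_self_nonneg Ψ _
  have hexp : B Ψ (B Ψ β β • α - B Ψ α β • β) (B Ψ β β • α - B Ψ α β • β)
      = B Ψ β β * (B Ψ β β * B Ψ α α - B Ψ α β * B Ψ α β) := by
    rw [B_sub_left, B_smul_left, B_smul_left]
    have e1 : B Ψ α (B Ψ β β • α - B Ψ α β • β)
        = B Ψ β β * B Ψ α α - B Ψ α β * B Ψ β α := by
      rw [B_symm, B_sub_left, B_smul_left, B_smul_left]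
    have e2 : B Ψ β (B Ψ β β • α - B Ψ α β • β)
        = B Ψ β β * B Ψ α β - B Ψ α β * B Ψ β β := by
      rw [B_symm, B_sub_left, B_smul_left, B_smul_left, B_symm Ψ α β]
    rw [e1, e2, hq]
    ring
  rw [hexp] at hBv
  have hCS : B Ψ α β * B Ψ α β ≤ B Ψ β β * B Ψ α α := by nlinarith
  have e : (2 * B Ψ β α) * (2 * B Ψ α β)
      = (Ψ.pair β (Ψ.coroot α) * B Ψ α α) * (Ψ.pair α (Ψ.coroot β) * B Ψ β β) := by
    rw [h2n, h2m]
  have h4 : Ψ.pair β (Ψ.coroot α) * Ψ.pair α (Ψ.coroot β) * (B Ψ α α * B Ψ β β)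
      = 4 * (B Ψ α β * B Ψ α β) := by
    linear_combination (-1 : ℤ) * e - 4 * B Ψ α β * hq
  have hACpos : 0 < B Ψ α α * B Ψ β β := mul_pos hA hC
  have hnm4 : Ψ.pair β (Ψ.coroot α) * Ψ.pair α (Ψ.coroot β) ≤ 4 := by nlinarith
  have hnle : Ψ.pair β (Ψ.coroot α) ≤ 2 := by nlinarith
  have hmle : Ψ.pair α (Ψ.coroot β) ≤ 2 := by nlinarith
  have hn : Ψ.pair β (Ψ.coroot α) = 2 := le_antisymm hnle hn2
  have hm : Ψ.pair α (Ψ.coroot β) = 2 := le_antisymm hmle hm2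
  have hqA : B Ψ α β = B Ψ α α := by rw [hn] at h2n; omega
  have hqC : B Ψ α β = B Ψ β β := by rw [hm] at h2m; omega
  have hwzero : B Ψ (β - α) (β - α) = 0 := by
    have e1 : B Ψ (β - α) (β - α) = B Ψ (β - α) β - B Ψ (β - α) α := by
      rw [B_symm, B_sub_left, B_symm Ψ β (β - α), B_symm Ψ α (β - α)]
    rw [e1, B_sub_left, B_sub_left, hq]
    omega
  have hw := pair_eq_zero_of_B_self_eq_zero Ψ hwzero
  exact absurd (no_degenerate Ψ hβ hα hm hn hw hne) id

lemma root_add_root {α β : X} (hα : α ∈ Ψ.roots) (hβ : β ∈ Ψ.roots)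
    (hneg : Ψ.pair β (Ψ.coroot α) < 0) (hne : β ≠ -α) : α + β ∈ Ψ.roots := by
  have hβ' : -β ∈ Ψ.roots := neg_mem_roots Ψ hβ
  have h1 : 0 < Ψ.pair (-β) (Ψ.coroot α) := by rw [map_neg, LinearMap.neg_apply]; omega
  have h2 : (-β : X) ≠ α := fun h => hne (by rw [← h]; abel)
  have := root_sub_root Ψ hα hβ' h1 h2
  have := neg_mem_roots Ψ this
  convert this using 1; abel

/-- Descent: a nonempty multiset of roots on which `f` is positive cannot have a sum pairing
to zero against all coroots of roots. -/
lemma descent (f : X →ₗ[ℤ] ℝ) :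
    ∀ (n : ℕ) (M : Multiset X), M.card = n + 1 →
    (∀ x ∈ M, x ∈ Ψ.roots ∧ 0 < f x) →
    (∀ β ∈ Ψ.roots, Ψ.pair M.sum (Ψ.coroot β) = 0) → False := by
  classical
  intro n
  induction n with
  | zero =>
    intro M hcard hmem hzero
    obtain ⟨a, rfl⟩ := Multiset.card_eq_one.1 hcard
    have ha := hmem a (by simp)
    have h0 := hzero a ha.1
    rw [Multiset.sum_singleton, Ψ.pair_coroot_self a ha.1] at h0
    omega
  | succ n ih =>
    intro M hcard hmem hzero
    have hM : M ≠ 0 := by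
      intro h; rw [h] at hcard; simp at hcard
    obtain ⟨a, ha⟩ := Multiset.exists_mem_of_ne_zero hM
    have hMeq : a ::ₘ M.erase a = M := Multiset.cons_erase ha
    set M' := M.erase a with hM'def
    have haroot := (hmem a ha).1
    have hsum0 : Ψ.pair M.sum (Ψ.coroot a) = 0 := hzero a haroot
    have hMsum : M.sum = a + M'.sum := by rw [← hMeq, Multiset.sum_cons]
    have hM'sum : Ψ.pair M'.sum (Ψ.coroot a) = -2 := by
      rw [hMsum, map_add, LinearMap.add_apply, Ψ.pair_coroot_self a haroot] at hsum0
      omega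
    have hex : ∃ x ∈ M', Ψ.pair x (Ψ.coroot a) < 0 := by
      by_contra hcon
      push_neg at hcon
      have hms : Ψ.pair M'.sum (Ψ.coroot a)
          = (M'.map (fun x => Ψ.pair x (Ψ.coroot a))).sum := by
        have := map_multiset_sum (Ψ.pair.flip (Ψ.coroot a)) M'
        exact this
      have : (0 : ℤ) ≤ (M'.map (fun x => Ψ.pair x (Ψ.coroot a))).sum := by
        apply Multiset.sum_nonneg
        intro z hz
        obtain ⟨x, hx, rfl⟩ := Multiset.mem_map.1 hz
        exact hcon x hx
      omega
    obtain ⟨x, hxM', hxneg⟩ := hex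
    have hxM : x ∈ M := by rw [← hMeq]; exact Multiset.mem_cons_of_mem hxM'
    have hxmem := hmem x hxM
    have hxa : x ≠ -a := by
      intro h
      have h1 := hxmem.2
      rw [h, map_neg] at h1
      have h2 := (hmem a ha).2
      linarith
    have hadd : a + x ∈ Ψ.roots := root_add_root Ψ haroot hxmem.1 hxneg hxa
    have hM'eq : x ::ₘ M'.erase x = M' := Multiset.cons_erase hxM'
    refine ih ((a + x) ::ₘ M'.erase x) ?_ ?_ ?_
    · have c1 : M'.card + 1 = n + 1 + 1 := by
        rw [← hMeq] at hcard
        rw [Multiset.card_cons] at hcard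
        omega
      have c2 : (M'.erase x).card + 1 = M'.card :=
        Multiset.card_erase_add_one hxM' 
      rw [Multiset.card_cons]
      omega
    · intro y hy
      rcases Multiset.mem_cons.1 hy with h | h
      · subst h
        refine ⟨hadd, ?_⟩
        rw [map_add]
        have := (hmem a ha).2
        have := hxmem.2
        positivity
      · have hyM' : y ∈ M' := Multiset.mem_of_mem_erase h
        have : y ∈ M := by rw [← hMeq]; exact Multiset.mem_cons_of_mem hyM'
        exact hmem y this
    · intro β hβmem
      have hM's : M'.sum = x + (M'.erase x).sum := by
        conv_lhs => rw [← hM'eq]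
        rw [Multiset.sum_cons]
      have hsameSum : ((a + x) ::ₘ M'.erase x).sum = M.sum := by
        rw [Multiset.sum_cons, hMsum, hM's]
        abel
      rw [hsameSum]
      exact hzero β hβmem

end RDAux

namespace RDAux
variable {X Xv : Type*} [AddCommGroup X] [AddCommGroup Xv] {Ψ : RootDatumP X Xv}

lemma B_zero_left (y : X) : B Ψ 0 y = 0 := by
  simp [B]

lemma B_add_right (x y z : X) : B Ψ x (y + z) = B Ψ x y + B Ψ x z := by
  rw [B_symm, B_add_left, B_symm Ψ y x, B_symm Ψ z x]

lemma B_left_sum {ι : Type*} (s : Finset ι) (h : ι → X) (y : X) :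
    B Ψ (∑ i ∈ s, h i) y = ∑ i ∈ s, B Ψ (h i) y := by
  induction s using Finset.cons_induction with
  | empty => simp [B_zero_left]
  | cons i s his ih => rw [Finset.sum_cons, Finset.sum_cons, B_add_left, ih]

section Action

variable {Γ : Type*} [Group Γ] (A : RootDatumActionP Ψ Γ)

lemma rho_mul_apply (g h : Γ) (x : X) : A.ρ (g * h) x = A.ρ g (A.ρ h x) := by
  rw [map_mul]; rfl

lemma rho_inv_apply (g : Γ) (x : X) : A.ρ g⁻¹ (A.ρ g x) = x := by
  rw [← rho_mul_apply, inv_mul_cancel, map_one]; rfl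

lemma rho_inv_apply' (g : Γ) (x : X) : A.ρ g (A.ρ g⁻¹ x) = x := by
  rw [← rho_mul_apply, mul_inv_cancel, map_one]; rfl

lemma rhov_mul_apply (g h : Γ) (y : Xv) : A.ρv (g * h) y = A.ρv g (A.ρv h y) := by
  rw [map_mul]; rfl

lemma rhov_inv_apply (g : Γ) (y : Xv) : A.ρv g⁻¹ (A.ρv g y) = y := by
  rw [← rhov_mul_apply, inv_mul_cancel, map_one]; rfl

lemma rhov_inv_apply' (g : Γ) (y : Xv) : A.ρv g (A.ρv g⁻¹ y) = y := by
  rw [← rhov_mul_apply, mul_inv_cancel, map_one]; rfl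

variable [Fintype Γ]

/-- The norm (trace) map `x ↦ ∑ γ, γ • x`. -/
noncomputable def Nl : X →ₗ[ℤ] X := ∑ γ : Γ, (A.ρ γ).toLinearMap

lemma Nl_apply (x : X) : Nl A x = ∑ γ : Γ, A.ρ γ x := by
  simp [Nl]

lemma Nl_rho (g : Γ) (x : X) : Nl A (A.ρ g x) = Nl A x := by
  rw [Nl_apply, Nl_apply]
  exact Fintype.sum_equiv (Equiv.mulRight g) _ _
    (fun γ => by rw [← rho_mul_apply]; rfl)

lemma rho_Nl (g : Γ) (x : X) : A.ρ g (Nl A x) = Nl A x := by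
  rw [Nl_apply, map_sum]
  exact Fintype.sum_equiv (Equiv.mulLeft g) _ _
    (fun γ => by rw [← rho_mul_apply]; rfl)

lemma B_rho (g : Γ) (x y : X) : B Ψ (A.ρ g x) (A.ρ g y) = B Ψ x y := by
  unfold B
  refine Finset.sum_nbij' (fun c => A.ρv g⁻¹ c) (fun c => A.ρv g c)
    (fun c hc => A.coroots_stable g⁻¹ c hc) (fun c hc => A.coroots_stable g c hc)
    (fun c _ => rhov_inv_apply' A g c) (fun c _ => rhov_inv_apply A g c) ?_
  intro c _
  have h1 : Ψ.pair (A.ρ g x) c = Ψ.pair x (A.ρv g⁻¹ c) := by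
    conv_lhs => rw [← rhov_inv_apply' A g c]
    exact A.pair_invariant g x (A.ρv g⁻¹ c)
  have h2 : Ψ.pair (A.ρ g y) c = Ψ.pair y (A.ρv g⁻¹ c) := by
    conv_lhs => rw [← rhov_inv_apply' A g c]
    exact A.pair_invariant g y (A.ρv g⁻¹ c)
  rw [h1, h2]

lemma B_rho_left (g : Γ) (x y : X) : B Ψ (A.ρ g x) y = B Ψ x (A.ρ g⁻¹ y) := by
  conv_lhs => rw [← rho_inv_apply' A g y]
  rw [B_rho]

lemma B_N_right (x y : X) : B Ψ x (Nl A y) = ∑ γ : Γ, B Ψ x (A.ρ γ y) := by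
  rw [Nl_apply, B_symm, B_left_sum]
  exact Finset.sum_congr rfl fun γ _ => B_symm Ψ (A.ρ γ y) x

lemma B_N_N (x y : X) :
    B Ψ (Nl A x) (Nl A y) = (Fintype.card Γ : ℤ) * B Ψ x (Nl A y) := by
  conv_lhs => rw [Nl_apply A x]
  rw [B_left_sum]
  have : ∀ γ : Γ, B Ψ (A.ρ γ x) (Nl A y) = B Ψ x (Nl A y) := by
    intro γ
    rw [B_rho_left, rho_Nl]
  rw [Finset.sum_congr rfl fun γ _ => this γ, Finset.sum_const, Finset.card_univ,
    nsmul_eq_mul]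

lemma Q_pos_aux (f : X →ₗ[ℤ] ℝ) (hfinv : ∀ (γ : Γ) (x : X), f (A.ρ γ x) = f x)
    {α : X} (hα : α ∈ Ψ.roots) (hfα : 0 < f α)
    (hzero : ∀ β ∈ Ψ.roots, Ψ.pair (Nl A α) (Ψ.coroot β) = 0) : False := by
  classical
  set M : Multiset X := Multiset.map (fun γ => A.ρ γ α) Finset.univ.val with hMdef
  have hpos : 0 < Fintype.card Γ := Fintype.card_pos
  have hcard : M.card = Fintype.card Γ - 1 + 1 := by
    rw [hMdef, Multiset.card_map]
    simpa using (Nat.succ_pred_eq_of_pos hpos).symm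
  have hsum : M.sum = Nl A α := by
    rw [Nl_apply]; rfl
  refine descent Ψ f (Fintype.card Γ - 1) M hcard ?_ ?_
  · intro x hx
    obtain ⟨γ, _, rfl⟩ := Multiset.mem_map.1 hx
    exact ⟨A.roots_stable γ α hα, by rw [hfinv]; exact hfα⟩
  · intro β hβ
    rw [hsum]
    exact hzero β hβ

lemma Q_pos (f : X →ₗ[ℤ] ℝ) (hf : ∀ α ∈ Ψ.roots, f α ≠ 0)
    (hfinv : ∀ (γ : Γ) (x : X), f (A.ρ γ x) = f x)
    {α : X} (hα : α ∈ Ψ.roots) : 0 < B Ψ (Nl A α) (Nl A α) := by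
  rcases (B_self_nonneg Ψ (Nl A α)).lt_or_eq with h | h
  · exact h
  exfalso
  have hzero : ∀ c ∈ Ψ.coroots, Ψ.pair (Nl A α) c = 0 :=
    pair_eq_zero_of_B_self_eq_zero Ψ h.symm
  have hzero' : ∀ β ∈ Ψ.roots, Ψ.pair (Nl A α) (Ψ.coroot β) = 0 :=
    fun β hβ => hzero _ (coroot_mem Ψ hβ)
  rcases (hf α hα).lt_or_gt with hneg | hpos
  · have hα' := neg_mem_roots Ψ hα
    refine Q_pos_aux A f hfinv hα' (by rw [map_neg]; linarith) ?_
    intro β hβ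
    have hN : Nl A (-α) = -(Nl A α) := map_neg _ _
    rw [hN, map_neg, LinearMap.neg_apply, hzero' β hβ, neg_zero]
  · exact Q_pos_aux A f hfinv hα hpos hzero'

lemma istar_add (x y : X) : A.istar (x + y) = A.istar x + A.istar y := by
  unfold RootDatumActionP.istar
  rw [TensorProduct.tmul_add, Submodule.Quotient.mk_add]

lemma istar_eq_iff (x y : X) :
    A.istar x = A.istar y ↔ (1 : ℚ) ⊗ₜ[ℤ] x - (1 : ℚ) ⊗ₜ[ℤ] y ∈ A.coinvKer :=
  Submodule.Quotient.eq _

lemma istar_of_N {x y : X} (h : Nl A x = Nl A y) : A.istar x = A.istar y := by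
  rw [istar_eq_iff]
  set v : ℚ ⊗[ℤ] X := (1 : ℚ) ⊗ₜ[ℤ] x - (1 : ℚ) ⊗ₜ[ℤ] y with hvdef
  have hsummem : (∑ γ : Γ, (LinearMap.lTensor ℚ (A.ρ γ).toLinearMap v - v)) ∈ A.coinvKer :=
    Submodule.sum_mem _ (fun γ _ => Submodule.subset_span ⟨γ, v, rfl⟩)
  have h1 : ∑ γ : Γ, LinearMap.lTensor ℚ (A.ρ γ).toLinearMap v = 0 := by
    have he : ∀ γ : Γ, LinearMap.lTensor ℚ (A.ρ γ).toLinearMap v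
        = (1 : ℚ) ⊗ₜ[ℤ] (A.ρ γ x) - (1 : ℚ) ⊗ₜ[ℤ] (A.ρ γ y) := by
      intro γ
      rw [hvdef, map_sub, LinearMap.lTensor_tmul, LinearMap.lTensor_tmul]
      rfl
    rw [Finset.sum_congr rfl fun γ _ => he γ, Finset.sum_sub_distrib,
      ← TensorProduct.tmul_sum, ← TensorProduct.tmul_sum, ← Nl_apply, ← Nl_apply, h, sub_self]
  have hsumval : (∑ γ : Γ, (LinearMap.lTensor ℚ (A.ρ γ).toLinearMap v - v))
      = -((Fintype.card Γ : ℚ) • v) := by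
    rw [Finset.sum_sub_distrib, h1, Finset.sum_const, Finset.card_univ, zero_sub,
      Nat.cast_smul_eq_nsmul]
  rw [hsumval] at hsummem
  have hmem2 := Submodule.smul_mem A.coinvKer (-(Fintype.card Γ : ℚ)⁻¹) hsummem
  have hcard : (Fintype.card Γ : ℚ) ≠ 0 := by
    exact_mod_cast Fintype.card_pos.ne'
  rw [smul_neg, neg_smul, neg_neg, smul_smul, inv_mul_cancel₀ hcard, one_smul] at hmem2
  exact hmem2

lemma one_tmul_injective (hfree : Module.Free ℤ X) {a b : X}
    (h : (1 : ℚ) ⊗ₜ[ℤ] a = (1 : ℚ) ⊗ₜ[ℤ] b) : a = b := by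
  haveI := hfree
  let bX := Module.Free.chooseBasis ℤ X
  have hrepr : ∀ i, (bX.baseChange ℚ).repr ((1 : ℚ) ⊗ₜ[ℤ] a) i
      = (bX.baseChange ℚ).repr ((1 : ℚ) ⊗ₜ[ℤ] b) i := fun i => by rw [h]
  have key : ∀ i, (bX.repr a i : ℚ) = (bX.repr b i : ℚ) := by
    intro i
    have := hrepr i
    rw [Module.Basis.baseChange_repr_tmul, Module.Basis.baseChange_repr_tmul] at this
    simpa [zsmul_eq_mul] using this
  have : bX.repr a = bX.repr b := by
    ext i
    exact_mod_cast key i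
  exact bX.repr.injective this

lemma N_of_istar {x y : X} (h : A.istar x = A.istar y) : Nl A x = Nl A y := by
  rw [istar_eq_iff] at h
  set T : (ℚ ⊗[ℤ] X) →ₗ[ℚ] (ℚ ⊗[ℤ] X) :=
    ∑ γ : Γ, LinearMap.baseChange ℚ (A.ρ γ).toLinearMap with hTdef
  have hTgen : ∀ w ∈ {w : ℚ ⊗[ℤ] X | ∃ (γ : Γ) (v : ℚ ⊗[ℤ] X),
      w = LinearMap.lTensor ℚ (A.ρ γ).toLinearMap v - v}, T w = 0 := by
    rintro w ⟨γ', v, rfl⟩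
    have hbc : ∀ (f : X →ₗ[ℤ] X) (w : ℚ ⊗[ℤ] X),
        LinearMap.baseChange ℚ f w = LinearMap.lTensor ℚ f w := fun f w =>
      congrFun (LinearMap.baseChange_eq_ltensor (f := f)) w
    have hcomm : ∀ g : Γ, LinearMap.baseChange ℚ (A.ρ g).toLinearMap
        (LinearMap.lTensor ℚ (A.ρ γ').toLinearMap v)
        = LinearMap.baseChange ℚ (A.ρ (g * γ')).toLinearMap v := by
      intro g
      have hmul : (A.ρ g).toLinearMap ∘ₗ (A.ρ γ').toLinearMap
          = (A.ρ (g * γ')).toLinearMap := by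
        ext z; exact (rho_mul_apply A g γ' z).symm
      rw [hbc, hbc, ← LinearMap.comp_apply, ← LinearMap.lTensor_comp, hmul]
    rw [map_sub, hTdef, LinearMap.sum_apply, LinearMap.sum_apply]
    rw [Finset.sum_congr rfl fun g _ => hcomm g]
    have hre : ∑ g : Γ, LinearMap.baseChange ℚ (A.ρ (g * γ')).toLinearMap v
        = ∑ g : Γ, LinearMap.baseChange ℚ (A.ρ g).toLinearMap v :=
      Fintype.sum_equiv (Equiv.mulRight γ') _ _ (fun g => rfl)
    rw [hre, sub_self]
  have hTker : A.coinvKer ≤ LinearMap.ker T := by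
    rw [RootDatumActionP.coinvKer, Submodule.span_le]
    intro w hw
    exact LinearMap.mem_ker.2 (hTgen w hw)
  have hT0 : T ((1 : ℚ) ⊗ₜ[ℤ] x - (1 : ℚ) ⊗ₜ[ℤ] y) = 0 := hTker h
  have hTz : ∀ z : X, T ((1 : ℚ) ⊗ₜ[ℤ] z) = (1 : ℚ) ⊗ₜ[ℤ] (Nl A z) := by
    intro z
    rw [hTdef, LinearMap.sum_apply, Nl_apply, TensorProduct.tmul_sum]
    exact Finset.sum_congr rfl fun γ _ => LinearMap.baseChange_tmul _ _ _
  rw [map_sub, hTz, hTz, sub_eq_zero] at hT0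
  exact one_tmul_injective Ψ.free_X hT0

end Action
end RDAux

/-- Let `Γ` be a finite group acting quasisemisimply on a root datum `Ψ`.
Suppose `α, β₀` are roots such that `i* α + i* β₀` lies in `i* '' Φ̃`.  Then there is a root
`β` with `i* β = i* β₀` and `α + β ∈ Φ̃`. -/
theorem statement2 {X Xv : Type*} [AddCommGroup X] [AddCommGroup Xv]
    (Ψ : RootDatumP X Xv) {Γ : Type*} [Group Γ] [Finite Γ]
    (A : RootDatumActionP Ψ Γ) (hqss : A.IsQuasisemisimple)
    (α β₀ : X) (hα : α ∈ Ψ.roots) (hβ₀ : β₀ ∈ Ψ.roots)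
    (hsum : A.istar α + A.istar β₀ ∈ A.istar '' (↑Ψ.roots : Set X)) :
    ∃ β ∈ Ψ.roots, A.istar β = A.istar β₀ ∧ α + β ∈ Ψ.roots := by
  classical
  cases nonempty_fintype Γ
  obtain ⟨f, hf, hfinv⟩ := hqss
  obtain ⟨δ, hδmem, hδ⟩ := hsum
  have hδroot : δ ∈ Ψ.roots := hδmem
  have hNδ : RDAux.Nl A δ = RDAux.Nl A α + RDAux.Nl A β₀ := by
    have h1 : A.istar δ = A.istar (α + β₀) := by rw [RDAux.istar_add]; exact hδ
    have h2 := RDAux.N_of_istar A h1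
    rwa [map_add] at h2
  have hQδ := RDAux.Q_pos A f hf hfinv hδroot
  have hQα := RDAux.Q_pos A f hf hfinv hα
  have hQβ₀ := RDAux.Q_pos A f hf hfinv hβ₀
  have hB00 : RDAux.B Ψ (0 : X) 0 = 0 := RDAux.B_zero_left 0
  by_cases ha : 0 < RDAux.B Ψ α (RDAux.Nl A δ)
  · -- Case 1 : `B(α, Nδ) > 0`.
    have hex : ∃ γ : Γ, 0 < RDAux.B Ψ α (A.ρ γ δ) := by
      by_contra hcon
      push_neg at hcon
      have hle : RDAux.B Ψ α (RDAux.Nl A δ) ≤ 0 := by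
        rw [RDAux.B_N_right]
        exact Finset.sum_nonpos fun γ _ => hcon γ
      linarith
    obtain ⟨γ, hγ⟩ := hex
    set ε := A.ρ γ δ with hεdef
    have hεroot : ε ∈ Ψ.roots := A.roots_stable γ δ hδroot
    have hNε : RDAux.Nl A ε = RDAux.Nl A δ := RDAux.Nl_rho A γ δ
    have hpos : 0 < Ψ.pair ε (Ψ.coroot α) := by
      have h2 := RDAux.two_mul_B Ψ hα ε
      have hApos := RDAux.B_root_pos Ψ hα
      have hsym := RDAux.B_symm Ψ ε α
      nlinarith
    by_cases hεα : ε = α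
    · exfalso
      have hz : RDAux.Nl A β₀ = 0 := by
        rw [hεα] at hNε
        rw [← hNε] at hNδ
        exact left_eq_add.mp hNδ
      rw [hz, hB00] at hQβ₀
      exact lt_irrefl 0 hQβ₀
    · refine ⟨ε - α, RDAux.root_sub_root Ψ hα hεroot hpos hεα, ?_, ?_⟩
      · refine RDAux.istar_of_N A ?_
        rw [map_sub, hNε, hNδ]
        abel
      · rw [show α + (ε - α) = ε by abel]
        exact hεroot
  · -- Case 2 : `B(α, Nδ) ≤ 0`.
    push_neg at ha
    have hBαNα : 0 < RDAux.B Ψ α (RDAux.Nl A α) := by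
      have hNN := RDAux.B_N_N A α α
      have hc : 0 < (Fintype.card Γ : ℤ) := by exact_mod_cast Fintype.card_pos
      nlinarith
    have hsplit : RDAux.B Ψ α (RDAux.Nl A δ)
        = RDAux.B Ψ α (RDAux.Nl A α) + RDAux.B Ψ α (RDAux.Nl A β₀) := by
      rw [hNδ, RDAux.B_add_right]
    have hcneg : RDAux.B Ψ α (RDAux.Nl A β₀) < 0 := by linarith
    have hex : ∃ γ : Γ, RDAux.B Ψ α (A.ρ γ β₀) < 0 := by
      by_contra hcon
      push_neg at hcon
      have hge : 0 ≤ RDAux.B Ψ α (RDAux.Nl A β₀) := by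
        rw [RDAux.B_N_right]
        exact Finset.sum_nonneg fun γ _ => hcon γ
      linarith
    obtain ⟨γ, hγ⟩ := hex
    set β := A.ρ γ β₀ with hβdef
    have hβroot : β ∈ Ψ.roots := A.roots_stable γ β₀ hβ₀
    have hNβ : RDAux.Nl A β = RDAux.Nl A β₀ := RDAux.Nl_rho A γ β₀
    have hneg : Ψ.pair β (Ψ.coroot α) < 0 := by
      have h2 := RDAux.two_mul_B Ψ hα β
      have hApos := RDAux.B_root_pos Ψ hα
      have hsym := RDAux.B_symm Ψ β α
      nlinarith
    have hβnegα : β ≠ -α := by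
      intro h
      have h1 : RDAux.Nl A β₀ = -(RDAux.Nl A α) := by
        rw [← hNβ, h, map_neg]
      rw [h1] at hNδ
      have h0 : RDAux.Nl A δ = 0 := by rw [hNδ]; abel
      rw [h0, hB00] at hQδ
      exact lt_irrefl 0 hQδ
    exact ⟨β, hβroot, RDAux.istar_of_N A hNβ, RDAux.root_add_root Ψ hα hβroot hneg hβnegα⟩
end

section
/- Let Γ be a finite group acting quasisemisimply on a root datum Ψ̃ = (X̃, Φ̃, X̃^∨, Φ̃^∨). Let Φ̃⁺ be a Γ-stable system of positive roots in Φ̃, let Δ̃ be the set of elements of Φ̃⁺ that are not the sum of two elements of Φ̃⁺ (the simple roots), and put Φ⁺ := i*(Φ̃⁺). Then for every α̃ ∈ Φ̃⁺, the image i*(α̃) is not the sum of two elements of Φ⁺ if and only if α̃ ∈ Δ̃. -/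
open scoped TensorProduct

section AuxRootDatum

open Set Function

variable {X Xv : Type*} [AddCommGroup X] [AddCommGroup Xv]

namespace RootDatumP

variable (Ψ : RootDatumP X Xv)

/-- The perfect pairing underlying a root datum. -/
noncomputable def pp : X →ₗ[ℤ] Xv →ₗ[ℤ] ℤ := Ψ.pair

instance pp_isPerfPair : Ψ.pp.IsPerfPair := ⟨Ψ.perfect_left, Ψ.perfect_right⟩

@[simp] lemma pp_apply (x : X) (y : Xv) : Ψ.pp x y = Ψ.pair x y := rfl

@[simp] lemma pp_flip_apply (x : X) (y : Xv) : Ψ.pp.flip y x = Ψ.pair x y := rfl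

/-- The root pairing (in the sense of mathlib) attached to a root datum. -/
noncomputable def rp : RootPairing {a : X // a ∈ Ψ.roots} ℤ X Xv := by
  haveI := Ψ.free_X
  refine RootPairing.mk' Ψ.pp ⟨Subtype.val, Subtype.val_injective⟩
    ⟨fun i => Ψ.coroot i.1, fun i j h => Subtype.ext (Ψ.coroot_bijOn.injOn i.2 j.2 h)⟩
    (fun i => Ψ.pair_coroot_self i.1 i.2) ?_ ?_
  · rintro i - ⟨j, rfl⟩
    exact ⟨⟨_, Ψ.reflection_mem i.1 i.2 j.1 j.2⟩, by
      simp [Module.preReflection_apply]; rfl⟩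
  · rintro i - ⟨j, rfl⟩
    have h0 : (Ψ.coroot j.1 - Ψ.pair i.1 (Ψ.coroot j.1) • Ψ.coroot i.1) ∈ Ψ.coroots :=
      Ψ.coreflection_mem i.1 i.2 _ (Ψ.coroot_bijOn.mapsTo j.2)
    obtain ⟨x, hx, hx2⟩ := Ψ.coroot_bijOn.surjOn h0
    exact ⟨⟨x, hx⟩, by exact hx2⟩

@[simp] lemma rp_root (i : {a : X // a ∈ Ψ.roots}) : Ψ.rp.root i = i.1 := rfl

@[simp] lemma rp_coroot (i : {a : X // a ∈ Ψ.roots}) : Ψ.rp.coroot i = Ψ.coroot i.1 := rfl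

lemma rootForm_eq (x y : X) :
    Ψ.rp.RootForm x y
      = ∑ j : {a : X // a ∈ Ψ.roots}, Ψ.pair x (Ψ.coroot j.1) * Ψ.pair y (Ψ.coroot j.1) := by
  rw [RootPairing.rootForm_apply_apply]
  rfl

lemma rootForm_comm (x y : X) : Ψ.rp.RootForm x y = Ψ.rp.RootForm y x := by
  rw [rootForm_eq, rootForm_eq]
  exact Finset.sum_congr rfl fun j _ => mul_comm _ _

lemma rootForm_self_pos (i : {a : X // a ∈ Ψ.roots}) : 0 < Ψ.rp.RootForm i.1 i.1 := by
  simpa using Ψ.rp.rootForm_pos_of_ne_zero (Submodule.subset_span ⟨i, rfl⟩)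
    (fun h => Ψ.zero_notMem_roots (by rw [← h]; exact i.2))

lemma rootForm_pair (i : {a : X // a ∈ Ψ.roots}) (x : X) :
    Ψ.rp.RootForm i.1 i.1 * Ψ.pair x (Ψ.coroot i.1) = 2 * Ψ.rp.RootForm x i.1 := by
  have hpol : Ψ.pair x (Ψ.rp.Polarization i.1) = Ψ.rp.RootForm x i.1 := by
    rw [show (i.1 : X) = Ψ.rp.root i from rfl, RootPairing.Polarization_apply, map_sum,
      rootForm_eq]
    refine Finset.sum_congr rfl fun j _ => ?_
    rw [map_smul, smul_eq_mul, mul_comm]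
    rfl
  have h := congrArg (Ψ.pair x) (Ψ.rp.rootForm_self_smul_coroot i)
  simp only [map_smul, map_nsmul, smul_eq_mul, nsmul_eq_mul, Nat.cast_ofNat,
    rp_root, rp_coroot] at h
  rw [hpol] at h
  exact h

lemma rootForm_sub_sub (a b : ℤ) (x y : X) :
    Ψ.rp.RootForm (a • x - b • y) (a • x - b • y)
      = a * a * Ψ.rp.RootForm x x - a * b * Ψ.rp.RootForm x y
        - b * a * Ψ.rp.RootForm y x + b * b * Ψ.rp.RootForm y y := by
  simp only [map_sub, map_smul, LinearMap.sub_apply, LinearMap.smul_apply, smul_eq_mul]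
  ring

end RootDatumP

end AuxRootDatum
section AuxSimple

open Set Function

variable {X Xv : Type*} [AddCommGroup X] [AddCommGroup Xv]

namespace RootDatumP

variable (Ψ : RootDatumP X Xv)

/-- `s` is a simple root for the system of positive roots determined by `f`. -/
def IsSimp (f : X →ₗ[ℤ] ℝ) (s : X) : Prop :=
  s ∈ Ψ.roots ∧ 0 < f s ∧
    ¬ ∃ β ∈ {x : X | x ∈ Ψ.roots ∧ 0 < f x},
        ∃ δ ∈ {x : X | x ∈ Ψ.roots ∧ 0 < f x}, s = β + δ

lemma neg_mem (α : X) (hα : α ∈ Ψ.roots) : -α ∈ Ψ.roots := by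
  have h := Ψ.reflection_mem α hα α hα
  rw [Ψ.pair_coroot_self α hα] at h
  have e : α - (2 : ℤ) • α = -α := by
    rw [two_smul]; abel
  rwa [e] at h

lemma no_sub (f : X →ₗ[ℤ] ℝ) (hf : ∀ α ∈ Ψ.roots, f α ≠ 0) {σ τ : X}
    (hσ : Ψ.IsSimp f σ) (hτ : Ψ.IsSimp f τ) (hd : σ - τ ∈ Ψ.roots) : False := by
  obtain ⟨hσr, hσf, hσs⟩ := hσ
  obtain ⟨hτr, hτf, hτs⟩ := hτ
  rcases (hf _ hd).lt_or_gt with hneg | hpos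
  · have hmem : τ - σ ∈ Ψ.roots := by
      have := Ψ.neg_mem _ hd
      simpa [neg_sub] using this
    have h1 : f σ - f τ < 0 := by simpa [map_sub] using hneg
    have hfpos : 0 < f (τ - σ) := by
      rw [map_sub]; linarith
    exact hτs ⟨τ - σ, ⟨hmem, hfpos⟩, σ, ⟨hσr, hσf⟩, by abel⟩
  · exact hσs ⟨σ - τ, ⟨hd, hpos⟩, τ, ⟨hτr, hτf⟩, by abel⟩

lemma pair_nonpos (f : X →ₗ[ℤ] ℝ) (hf : ∀ α ∈ Ψ.roots, f α ≠ 0) {σ τ : X}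
    (hσ : Ψ.IsSimp f σ) (hτ : Ψ.IsSimp f τ) (hne : σ ≠ τ) :
    Ψ.pair σ (Ψ.coroot τ) ≤ 0 := by
  haveI := Ψ.free_X
  by_contra hcpos
  push_neg at hcpos
  have k1 := Ψ.rootForm_pair ⟨τ, hτ.1⟩ σ
  have k2 := Ψ.rootForm_pair ⟨σ, hσ.1⟩ τ
  simp only at k1 k2
  have hBττ : 0 < Ψ.rp.RootForm τ τ := Ψ.rootForm_self_pos ⟨τ, hτ.1⟩
  have hBσσ : 0 < Ψ.rp.RootForm σ σ := Ψ.rootForm_self_pos ⟨σ, hσ.1⟩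
  have hsym : Ψ.rp.RootForm τ σ = Ψ.rp.RootForm σ τ := Ψ.rootForm_comm τ σ
  rw [hsym] at k2
  have hBστ : 0 < Ψ.rp.RootForm σ τ := by nlinarith
  have hd : 0 < Ψ.pair τ (Ψ.coroot σ) := by nlinarith
  by_cases hc1 : Ψ.pair σ (Ψ.coroot τ) = 1
  · have hroot := Ψ.reflection_mem τ hτ.1 σ hσ.1
    rw [hc1, one_smul] at hroot
    exact Ψ.no_sub f hf ⟨hσ.1, hσ.2.1, hσ.2.2⟩ ⟨hτ.1, hτ.2.1, hτ.2.2⟩ hroot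
  by_cases hd1 : Ψ.pair τ (Ψ.coroot σ) = 1
  · have hroot := Ψ.reflection_mem σ hσ.1 τ hτ.1
    rw [hd1, one_smul] at hroot
    exact Ψ.no_sub f hf ⟨hτ.1, hτ.2.1, hτ.2.2⟩ ⟨hσ.1, hσ.2.1, hσ.2.2⟩ hroot
  have hc2 : 2 ≤ Ψ.pair σ (Ψ.coroot τ) := by omega
  have hd2 : 2 ≤ Ψ.pair τ (Ψ.coroot σ) := by omega
  -- Cauchy-Schwarz
  have h0 := Ψ.rp.zero_le_rootForm
    (Ψ.rp.RootForm τ τ • σ - Ψ.rp.RootForm σ τ • τ)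
  rw [Ψ.rootForm_sub_sub, hsym] at h0
  have hcs : Ψ.rp.RootForm σ τ * Ψ.rp.RootForm σ τ
      ≤ Ψ.rp.RootForm σ σ * Ψ.rp.RootForm τ τ := by nlinarith [h0, hBττ]
  have h4 : Ψ.rp.RootForm σ σ * Ψ.rp.RootForm τ τ
        * (Ψ.pair σ (Ψ.coroot τ) * Ψ.pair τ (Ψ.coroot σ))
      = 4 * (Ψ.rp.RootForm σ τ * Ψ.rp.RootForm σ τ) := by
    linear_combination (Ψ.rp.RootForm σ σ * Ψ.pair τ (Ψ.coroot σ)) * k1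
      + (2 * Ψ.rp.RootForm σ τ) * k2
  have hcd4 : Ψ.pair σ (Ψ.coroot τ) * Ψ.pair τ (Ψ.coroot σ) ≤ 4 := by
    nlinarith [mul_pos hBσσ hBττ]
  have hcle : Ψ.pair σ (Ψ.coroot τ) ≤ 2 := by nlinarith
  have hdle : Ψ.pair τ (Ψ.coroot σ) ≤ 2 := by nlinarith
  have hc : Ψ.pair σ (Ψ.coroot τ) = 2 := le_antisymm hcle hc2
  have hdd : Ψ.pair τ (Ψ.coroot σ) = 2 := le_antisymm hdle hd2
  have hBστ_eq : Ψ.rp.RootForm σ τ = Ψ.rp.RootForm τ τ := by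
    rw [hc] at k1; linarith
  have hBσσ_eq : Ψ.rp.RootForm σ σ = Ψ.rp.RootForm σ τ := by
    rw [hdd] at k2; linarith
  have hval : Ψ.rp.RootForm (Ψ.rp.RootForm τ τ • σ - Ψ.rp.RootForm σ τ • τ)
      (Ψ.rp.RootForm τ τ • σ - Ψ.rp.RootForm σ τ • τ) = 0 := by
    rw [Ψ.rootForm_sub_sub, hsym, hBστ_eq, hBσσ_eq.trans hBστ_eq]
    ring
  have hv0 : Ψ.rp.RootForm τ τ • σ - Ψ.rp.RootForm σ τ • τ = 0 := by
    by_contra hne0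
    have hsp : Ψ.rp.RootForm τ τ • σ - Ψ.rp.RootForm σ τ • τ ∈ Ψ.rp.rootSpan ℤ :=
      sub_mem
        (Submodule.smul_mem _ _ (Submodule.subset_span ⟨⟨σ, hσ.1⟩, rfl⟩))
        (Submodule.smul_mem _ _ (Submodule.subset_span ⟨⟨τ, hτ.1⟩, rfl⟩))
    have hpos := Ψ.rp.rootForm_pos_of_ne_zero hsp hne0
    rw [hval] at hpos
    exact lt_irrefl 0 hpos
  have hsmul : Ψ.rp.RootForm τ τ • σ = Ψ.rp.RootForm τ τ • τ := by
    have h' := sub_eq_zero.mp hv0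
    rw [h', hBστ_eq]
  exact hne (smul_right_injective X (ne_of_gt hBττ) hsmul)

end RootDatumP

end AuxSimple
section AuxIndep

open Set Function

variable {X Xv : Type*} [AddCommGroup X] [AddCommGroup Xv]

namespace RootDatumP

variable (Ψ : RootDatumP X Xv)

lemma indep (f : X →ₗ[ℤ] ℝ) (hf : ∀ α ∈ Ψ.roots, f α ≠ 0) (S : Finset X)
    (hS : ∀ s ∈ S, Ψ.IsSimp f s) (c : X → ℤ)
    (hsum : ∑ s ∈ S, c s • s = 0) : ∀ s ∈ S, c s = 0 := by
  classical
  haveI := Ψ.free_X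
  set T := S.filter (fun s => 0 < c s) with hT
  set U := S.filter (fun s => c s < 0) with hU
  have hdisj : Disjoint T U := by
    rw [Finset.disjoint_left]
    intro a ha hb
    rw [hT, Finset.mem_filter] at ha
    rw [hU, Finset.mem_filter] at hb
    omega
  have hsplit : ∑ s ∈ T, c s • s + ∑ s ∈ U, c s • s = 0 := by
    rw [← Finset.sum_union hdisj, ← hsum]
    apply Finset.sum_subset
    · exact Finset.union_subset (Finset.filter_subset _ _) (Finset.filter_subset _ _)
    · intro x hxS hxnot
      rw [hT, hU, Finset.mem_union, Finset.mem_filter, Finset.mem_filter] at hxnot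
      have hcx : c x = 0 := by
        by_contra hc0
        rcases lt_or_gt_of_ne hc0 with h | h
        · exact hxnot (Or.inr ⟨hxS, h⟩)
        · exact hxnot (Or.inl ⟨hxS, h⟩)
      rw [hcx, zero_smul]
  have hveq : ∑ s ∈ T, c s • s = ∑ s ∈ U, (-(c s)) • s := by
    have h1 : ∑ s ∈ U, (-(c s)) • s = -∑ s ∈ U, c s • s := by
      simp [neg_smul]
    rw [h1]
    exact eq_neg_of_add_eq_zero_left hsplit
  have expand : ∀ (F G : Finset X) (a b : X → ℤ),
      Ψ.rp.RootForm (∑ s ∈ F, a s • s) (∑ t ∈ G, b t • t)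
        = ∑ s ∈ F, ∑ t ∈ G, a s * (b t * Ψ.rp.RootForm s t) := by
    intro F G a b
    have h1 : Ψ.rp.RootForm (∑ s ∈ F, a s • s) = ∑ s ∈ F, a s • Ψ.rp.RootForm s := by
      rw [map_sum]
      exact Finset.sum_congr rfl fun s _ => by rw [map_smul]
    rw [h1, LinearMap.sum_apply]
    refine Finset.sum_congr rfl fun s _ => ?_
    rw [LinearMap.smul_apply, map_sum, smul_eq_mul, Finset.mul_sum]
    refine Finset.sum_congr rfl fun t _ => ?_
    rw [map_smul, smul_eq_mul]
  have hterm : ∀ s ∈ T, ∀ t ∈ U, c s * ((-(c t)) * Ψ.rp.RootForm s t) ≤ 0 := by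
    intro s hs t ht
    rw [hT, Finset.mem_filter] at hs
    rw [hU, Finset.mem_filter] at ht
    have hne : s ≠ t := by
      intro h; rw [h] at hs; omega
    have hBst : Ψ.rp.RootForm s t ≤ 0 := by
      have hp := Ψ.pair_nonpos f hf (hS s hs.1) (hS t ht.1) hne
      have k := Ψ.rootForm_pair ⟨t, (hS t ht.1).1⟩ s
      have hBtt := Ψ.rootForm_self_pos ⟨t, (hS t ht.1).1⟩
      simp only at k hBtt
      nlinarith
    have h1 : (0:ℤ) < c s := hs.2
    have h2 : (0:ℤ) < -(c t) := by omega
    have hb : (-(c t)) * Ψ.rp.RootForm s t ≤ 0 :=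
      mul_nonpos_iff.mpr (Or.inl ⟨h2.le, hBst⟩)
    exact mul_nonpos_iff.mpr (Or.inl ⟨h1.le, hb⟩)
  have hvv_le : Ψ.rp.RootForm (∑ s ∈ T, c s • s) (∑ s ∈ T, c s • s) ≤ 0 := by
    have step : Ψ.rp.RootForm (∑ s ∈ T, c s • s) (∑ s ∈ T, c s • s)
        = ∑ s ∈ T, ∑ t ∈ U, c s * ((-(c t)) * Ψ.rp.RootForm s t) := by
      calc Ψ.rp.RootForm (∑ s ∈ T, c s • s) (∑ s ∈ T, c s • s)
          = Ψ.rp.RootForm (∑ s ∈ T, c s • s) (∑ t ∈ U, (-(c t)) • t) := by rw [hveq]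
        _ = ∑ s ∈ T, ∑ t ∈ U, c s * ((-(c t)) * Ψ.rp.RootForm s t) :=
            expand T U c (fun t => -(c t))
    rw [step]
    exact Finset.sum_nonpos fun s hs => Finset.sum_nonpos fun t ht => hterm s hs t ht
  have hvv0 : Ψ.rp.RootForm (∑ s ∈ T, c s • s) (∑ s ∈ T, c s • s) = 0 :=
    le_antisymm hvv_le (Ψ.rp.zero_le_rootForm _)
  have hvspan : (∑ s ∈ T, c s • s) ∈ Ψ.rp.rootSpan ℤ :=
    Submodule.sum_mem _ fun s hs => Submodule.smul_mem _ _
      (Submodule.subset_span ⟨⟨s, (hS s (Finset.mem_filter.mp hs).1).1⟩, rfl⟩)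
  have hv0 : (∑ s ∈ T, c s • s) = 0 := by
    by_contra h
    have hpos := Ψ.rp.rootForm_pos_of_ne_zero hvspan h
    rw [hvv0] at hpos
    exact lt_irrefl 0 hpos
  have hT0 : T = ∅ := by
    rcases Finset.eq_empty_or_nonempty T with h | h
    · exact h
    · exfalso
      have hfv : f (∑ s ∈ T, c s • s) = 0 := by rw [hv0, map_zero]
      have hpos : (0:ℝ) < f (∑ s ∈ T, c s • s) := by
        rw [map_sum]
        refine Finset.sum_pos ?_ h
        intro s hs
        rw [Finset.mem_filter] at hs
        have he : f (c s • s) = (c s : ℝ) * f s := by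
          rw [map_smul, zsmul_eq_mul]
        rw [he]
        exact mul_pos (by exact_mod_cast hs.2) (hS s hs.1).2.1
      linarith
  have hU0 : U = ∅ := by
    rcases Finset.eq_empty_or_nonempty U with h | h
    · exact h
    · exfalso
      have hv0' : (∑ s ∈ U, (-(c s)) • s) = 0 := by rw [← hveq]; exact hv0
      have hfv : f (∑ s ∈ U, (-(c s)) • s) = 0 := by rw [hv0', map_zero]
      have hpos : (0:ℝ) < f (∑ s ∈ U, (-(c s)) • s) := by
        rw [map_sum]
        refine Finset.sum_pos ?_ h
        intro s hs
        rw [Finset.mem_filter] at hs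
        have he : f ((-(c s)) • s) = ((-(c s) : ℤ) : ℝ) * f s := by
          rw [map_smul, zsmul_eq_mul]
        rw [he]
        refine mul_pos ?_ (hS s hs.1).2.1
        have : (0:ℤ) < -(c s) := by omega
        exact_mod_cast this
      linarith
  intro s hs
  by_contra hcs
  rcases lt_or_gt_of_ne hcs with h | h
  · have : s ∈ U := Finset.mem_filter.mpr ⟨hs, h⟩
    rw [hU0] at this
    exact Finset.notMem_empty s this
  · have : s ∈ T := Finset.mem_filter.mpr ⟨hs, h⟩
    rw [hT0] at this
    exact Finset.notMem_empty s this

lemma multiset_eq (f : X →ₗ[ℤ] ℝ) (hf : ∀ α ∈ Ψ.roots, f α ≠ 0) (m₁ m₂ : Multiset X)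
    (h₁ : ∀ s ∈ m₁, Ψ.IsSimp f s) (h₂ : ∀ s ∈ m₂, Ψ.IsSimp f s)
    (hsum : m₁.sum = m₂.sum) : m₁ = m₂ := by
  classical
  set S := m₁.toFinset ∪ m₂.toFinset with hSdef
  have key : ∀ m : Multiset X, m.toFinset ⊆ S →
      ∑ a ∈ S, (m.count a : ℤ) • a = m.sum := by
    intro m hm
    rw [← Finset.sum_subset hm (fun x _ hnx => by
      rw [Multiset.count_eq_zero_of_notMem (fun h => hnx (Multiset.mem_toFinset.mpr h))]
      simp)]
    have h := Finset.sum_multiset_map_count m (id : X → X)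
    rw [Multiset.map_id] at h
    rw [h]
    exact Finset.sum_congr rfl fun a _ => natCast_zsmul a _
  have hzero : ∑ a ∈ S, ((m₁.count a : ℤ) - (m₂.count a : ℤ)) • a = 0 := by
    simp only [sub_smul, Finset.sum_sub_distrib]
    rw [key m₁ Finset.subset_union_left, key m₂ Finset.subset_union_right, hsum, sub_self]
  have hall := Ψ.indep f hf S (fun s hs => by
      rcases Finset.mem_union.mp hs with h | h
      exacts [h₁ s (Multiset.mem_toFinset.mp h), h₂ s (Multiset.mem_toFinset.mp h)])
    _ hzero
  refine Multiset.ext.mpr fun a => ?_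
  by_cases ha : a ∈ S
  · have h := hall a ha
    have : (m₁.count a : ℤ) = (m₂.count a : ℤ) := by omega
    exact_mod_cast this
  · have h1 : a ∉ m₁ := fun h =>
      ha (Finset.mem_union.mpr (Or.inl (Multiset.mem_toFinset.mpr h)))
    have h2 : a ∉ m₂ := fun h =>
      ha (Finset.mem_union.mpr (Or.inr (Multiset.mem_toFinset.mpr h)))
    rw [Multiset.count_eq_zero_of_notMem h1, Multiset.count_eq_zero_of_notMem h2]

lemma decomp (f : X →ₗ[ℤ] ℝ) (hf : ∀ α ∈ Ψ.roots, f α ≠ 0) :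
    ∀ x : X, x ∈ Ψ.roots → 0 < f x →
      ∃ m : Multiset X, m ≠ 0 ∧ (∀ s ∈ m, Ψ.IsSimp f s) ∧ m.sum = x := by
  classical
  suffices H : ∀ (n : ℕ) (x : X), x ∈ Ψ.roots → 0 < f x →
      (Ψ.roots.filter (fun y => 0 < f y ∧ f y < f x)).card ≤ n →
      ∃ m : Multiset X, m ≠ 0 ∧ (∀ s ∈ m, Ψ.IsSimp f s) ∧ m.sum = x by
    exact fun x hx hfx => H _ x hx hfx le_rfl
  intro n
  induction n with
  | zero =>
    intro x hx hfx hcard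
    refine ⟨{x}, by simp, ?_, by simp⟩
    intro s hs
    rw [Multiset.mem_singleton] at hs
    subst hs
    refine ⟨hx, hfx, ?_⟩
    rintro ⟨β, ⟨hβr, hβf⟩, δ, ⟨hδr, hδf⟩, heq⟩
    have hfeq : f s = f β + f δ := by rw [heq, map_add]
    have hfβ : f β < f s := by linarith
    have hmem : β ∈ Ψ.roots.filter (fun y => 0 < f y ∧ f y < f s) :=
      Finset.mem_filter.mpr ⟨hβr, hβf, hfβ⟩
    have := Finset.card_pos.mpr ⟨β, hmem⟩
    omega
  | succ n ih =>
    intro x hx hfx hcard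
    by_cases hsimp : ∃ β ∈ {z : X | z ∈ Ψ.roots ∧ 0 < f z},
        ∃ δ ∈ {z : X | z ∈ Ψ.roots ∧ 0 < f z}, x = β + δ
    · obtain ⟨β, ⟨hβr, hβf⟩, δ, ⟨hδr, hδf⟩, heq⟩ := hsimp
      have hfeq : f x = f β + f δ := by rw [heq, map_add]
      have hfβ : f β < f x := by linarith
      have hfδ : f δ < f x := by linarith
      have hlt : ∀ z : X, z ∈ Ψ.roots → 0 < f z → f z < f x →
          (Ψ.roots.filter (fun y => 0 < f y ∧ f y < f z)).card ≤ n := by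
        intro z hz hfz hzx
        have hss : (Ψ.roots.filter (fun y => 0 < f y ∧ f y < f z))
            ⊂ (Ψ.roots.filter (fun y => 0 < f y ∧ f y < f x)) := by
          rw [Finset.ssubset_iff_of_subset]
          · exact ⟨z, Finset.mem_filter.mpr ⟨hz, hfz, hzx⟩,
              fun hmem => by
                have := (Finset.mem_filter.mp hmem).2.2
                linarith⟩
          · intro y hy
            rw [Finset.mem_filter] at hy ⊢
            exact ⟨hy.1, hy.2.1, by linarith [hy.2.2]⟩
        have := Finset.card_lt_card hss
        omega
      obtain ⟨m₁, hm₁ne, hm₁s, hm₁sum⟩ := ih β hβr hβf (hlt β hβr hβf hfβ)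
      obtain ⟨m₂, hm₂ne, hm₂s, hm₂sum⟩ := ih δ hδr hδf (hlt δ hδr hδf hfδ)
      refine ⟨m₁ + m₂, ?_, ?_, ?_⟩
      · intro h
        apply hm₁ne
        rw [← Multiset.card_eq_zero]
        have := congrArg Multiset.card h
        rw [Multiset.card_add, Multiset.card_zero] at this
        omega
      · intro s hs
        rcases Multiset.mem_add.mp hs with h | h
        exacts [hm₁s s h, hm₂s s h]
      · rw [Multiset.sum_add, hm₁sum, hm₂sum, heq]
    · refine ⟨{x}, by simp, ?_, by simp⟩
      intro s hs
      rw [Multiset.mem_singleton] at hs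
      subst hs
      exact ⟨hx, hfx, hsimp⟩

end RootDatumP

end AuxIndep
section AuxGamma

open Set Function

variable {X Xv : Type*} [AddCommGroup X] [AddCommGroup Xv]

/-- Extension of an integral functional to the rationalification. -/
noncomputable def liftFn (φ : X →ₗ[ℤ] ℚ) : (ℚ ⊗[ℤ] X) →ₗ[ℚ] ℚ :=
  TensorProduct.AlgebraTensorModule.lift
    { toFun := fun q => q • φ
      map_add' := fun a b => add_smul a b φ
      map_smul' := fun a b => by simp [mul_smul] }

@[simp] lemma liftFn_tmul (φ : X →ₗ[ℤ] ℚ) (q : ℚ) (x : X) :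
    liftFn φ (q ⊗ₜ[ℤ] x) = q • φ x := rfl

lemma liftFn_lTensor (φ : X →ₗ[ℤ] ℚ) (g : X →ₗ[ℤ] X) (hg : ∀ x, φ (g x) = φ x)
    (v : ℚ ⊗[ℤ] X) : liftFn φ (LinearMap.lTensor ℚ g v) = liftFn φ v := by
  induction v using TensorProduct.induction_on with
  | zero => simp
  | tmul q x => simp [hg]
  | add a b ha hb => rw [map_add, map_add, map_add, ha, hb]

namespace RootDatumActionP

variable {Ψ : RootDatumP X Xv} {Γ : Type*} [Group Γ] (A : RootDatumActionP Ψ Γ)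

lemma rho_inv_apply (γ : Γ) (x : X) : A.ρ γ⁻¹ (A.ρ γ x) = x := by
  rw [map_inv]
  exact (A.ρ γ).symm_apply_apply x

lemma simp_stable (f : X →ₗ[ℤ] ℝ)
    (hstable : ∀ (γ : Γ) (α : X), α ∈ Ψ.roots → 0 < f α → 0 < f (A.ρ γ α))
    (γ : Γ) {s : X} (hs : Ψ.IsSimp f s) : Ψ.IsSimp f (A.ρ γ s) := by
  obtain ⟨h1, h2, h3⟩ := hs
  refine ⟨A.roots_stable γ s h1, hstable γ s h1 h2, ?_⟩
  rintro ⟨β, ⟨hβr, hβf⟩, δ, ⟨hδr, hδf⟩, heq⟩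
  apply h3
  refine ⟨A.ρ γ⁻¹ β, ⟨A.roots_stable _ _ hβr, hstable _ _ hβr hβf⟩,
          A.ρ γ⁻¹ δ, ⟨A.roots_stable _ _ hδr, hstable _ _ hδr hδf⟩, ?_⟩
  have h := congrArg (A.ρ γ⁻¹) heq
  rw [map_add, A.rho_inv_apply γ s] at h
  exact h

end RootDatumActionP

end AuxGamma
/-- Let `Γ` be a finite group acting quasisemisimply on a root datum `Ψ`.
Let `Φ̃⁺ = {α ∈ Φ̃ | 0 < f α}` be a `Γ`-stable system of positive roots, `Δ̃` the set of simple
roots of `Φ̃⁺` (those not a sum of two elements of `Φ̃⁺`), and `Φ⁺ = i* '' Φ̃⁺`.  Then for every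
`α ∈ Φ̃⁺`, the image `i* α` is not the sum of two elements of `Φ⁺` if and only if `α ∈ Δ̃`. -/
theorem statement3 {X Xv : Type*} [AddCommGroup X] [AddCommGroup Xv]
    (Ψ : RootDatumP X Xv) {Γ : Type*} [Group Γ] [Finite Γ]
    (A : RootDatumActionP Ψ Γ) (hqss : A.IsQuasisemisimple)
    (f : X →ₗ[ℤ] ℝ) (hf : ∀ α ∈ Ψ.roots, f α ≠ 0)
    (hstable : ∀ (γ : Γ) (α : X), α ∈ Ψ.roots → 0 < f α → 0 < f (A.ρ γ α)) :
    ∀ α : X, α ∈ Ψ.roots → 0 < f α →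
      ((¬ ∃ b ∈ A.istar '' {x : X | x ∈ Ψ.roots ∧ 0 < f x},
          ∃ c ∈ A.istar '' {x : X | x ∈ Ψ.roots ∧ 0 < f x},
            A.istar α = b + c) ↔
        (¬ ∃ β ∈ {x : X | x ∈ Ψ.roots ∧ 0 < f x},
          ∃ δ ∈ {x : X | x ∈ Ψ.roots ∧ 0 < f x}, α = β + δ)) := by
  intro α hα hfα
  constructor
  · -- easy direction
    intro hQ
    rintro ⟨β, hβ, δ, hδ, heq⟩
    refine hQ ⟨A.istar β, Set.mem_image_of_mem _ hβ, A.istar δ, Set.mem_image_of_mem _ hδ, ?_⟩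
    rw [heq]
    show Submodule.Quotient.mk _ = _
    rw [TensorProduct.tmul_add, Submodule.Quotient.mk_add]
    rfl
  · -- hard direction
    intro hsimpl
    rintro ⟨b, ⟨β, hβ, rfl⟩, cc, ⟨δ, hδ, rfl⟩, hco⟩
    classical
    haveI := Fintype.ofFinite Γ
    haveI := Ψ.free_X
    haveI : Nonempty Γ := ⟨1⟩
    -- membership in the coinvariant kernel
    have hker : (1:ℚ) ⊗ₜ[ℤ] α - (1:ℚ) ⊗ₜ[ℤ] (β + δ) ∈ A.coinvKer := by
      have h2 : A.istar α = Submodule.Quotient.mk ((1:ℚ) ⊗ₜ[ℤ] (β + δ)) := by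
        rw [hco, TensorProduct.tmul_add, Submodule.Quotient.mk_add]
        rfl
      exact (Submodule.Quotient.eq _).mp h2
    -- orbit sums are equal
    have hu : ∀ y : Xv, Ψ.pair (∑ γ : Γ, A.ρ γ α) y = Ψ.pair (∑ γ : Γ, A.ρ γ (β + δ)) y := by
      intro y
      set φ : X →ₗ[ℤ] ℚ :=
        ∑ γ : Γ, (Int.castAddHom ℚ).toIntLinearMap ∘ₗ (Ψ.pair.flip y) ∘ₗ (A.ρ γ).toLinearMap
        with hφ
      have hφ_apply : ∀ x : X, φ x = ∑ γ : Γ, ((Ψ.pair (A.ρ γ x) y : ℤ) : ℚ) := by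
        intro x
        rw [hφ, LinearMap.sum_apply]
        rfl
      have hφ_inv : ∀ (γ₀ : Γ) (x : X), φ (A.ρ γ₀ x) = φ x := by
        intro γ₀ x
        rw [hφ_apply, hφ_apply]
        rw [← Equiv.sum_comp (Equiv.mulRight γ₀)
          (fun γ => ((Ψ.pair (A.ρ γ x) y : ℤ) : ℚ))]
        refine Finset.sum_congr rfl fun γ _ => ?_
        have hmul : A.ρ γ (A.ρ γ₀ x) = A.ρ (γ * γ₀) x := by
          rw [map_mul]; rfl
        rw [hmul]
        rfl
      have hker2 : liftFn φ ((1:ℚ) ⊗ₜ[ℤ] α - (1:ℚ) ⊗ₜ[ℤ] (β + δ)) = 0 := by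
        have hle : A.coinvKer ≤ LinearMap.ker (liftFn φ) := by
          rw [RootDatumActionP.coinvKer, Submodule.span_le]
          rintro w ⟨γ, v, rfl⟩
          rw [SetLike.mem_coe, LinearMap.mem_ker, map_sub,
            liftFn_lTensor φ _ (fun x => hφ_inv γ x) v, sub_self]
        exact hle hker
      rw [map_sub, sub_eq_zero, liftFn_tmul, liftFn_tmul, one_smul, one_smul] at hker2
      rw [hφ_apply, hφ_apply] at hker2
      have hcast : ((∑ γ : Γ, Ψ.pair (A.ρ γ α) y : ℤ) : ℚ)
          = ((∑ γ : Γ, Ψ.pair (A.ρ γ (β + δ)) y : ℤ) : ℚ) := by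
        push_cast
        exact hker2
      have hz : (∑ γ : Γ, Ψ.pair (A.ρ γ α) y) = ∑ γ : Γ, Ψ.pair (A.ρ γ (β + δ)) y := by
        exact_mod_cast hcast
      simp only [map_sum, LinearMap.sum_apply]
      exact hz
    have huw : (∑ γ : Γ, A.ρ γ α) = ∑ γ : Γ, A.ρ γ (β + δ) := by
      have hpp : Ψ.pair (∑ γ : Γ, A.ρ γ α) = Ψ.pair (∑ γ : Γ, A.ρ γ (β + δ)) :=
        LinearMap.ext fun y => hu y
      exact Ψ.perfect_left.injective hpp
    -- decompose β and δ into simple roots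
    obtain ⟨hβr, hβf⟩ := hβ
    obtain ⟨hδr, hδf⟩ := hδ
    obtain ⟨mβ, hmβne, hmβs, hmβsum⟩ := Ψ.decomp f hf β hβr hβf
    obtain ⟨mδ, hmδne, hmδs, hmδsum⟩ := Ψ.decomp f hf δ hδr hδf
    set M₁ : Multiset X := Finset.univ.val.map (fun γ : Γ => A.ρ γ α) with hM₁
    set M₂ : Multiset X := ∑ γ : Γ, (mβ + mδ).map (A.ρ γ) with hM₂
    have hM₁sum : M₁.sum = ∑ γ : Γ, A.ρ γ α := rfl
    have hM₂sum : M₂.sum = ∑ γ : Γ, A.ρ γ (β + δ) := by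
      rw [hM₂]
      have h := map_sum (Multiset.sumAddMonoidHom (M := X))
        (fun γ : Γ => (mβ + mδ).map (A.ρ γ)) Finset.univ
      simp only [Multiset.coe_sumAddMonoidHom] at h
      rw [h]
      refine Finset.sum_congr rfl fun γ _ => ?_
      rw [← map_multiset_sum, Multiset.sum_add, hmβsum, hmδsum]
    have hM₁simp : ∀ s ∈ M₁, Ψ.IsSimp f s := by
      intro s hs
      rw [hM₁, Multiset.mem_map] at hs
      obtain ⟨γ, _, rfl⟩ := hs
      exact A.simp_stable f hstable γ ⟨hα, hfα, hsimpl⟩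
    have hM₂simp : ∀ s ∈ M₂, Ψ.IsSimp f s := by
      intro s hs
      rw [hM₂, Multiset.mem_sum] at hs
      obtain ⟨γ, _, hs⟩ := hs
      rw [Multiset.mem_map] at hs
      obtain ⟨t, ht, rfl⟩ := hs
      rcases Multiset.mem_add.mp ht with h | h
      exacts [A.simp_stable f hstable γ (hmβs t h), A.simp_stable f hstable γ (hmδs t h)]
    have hM₁M₂ : M₁ = M₂ :=
      Ψ.multiset_eq f hf M₁ M₂ hM₁simp hM₂simp (by rw [hM₁sum, hM₂sum, huw])
    have hc₁ : Multiset.card M₁ = Fintype.card Γ := by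
      rw [hM₁, Multiset.card_map]
      rfl
    have hc₂ : Multiset.card M₂
        = Fintype.card Γ * (Multiset.card mβ + Multiset.card mδ) := by
      rw [hM₂]
      have h := map_sum
        (⟨⟨Multiset.card, Multiset.card_zero⟩, Multiset.card_add⟩ :
          Multiset X →+ ℕ)
        (fun γ : Γ => (mβ + mδ).map (A.ρ γ)) Finset.univ
      simp only [AddMonoidHom.coe_mk, ZeroHom.coe_mk] at h
      rw [h]
      simp [Multiset.card_map, Multiset.card_add, Finset.sum_const, mul_comm]
    have hkβ : 1 ≤ Multiset.card mβ := by
      rw [Nat.one_le_iff_ne_zero]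
      exact fun h => hmβne (Multiset.card_eq_zero.mp h)
    have hkδ : 1 ≤ Multiset.card mδ := by
      rw [Nat.one_le_iff_ne_zero]
      exact fun h => hmδne (Multiset.card_eq_zero.mp h)
    have hN : 0 < Fintype.card Γ := Fintype.card_pos
    have hle : Fintype.card Γ * 2 ≤ Fintype.card Γ * (Multiset.card mβ + Multiset.card mδ) :=
      Nat.mul_le_mul_left _ (by omega)
    rw [← hc₂, ← hM₁M₂, hc₁] at hle
    omega
end
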